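/- arXiv:2201.09231 — 14 statements merged into one kernel-verified Lean document; each statement's English description precedes it below -/
import Mathlib

section
/- For every natural number n, (1/(n+1)) * ∑_{k=0}^{⌊n/2⌋} C(n+k, k) * C(3n+1, n-2k) = 2^n * C_n, where C_n = (1/(n+1)) * C(2n, n) is the n-th Catalan number. Equivalently, ∑_{k=0}^{⌊n/2⌋} C(n+k, k) * C(3n+1, n-2k) = 2^n * C(2n, n). -/
open PowerSeries Finset

namespace SumChooseAux

/-- The "even spread" map on power series: `f(X) ↦ f(X²)`. -/
noncomputable def Ef (f : PowerSeries ℤ) : PowerSeries ℤ :=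
  PowerSeries.mk fun i => if Even i then PowerSeries.coeff (R := ℤ) (i / 2) f else 0

theorem coeff_Ef (f : PowerSeries ℤ) (i : ℕ) :
    PowerSeries.coeff (R := ℤ) i (Ef f) = if Even i then PowerSeries.coeff (R := ℤ) (i / 2) f else 0 :=
  coeff_mk _ _

theorem Ef_one : Ef 1 = 1 := by
  ext i
  rw [coeff_Ef, coeff_one]
  simp only [coeff_one, Nat.even_iff]
  split_ifs <;> omega

theorem oneDimEven (h : ℕ → ℤ) (N : ℕ) :
    (∑ j ∈ Finset.range N, if Even j then h (j / 2) else 0) =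
    ∑ k ∈ Finset.range ((N + 1) / 2), h k := by
  induction N with
  | zero => simp
  | succ N ih =>
    rw [Finset.sum_range_succ, ih]
    rcases Nat.even_or_odd N with he | ho
    · rw [if_pos he]
      rw [Nat.even_iff] at he
      have h1 : (N + 1 + 1) / 2 = (N + 1) / 2 + 1 := by omega
      have h2 : (N + 1) / 2 = N / 2 := by omega
      rw [h1, Finset.sum_range_succ, h2]
    · rw [if_neg (Nat.not_even_iff_odd.2 ho), add_zero]
      rw [Nat.odd_iff] at ho
      have h1 : (N + 1 + 1) / 2 = (N + 1) / 2 := by omega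
      rw [h1]

theorem Ef_mul (f g : PowerSeries ℤ) : Ef (f * g) = Ef f * Ef g := by
  ext m
  rw [coeff_Ef, PowerSeries.coeff_mul]
  rcases Nat.even_or_odd m with hm | hm
  · obtain ⟨m', rfl⟩ := hm
    rw [if_pos ⟨m', rfl⟩]
    have h2 : m' + m' = 2 * m' := by ring
    rw [h2]
    have hdiv : 2 * m' / 2 = m' := by omega
    rw [hdiv, PowerSeries.coeff_mul,
      Finset.Nat.sum_antidiagonal_eq_sum_range_succ_mk,
      Finset.Nat.sum_antidiagonal_eq_sum_range_succ_mk]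
    have key : ∀ i ∈ Finset.range (2 * m' + 1),
        PowerSeries.coeff (R := ℤ) i (Ef f) * PowerSeries.coeff (R := ℤ) (2 * m' - i) (Ef g) =
        if Even i then PowerSeries.coeff (R := ℤ) (i / 2) f *
            PowerSeries.coeff (R := ℤ) (m' - i / 2) g else 0 := by
      intro i hi
      rw [Finset.mem_range] at hi
      rw [coeff_Ef, coeff_Ef]
      rcases Nat.even_or_odd i with he | ho
      · have he2 : Even (2 * m' - i) := by
          rw [Nat.even_iff] at he ⊢
          omega
        rw [if_pos he, if_pos he, if_pos he2]
        have : (2 * m' - i) / 2 = m' - i / 2 := by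
          rw [Nat.even_iff] at he
          omega
        rw [this]
      · rw [if_neg (Nat.not_even_iff_odd.2 ho), if_neg (Nat.not_even_iff_odd.2 ho), zero_mul]
    rw [Finset.sum_congr rfl key,
      oneDimEven (fun k => PowerSeries.coeff (R := ℤ) k f * PowerSeries.coeff (R := ℤ) (m' - k) g)]
    have : (2 * m' + 1 + 1) / 2 = m' + 1 := by omega
    rw [this]
  · rw [if_neg (Nat.not_even_iff_odd.2 hm), PowerSeries.coeff_mul]
    symm
    apply Finset.sum_eq_zero
    intro p hp
    rw [Finset.HasAntidiagonal.mem_antidiagonal] at hp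
    rcases Nat.even_or_odd p.1 with he | ho
    · have : Odd p.2 := by
        rw [Nat.even_iff] at he
        rw [Nat.odd_iff] at hm ⊢
        omega
      rw [coeff_Ef, coeff_Ef, if_neg (Nat.not_even_iff_odd.2 this), mul_zero]
    · rw [coeff_Ef, if_neg (Nat.not_even_iff_odd.2 ho), zero_mul]

theorem Ef_pow (f : PowerSeries ℤ) (m : ℕ) : Ef (f ^ m) = Ef f ^ m := by
  induction m with
  | zero => simpa using Ef_one
  | succ m ih => rw [pow_succ, pow_succ, Ef_mul, ih]

theorem Ef_one_sub_X : Ef (1 - X) = 1 - X ^ 2 := by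
  ext i
  rw [coeff_Ef, map_sub, map_sub, coeff_one, coeff_one, PowerSeries.coeff_X,
    PowerSeries.coeff_X_pow]
  simp only [Nat.even_iff]
  split_ifs <;> omega

theorem coeff_one_add_X_pow (m k : ℕ) :
    PowerSeries.coeff (R := ℤ) k ((1 + X) ^ m) = (m.choose k : ℤ) := by
  have h : ((1 + X : PowerSeries ℤ)) = ((1 + Polynomial.X : Polynomial ℤ) : PowerSeries ℤ) := by
    push_cast
    rfl
  rw [h, ← Polynomial.coe_pow, Polynomial.coeff_coe, Polynomial.coeff_one_add_X_pow]

end SumChooseAux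

/-- For every natural number `n`,
`∑_{k=0}^{⌊n/2⌋} C(n+k, k) * C(3n+1, n-2k) = 2^n * C(2n, n)`. -/
theorem sum_choose_eq_two_pow_mul_centralBinom (n : ℕ) :
    ∑ k ∈ Finset.range (n / 2 + 1),
      (n + k).choose k * (3 * n + 1).choose (n - 2 * k) =
      2 ^ n * (2 * n).choose n := by
  classical
  set Vn : PowerSeries ℤ := PowerSeries.mk fun i => (Nat.choose (n + i) n : ℤ) with hVdef
  have hV : Vn * (1 - X) ^ (n + 1) = 1 := by
    have h1 := (PowerSeries.invOneSubPow ℤ (n + 1)).val_inv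
    rwa [PowerSeries.invOneSubPow_val_succ_eq_mk_add_choose,
      PowerSeries.invOneSubPow_inv_eq_one_sub_pow] at h1
  set Un : PowerSeries ℤ := SumChooseAux.Ef Vn with hUdef
  have hU : Un * (1 - X ^ 2) ^ (n + 1) = 1 := by
    have h2 := congrArg SumChooseAux.Ef hV
    rwa [SumChooseAux.Ef_mul, SumChooseAux.Ef_pow, SumChooseAux.Ef_one_sub_X,
      SumChooseAux.Ef_one] at h2
  have hkey : (1 + X) ^ (n + 1) * Un = Vn := by
    have ha : ((1 + X) ^ (n + 1) * Un) * (1 - X) ^ (n + 1) = 1 := by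
      have hc : ((1 : PowerSeries ℤ) - X) * (1 + X) = 1 - X ^ 2 := by ring
      calc ((1 + X) ^ (n + 1) * Un) * (1 - X) ^ (n + 1)
          = Un * (((1 - X) * (1 + X)) ^ (n + 1)) := by rw [mul_pow]; ring
        _ = Un * (1 - X ^ 2) ^ (n + 1) := by rw [hc]
        _ = 1 := hU
    calc (1 + X) ^ (n + 1) * Un
        = ((1 + X) ^ (n + 1) * Un) * (Vn * (1 - X) ^ (n + 1)) := by rw [hV, mul_one]
      _ = Vn * (((1 + X) ^ (n + 1) * Un) * (1 - X) ^ (n + 1)) := by ring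
      _ = Vn := by rw [ha, mul_one]
  have hmain : (1 + X) ^ (3 * n + 1) * Un = (1 + X) ^ (2 * n) * Vn := by
    have h3 : 3 * n + 1 = 2 * n + (n + 1) := by ring
    rw [h3, pow_add, mul_assoc, hkey]
  have hcoeff := congrArg (PowerSeries.coeff (R := ℤ) n) hmain
  rw [mul_comm ((1 + X : PowerSeries ℤ) ^ (3 * n + 1)) Un,
    mul_comm ((1 + X : PowerSeries ℤ) ^ (2 * n)) Vn,
    PowerSeries.coeff_mul, PowerSeries.coeff_mul,
    Finset.Nat.sum_antidiagonal_eq_sum_range_succ_mk,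
    Finset.Nat.sum_antidiagonal_eq_sum_range_succ_mk] at hcoeff
  -- rewrite the left side of hcoeff
  have hL : ∀ j ∈ Finset.range (n + 1),
      PowerSeries.coeff (R := ℤ) j Un * PowerSeries.coeff (R := ℤ) (n - j) ((1 + X) ^ (3 * n + 1)) =
      if Even j then (Nat.choose (n + j / 2) n : ℤ) *
        (Nat.choose (3 * n + 1) (n - 2 * (j / 2)) : ℤ) else 0 := by
    intro j hj
    rw [Finset.mem_range] at hj
    rw [hUdef, SumChooseAux.coeff_Ef, hVdef, coeff_mk, SumChooseAux.coeff_one_add_X_pow]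
    rcases Nat.even_or_odd j with he | ho
    · rw [if_pos he, if_pos he]
      have : n - j = n - 2 * (j / 2) := by
        rw [Nat.even_iff] at he
        omega
      rw [this]
    · rw [if_neg (Nat.not_even_iff_odd.2 ho), if_neg (Nat.not_even_iff_odd.2 ho), zero_mul]
  rw [Finset.sum_congr rfl hL,
    SumChooseAux.oneDimEven
      (fun k => (Nat.choose (n + k) n : ℤ) * (Nat.choose (3 * n + 1) (n - 2 * k) : ℤ))
      (n + 1)] at hcoeff
  have hrange : (n + 1 + 1) / 2 = n / 2 + 1 := by omega
  rw [hrange] at hcoeff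
  -- rewrite the right side of hcoeff
  have hR : ∀ j ∈ Finset.range (n + 1),
      PowerSeries.coeff (R := ℤ) j Vn * PowerSeries.coeff (R := ℤ) (n - j) ((1 + X) ^ (2 * n)) =
      ((Nat.choose (2 * n) n * Nat.choose n j : ℕ) : ℤ) := by
    intro j hj
    rw [Finset.mem_range] at hj
    have hj' : j ≤ n := by omega
    rw [hVdef, coeff_mk, SumChooseAux.coeff_one_add_X_pow]
    have h1 : Nat.choose (2 * n) (n - j) = Nat.choose (2 * n) (n + j) := by
      rw [← Nat.choose_symm (show n + j ≤ 2 * n by omega)]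
      congr 1
      omega
    have h2 := Nat.choose_mul (n := 2 * n) (show n ≤ n + j by omega)
    have e1 : 2 * n - n = n := by omega
    have e2 : n + j - n = j := by omega
    rw [e1, e2] at h2
    rw [h1, ← Nat.cast_mul, Nat.cast_inj, mul_comm]
    exact h2
  rw [Finset.sum_congr rfl hR, ← Nat.cast_sum, ← Finset.mul_sum,
    Nat.sum_range_choose] at hcoeff
  -- conclude
  have hsymm : ∀ k, (n + k).choose k = (n + k).choose n := fun k => Nat.choose_symm_add.symm
  simp only [hsymm]
  rw [mul_comm (2 ^ n)]
  exact_mod_cast hcoeff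
end

section
/- For all natural numbers n and m, ∑_{i=0}^{2n} (-1)^i * C(2n, i) * H_{n+m+i, m+i} = C_n, where H_{n,i} = ∑_{k=⌈(n-i)/2⌉}^{n-i} C(2k+i, 2k) * C(k, n-i-k) * C_k counts G-Motzkin paths of length n with i horizontal steps, and C_k is the k-th Catalan number. -/
/-- `H n i` is the number of G-Motzkin paths of length `n` with `i` horizontal
steps, given by the closed form
`H_{n,i} = ∑_{k=⌈(n-i)/2⌉}^{n-i} C(2k+i, 2k) * C(k, n-i-k) * C_k`. -/
def gMotzkinH (n i : ℕ) : ℕ :=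
  ∑ k ∈ Finset.Icc ((n - i + 1) / 2) (n - i),
    (2 * k + i).choose (2 * k) * k.choose (n - i - k) * catalan k

/-- Orthogonality: `∑_{i=0}^{N} (-1)^i C(N,i) C(i,l) = (-1)^N δ_{l,N}`. -/
lemma alt_choose_choose (N l : ℕ) :
    ∑ i ∈ Finset.range (N + 1), (-1 : ℤ) ^ i * (N.choose i) * (i.choose l) =
      if l = N then (-1) ^ N else 0 := by
  rcases le_or_gt l N with hl | hl
  · have h1 : ∀ i ∈ Finset.range l, (-1 : ℤ) ^ i * (N.choose i) * (i.choose l) = 0 := by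
      intro i hi
      simp [Nat.choose_eq_zero_of_lt (Finset.mem_range.mp hi)]
    rw [← Finset.sum_range_add_sum_Ico _ (by omega : l ≤ N + 1),
      Finset.sum_eq_zero h1, zero_add]
    have h2 : ∑ i ∈ Finset.Ico l (N + 1), (-1 : ℤ) ^ i * (N.choose i) * (i.choose l)
        = ∑ j ∈ Finset.range (N - l + 1), (-1 : ℤ) ^ (j + l) * (N.choose (j + l)) * ((j + l).choose l) := by
      rw [Finset.sum_Ico_eq_sum_range]
      apply Finset.sum_congr (by congr 1; omega)
      intro j _
      rw [Nat.add_comm l j]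
    rw [h2]
    have h3 : ∀ j ∈ Finset.range (N - l + 1),
        (-1 : ℤ) ^ (j + l) * (N.choose (j + l)) * ((j + l).choose l)
          = ((-1 : ℤ) ^ l * (N.choose l)) * ((-1 : ℤ) ^ j * ((N - l).choose j)) := by
      intro j hj
      have hjl : j + l ≤ N := by have := Finset.mem_range.mp hj; omega
      have hc := Nat.choose_mul (n := N) (k := j + l) (s := l) (Nat.le_add_left l j)
      rw [Nat.add_sub_cancel] at hc
      have hc' : ((N.choose (j + l)) : ℤ) * ((j + l).choose l) = (N.choose l) * ((N - l).choose j) := by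
        exact_mod_cast congrArg Nat.cast hc
      rw [pow_add]
      calc (-1:ℤ) ^ j * (-1) ^ l * ↑(N.choose (j + l)) * ↑((j + l).choose l)
          = (-1:ℤ) ^ j * (-1) ^ l * (↑(N.choose (j + l)) * ↑((j + l).choose l)) := by ring
        _ = (-1:ℤ) ^ j * (-1) ^ l * (↑(N.choose l) * ↑((N - l).choose j)) := by rw [hc']
        _ = (-1:ℤ) ^ l * ↑(N.choose l) * ((-1) ^ j * ↑((N - l).choose j)) := by ring
    rw [Finset.sum_congr rfl h3, ← Finset.mul_sum, Int.alternating_sum_range_choose]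
    rcases eq_or_lt_of_le hl with h | h
    · simp [h, Nat.sub_self]
    · have h0 : N - l ≠ 0 := by omega
      rw [if_neg h0, if_neg (by omega : ¬ l = N), mul_zero]
  · have : ∀ i ∈ Finset.range (N + 1), (-1 : ℤ) ^ i * (N.choose i) * (i.choose l) = 0 := by
      intro i hi
      have : i < l := by have := Finset.mem_range.mp hi; omega
      simp [Nat.choose_eq_zero_of_lt this]
    rw [Finset.sum_eq_zero this, if_neg (by omega)]

/-- `∑_{i=0}^{N} (-1)^i C(N,i) C(x+i,r) = (-1)^N δ_{r,N}` for `r ≤ N`. -/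
lemma alt_choose_shift (N x r : ℕ) (hr : r ≤ N) :
    ∑ i ∈ Finset.range (N + 1), (-1 : ℤ) ^ i * (N.choose i) * ((x + i).choose r) =
      if r = N then (-1) ^ N else 0 := by
  have h1 : ∀ i ∈ Finset.range (N + 1),
      (-1 : ℤ) ^ i * (N.choose i) * ((x + i).choose r) =
        ∑ p ∈ Finset.HasAntidiagonal.antidiagonal r,
          (x.choose p.1 : ℤ) * ((-1 : ℤ) ^ i * (N.choose i) * (i.choose p.2)) := by
    intro i _
    rw [Nat.add_choose_eq x i r]
    push_cast
    rw [Finset.mul_sum]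
    apply Finset.sum_congr rfl
    intro p _
    ring
  rw [Finset.sum_congr rfl h1, Finset.sum_comm]
  have h2 : ∀ p ∈ Finset.HasAntidiagonal.antidiagonal r,
      ∑ i ∈ Finset.range (N + 1),
          (x.choose p.1 : ℤ) * ((-1 : ℤ) ^ i * (N.choose i) * (i.choose p.2)) =
        (x.choose p.1 : ℤ) * (if p.2 = N then (-1 : ℤ) ^ N else 0) := by
    intro p _
    rw [← Finset.mul_sum, alt_choose_choose]
  rw [Finset.sum_congr rfl h2]
  rcases eq_or_lt_of_le hr with h | h
  · rw [if_pos h]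
    subst h
    rw [Finset.sum_eq_single_of_mem ((0, r) : ℕ × ℕ)
      (by simp [Finset.HasAntidiagonal.mem_antidiagonal])]
    · simp
    · intro p hp hne
      rw [Finset.HasAntidiagonal.mem_antidiagonal] at hp
      have : p.2 ≠ r := by
        intro hc
        apply hne
        have : p.1 = 0 := by omega
        exact Prod.ext this hc
      rw [if_neg this, mul_zero]
  · rw [if_neg (by omega)]
    apply Finset.sum_eq_zero
    intro p hp
    rw [Finset.HasAntidiagonal.mem_antidiagonal] at hp
    rw [if_neg (by omega), mul_zero]

/-- For all `n m`, `∑_{i=0}^{2n} (-1)^i * C(2n, i) * H_{n+m+i, m+i} = C_n`. -/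
theorem alternating_sum_gMotzkinH (n m : ℕ) :
    ∑ i ∈ Finset.range (2 * n + 1),
      (-1 : ℤ) ^ i * (2 * n).choose i * gMotzkinH (n + m + i) (m + i) =
      catalan n := by
  have hH : ∀ i : ℕ, (gMotzkinH (n + m + i) (m + i) : ℤ) =
      ∑ k ∈ Finset.Icc ((n + 1) / 2) n,
        (((2 * k + m) + i).choose (2 * k) : ℤ) * (k.choose (n - k)) * catalan k := by
    intro i
    unfold gMotzkinH
    have h1 : n + m + i - (m + i) = n := by omega
    rw [h1]
    push_cast
    apply Finset.sum_congr rfl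
    intro k _
    have : 2 * k + (m + i) = 2 * k + m + i := by omega
    rw [this]
  have step : ∀ i ∈ Finset.range (2 * n + 1),
      (-1 : ℤ) ^ i * (2 * n).choose i * gMotzkinH (n + m + i) (m + i) =
        ∑ k ∈ Finset.Icc ((n + 1) / 2) n,
          ((k.choose (n - k) : ℤ) * catalan k) *
            ((-1 : ℤ) ^ i * (2 * n).choose i * (((2 * k + m) + i).choose (2 * k))) := by
    intro i _
    rw [hH i, Finset.mul_sum]
    apply Finset.sum_congr rfl
    intro k _
    ring
  rw [Finset.sum_congr rfl step, Finset.sum_comm]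
  have step2 : ∀ k ∈ Finset.Icc ((n + 1) / 2) n,
      ∑ i ∈ Finset.range (2 * n + 1),
          ((k.choose (n - k) : ℤ) * catalan k) *
            ((-1 : ℤ) ^ i * (2 * n).choose i * (((2 * k + m) + i).choose (2 * k))) =
        ((k.choose (n - k) : ℤ) * catalan k) * (if 2 * k = 2 * n then 1 else 0) := by
    intro k hk
    have hkn : k ≤ n := (Finset.mem_Icc.mp hk).2
    rw [← Finset.mul_sum, alt_choose_shift (2 * n) (2 * k + m) (2 * k) (by omega)]
    congr 1
    split_ifs
    · rw [pow_mul]; norm_num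
    · rfl
  rw [Finset.sum_congr rfl step2]
  rw [Finset.sum_eq_single_of_mem n (by rw [Finset.mem_Icc]; omega)]
  · simp
  · intro k hk hne
    rw [if_neg (by omega), mul_zero]
end

section
/- For every natural number n, ∑_{i=0}^{n} (-2)^i * H_{n,i} = (-1)^n, where H_{n,i} = ∑_{k=⌈(n-i)/2⌉}^{n-i} C(2k+i, 2k) * C(k, n-i-k) * C_k is the number of G-Motzkin paths of length n with i horizontal steps. -/
open PowerSeries Finset

noncomputable section

/-- inverse of 1+2X -/
def Iser : PowerSeries ℤ := PowerSeries.mk fun n => (-2) ^ n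

/-- inverse of 1+X -/
def Gser : PowerSeries ℤ := PowerSeries.mk fun n => (-1) ^ n

def zser : PowerSeries ℤ := X * (1 + X) * Iser ^ 2

def cser : PowerSeries ℤ := (1 + 2 * X) * Gser

lemma hI : (1 + 2 * X) * Iser = 1 := by
  ext n
  cases n with
  | zero => simp [Iser]
  | succ m =>
    simp only [add_mul, one_mul, mul_assoc, map_add, coeff_succ_X_mul,
      PowerSeries.coeff_one, Nat.succ_ne_zero, if_false]
    rw [show ((2 : PowerSeries ℤ) * (X * Iser)) = X * (2 * Iser) by ring,
      coeff_succ_X_mul, two_mul, map_add]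
    simp [Iser, pow_succ]
    ring

lemma hG : (1 + X) * Gser = 1 := by
  ext n
  cases n with
  | zero => simp [Gser]
  | succ m =>
    simp only [add_mul, one_mul, map_add, coeff_succ_X_mul,
      PowerSeries.coeff_one, Nat.succ_ne_zero, if_false]
    simp [Gser, pow_succ]

lemma hc : cser = 1 + zser * cser ^ 2 := by
  have h1 := hI
  have h2 := hG
  unfold cser zser
  linear_combination (1 - X * Gser) * h2 - (X * (1 + X) * Gser ^ 2 * ((1 + 2 * X) * Iser + 1)) * h1

lemma coeff_Iser_pow (r m : ℕ) :
    PowerSeries.coeff m (Iser ^ (r + 1)) = (-2) ^ m * (m + r).choose r := by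
  induction r generalizing m with
  | zero => simp [Iser]
  | succ r ih =>
    rw [pow_succ, PowerSeries.coeff_mul]
    rw [Finset.Nat.sum_antidiagonal_eq_sum_range_succ (fun p q => (PowerSeries.coeff p (Iser ^ (r+1))) * PowerSeries.coeff q Iser)]
    have : ∀ p ∈ Finset.range (m + 1),
        (PowerSeries.coeff p (Iser ^ (r+1))) * PowerSeries.coeff (m - p) Iser
        = (-2) ^ m * ((p + r).choose r) := by
      intro p hp
      have hp' := Finset.mem_range.mp hp
      rw [ih, Iser]
      simp only [coeff_mk]
      rw [mul_right_comm, ← pow_add, show p + (m - p) = m by omega]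
    rw [Finset.sum_congr rfl this, ← Finset.mul_sum]
    have := Nat.sum_range_add_choose m r
    have hcast : (∑ p ∈ Finset.range (m+1), ((p + r).choose r : ℤ)) = ((m + r + 1).choose (r+1) : ℤ) := by
      exact_mod_cast congrArg (Nat.cast : ℕ → ℤ) this
    rw [hcast, add_assoc]

end

noncomputable section
open PowerSeries Finset

def Pser (N : ℕ) : PowerSeries ℤ :=
  ∑ k ∈ range (N + 1), C (catalan k : ℤ) * zser ^ k

lemma hzX : zser = X * ((1 + X) * Iser ^ 2) := by rw [zser]; ring

lemma key2 (N : ℕ) : (X : PowerSeries ℤ) ^ (N + 2) ∣ (1 + zser * Pser N ^ 2 - Pser (N + 1)) := by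
  classical
  set s1 : Finset (ℕ × ℕ) := range (N + 1) ×ˢ range (N + 1) with hs1
  set s2 : Finset (ℕ × ℕ) := s1.filter (fun p => p.1 + p.2 ≤ N) with hs2
  have h1 : zser * Pser N ^ 2 =
      ∑ p ∈ s1, C (catalan p.1 : ℤ) * C (catalan p.2 : ℤ) * zser ^ (p.1 + p.2 + 1) := by
    rw [sq, Pser, Finset.sum_mul_sum]
    simp only [Finset.mul_sum]
    rw [← Finset.sum_product']
    apply Finset.sum_congr rfl
    intro p _
    ring
  have h2 : Pser (N + 1) =
      1 + ∑ p ∈ s2, C (catalan p.1 : ℤ) * C (catalan p.2 : ℤ) * zser ^ (p.1 + p.2 + 1) := by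
    rw [Pser, Finset.sum_range_succ']
    simp only [catalan_zero, Nat.cast_one, map_one, pow_zero, mul_one]
    rw [add_comm]
    congr 1
    have hb : s2 = (range (N + 1)).biUnion (fun k => Finset.HasAntidiagonal.antidiagonal k) := by
      ext p
      simp only [hs2, hs1, Finset.mem_filter, Finset.mem_product, Finset.mem_range,
        Finset.mem_biUnion, Finset.HasAntidiagonal.mem_antidiagonal]
      constructor
      · rintro ⟨⟨_, _⟩, h⟩; exact ⟨p.1 + p.2, by omega, rfl⟩
      · rintro ⟨k, hk, rfl⟩; exact ⟨⟨by omega, by omega⟩, by omega⟩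
    rw [hb, Finset.sum_biUnion]
    · apply Finset.sum_congr rfl
      intro k _
      rw [catalan_succ']
      push_cast
      rw [map_sum, Finset.sum_mul]
      apply Finset.sum_congr rfl
      intro p hp
      have hpk : p.1 + p.2 = k := Finset.HasAntidiagonal.mem_antidiagonal.mp hp
      rw [map_mul, hpk]
    · intro a _ b _ hab
      simp only [Finset.disjoint_left]
      intro p hpa hpb
      exact hab ((Finset.HasAntidiagonal.mem_antidiagonal.mp hpa).symm.trans
        (Finset.HasAntidiagonal.mem_antidiagonal.mp hpb))
  rw [h1, h2]
  have hsub : s2 ⊆ s1 := Finset.filter_subset _ _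
  rw [← Finset.sum_sdiff hsub]
  have : (1 : PowerSeries ℤ) + (∑ p ∈ s1 \ s2, C (catalan p.1 : ℤ) * C (catalan p.2 : ℤ) * zser ^ (p.1 + p.2 + 1)
      + ∑ p ∈ s2, C (catalan p.1 : ℤ) * C (catalan p.2 : ℤ) * zser ^ (p.1 + p.2 + 1))
      - (1 + ∑ p ∈ s2, C (catalan p.1 : ℤ) * C (catalan p.2 : ℤ) * zser ^ (p.1 + p.2 + 1))
      = ∑ p ∈ s1 \ s2, C (catalan p.1 : ℤ) * C (catalan p.2 : ℤ) * zser ^ (p.1 + p.2 + 1) := by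
    ring
  rw [this]
  apply Finset.dvd_sum
  intro p hp
  have hmem := Finset.mem_sdiff.mp hp
  have hge : N + 1 ≤ p.1 + p.2 := by
    by_contra h
    exact hmem.2 (Finset.mem_filter.mpr ⟨hmem.1, by omega⟩)
  apply Dvd.dvd.mul_left
  calc (X : PowerSeries ℤ) ^ (N + 2) ∣ X ^ (p.1 + p.2 + 1) := pow_dvd_pow _ (by omega)
    _ ∣ zser ^ (p.1 + p.2 + 1) := pow_dvd_pow_of_dvd ⟨_, hzX⟩ _

lemma claimA (N : ℕ) : (X : PowerSeries ℤ) ^ (N + 1) ∣ (cser - Pser N) := by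
  induction N with
  | zero =>
    have h0 : Pser 0 = 1 := by simp [Pser]
    rw [h0, pow_one]
    have : cser - 1 = X * ((1 + X) * Iser ^ 2 * cser ^ 2) := by
      have := hc
      rw [hzX] at this
      linear_combination this
    exact ⟨_, this⟩
  | succ N ih =>
    have hdecomp : cser - Pser (N + 1) =
        zser * ((cser - Pser N) * (cser + Pser N)) + (1 + zser * Pser N ^ 2 - Pser (N + 1)) := by
      linear_combination hc
    rw [hdecomp]
    apply dvd_add
    · rw [show N + 1 + 1 = 1 + (N + 1) by ring, pow_add, pow_one]
      exact mul_dvd_mul ⟨_, hzX⟩ (ih.mul_right _)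
    · exact key2 N
end

noncomputable section
open PowerSeries Finset

lemma hGI : Gser = Iser * cser := by
  have h := hI
  rw [cser]
  linear_combination (-(Gser : PowerSeries ℤ)) * h

lemma coeff_G_eq (n : ℕ) :
    PowerSeries.coeff n Gser
      = ∑ k ∈ range (n + 1), (catalan k : ℤ) * PowerSeries.coeff n (zser ^ k * Iser) := by
  have hd : (X : PowerSeries ℤ) ^ (n + 1) ∣ (Gser - Iser * Pser n) := by
    rw [hGI, ← mul_sub]
    exact (claimA n).mul_left _
  have h0 : PowerSeries.coeff n (Gser - Iser * Pser n) = 0 :=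
    PowerSeries.X_pow_dvd_iff.mp hd n (by omega)
  have h1 : PowerSeries.coeff n Gser = PowerSeries.coeff n (Iser * Pser n) := by
    have := (map_sub (PowerSeries.coeff n) Gser (Iser * Pser n))
    rw [h0] at this
    linarith [this]
  rw [h1, Pser, Finset.mul_sum, map_sum]
  apply Finset.sum_congr rfl
  intro k _
  rw [show Iser * (C (catalan k : ℤ) * zser ^ k) = C (catalan k : ℤ) * (zser ^ k * Iser) by ring,
    PowerSeries.coeff_C_mul]

lemma coeff_zI (n k : ℕ) :
    PowerSeries.coeff n (zser ^ k * Iser)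
      = ∑ j ∈ range (k + 1),
          (k.choose j : ℤ) * ((n + k - j).choose (2 * k) : ℤ) * (-2) ^ (n - k - j) := by
  have hzk : zser ^ k * Iser
      = ∑ j ∈ range (k + 1), C (k.choose j : ℤ) * (X ^ (k + j) * Iser ^ (2 * k + 1)) := by
    have : zser ^ k * Iser = (X + 1) ^ k * (X ^ k * Iser ^ (2 * k + 1)) := by
      rw [zser, mul_pow, mul_pow]; ring
    rw [this, add_pow, Finset.sum_mul]
    apply Finset.sum_congr rfl
    intro j hj
    rw [show ((k.choose j : ℕ) : PowerSeries ℤ) = C (k.choose j : ℤ) by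
      rw [map_natCast (C (R := ℤ))]]
    ring
  rw [hzk, map_sum]
  apply Finset.sum_congr rfl
  intro j hj
  have hj' := Finset.mem_range.mp hj
  rw [PowerSeries.coeff_C_mul, PowerSeries.coeff_X_pow_mul', coeff_Iser_pow (2 * k) (n - (k + j))]
  split_ifs with h
  · rw [show n - (k + j) + 2 * k = n + k - j by omega, show n - (k + j) = n - k - j by omega]
    ring
  · have hz : (n + k - j).choose (2 * k) = 0 := Nat.choose_eq_zero_of_lt (by omega)
    rw [hz]
    simp
end

section
open PowerSeries Finset

/-- For every `n`, `∑_{i=0}^{n} (-2)^i * H_{n,i} = (-1)^n`. -/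
theorem alternating_two_pow_sum_gMotzkinH (n : ℕ) :
    ∑ i ∈ Finset.range (n + 1), (-2 : ℤ) ^ i * gMotzkinH n i = (-1) ^ n := by
  classical
  have hGn : ((-1 : ℤ)) ^ n = PowerSeries.coeff n Gser := by simp [Gser]
  rw [hGn, coeff_G_eq]
  have hstep : ∑ k ∈ range (n + 1), (catalan k : ℤ) * PowerSeries.coeff n (zser ^ k * Iser)
      = ∑ k ∈ range (n + 1), (catalan k : ℤ) *
          ∑ j ∈ range (k + 1),
            (k.choose j : ℤ) * ((n + k - j).choose (2 * k) : ℤ) * (-2) ^ (n - k - j) :=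
    Finset.sum_congr rfl fun k _ => by rw [coeff_zI]
  rw [hstep]
  have hRrange : ∀ k ∈ range (n + 1),
      range (k + 1) = (range (n + 1)).filter (fun j => j ≤ k) := by
    intro k hk
    have := Finset.mem_range.mp hk
    ext j
    simp only [Finset.mem_range, Finset.mem_filter]
    omega
  have hR : ∑ k ∈ range (n + 1), (catalan k : ℤ) *
        ∑ j ∈ range (k + 1),
          (k.choose j : ℤ) * ((n + k - j).choose (2 * k) : ℤ) * (-2) ^ (n - k - j)
      = ∑ q ∈ (range (n + 1) ×ˢ range (n + 1)).filter (fun q => q.2 ≤ q.1),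
          (catalan q.1 : ℤ) * ((q.1.choose q.2 : ℤ) * ((n + q.1 - q.2).choose (2 * q.1) : ℤ)
            * (-2) ^ (n - q.1 - q.2)) := by
    calc ∑ k ∈ range (n + 1), (catalan k : ℤ) *
        ∑ j ∈ range (k + 1),
          (k.choose j : ℤ) * ((n + k - j).choose (2 * k) : ℤ) * (-2) ^ (n - k - j)
        = ∑ k ∈ range (n + 1), ∑ j ∈ range (n + 1),
            (if j ≤ k then (catalan k : ℤ) * ((k.choose j : ℤ)
              * ((n + k - j).choose (2 * k) : ℤ) * (-2) ^ (n - k - j)) else 0) := by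
          apply Finset.sum_congr rfl
          intro k hk
          rw [hRrange k hk, Finset.sum_filter, Finset.mul_sum]
          apply Finset.sum_congr rfl
          intro j _
          split_ifs with h
          · ring
          · ring
      _ = ∑ q ∈ range (n + 1) ×ˢ range (n + 1),
            (if q.2 ≤ q.1 then (catalan q.1 : ℤ) * ((q.1.choose q.2 : ℤ)
              * ((n + q.1 - q.2).choose (2 * q.1) : ℤ) * (-2) ^ (n - q.1 - q.2)) else 0) :=
          (Finset.sum_product' _ _ _).symm
      _ = _ := (Finset.sum_filter _ _).symm
  rw [hR]
  have hsub : (range (n + 1) ×ˢ range (n + 1)).filter (fun q => q.2 ≤ q.1 ∧ q.1 + q.2 ≤ n)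
      ⊆ (range (n + 1) ×ˢ range (n + 1)).filter (fun q => q.2 ≤ q.1) := by
    intro q hq
    rcases Finset.mem_filter.mp hq with ⟨h1, h2⟩
    exact Finset.mem_filter.mpr ⟨h1, h2.1⟩
  have hshrink : ∑ q ∈ (range (n + 1) ×ˢ range (n + 1)).filter
        (fun q => q.2 ≤ q.1 ∧ q.1 + q.2 ≤ n),
        (catalan q.1 : ℤ) * ((q.1.choose q.2 : ℤ) * ((n + q.1 - q.2).choose (2 * q.1) : ℤ)
          * (-2) ^ (n - q.1 - q.2))
      = ∑ q ∈ (range (n + 1) ×ˢ range (n + 1)).filter (fun q => q.2 ≤ q.1),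
          (catalan q.1 : ℤ) * ((q.1.choose q.2 : ℤ) * ((n + q.1 - q.2).choose (2 * q.1) : ℤ)
            * (-2) ^ (n - q.1 - q.2)) := by
    apply Finset.sum_subset hsub
    intro q hq hq'
    have h1 := Finset.mem_filter.mp hq
    have hle : q.2 ≤ q.1 := h1.2
    have hgt : n < q.1 + q.2 := by
      by_contra hcon
      exact hq' (Finset.mem_filter.mpr ⟨h1.1, hle, by omega⟩)
    have hz : (n + q.1 - q.2).choose (2 * q.1) = 0 := Nat.choose_eq_zero_of_lt (by omega)
    rw [hz]
    push_cast
    ring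
  rw [← hshrink]
  have hIcc : ∀ i ∈ range (n + 1), Finset.Icc ((n - i + 1) / 2) (n - i)
      = (range (n + 1)).filter (fun k => (n - i + 1) / 2 ≤ k ∧ k ≤ n - i) := by
    intro i hi
    have := Finset.mem_range.mp hi
    ext k
    simp only [Finset.mem_Icc, Finset.mem_filter, Finset.mem_range]
    omega
  have hL : ∑ i ∈ range (n + 1), (-2 : ℤ) ^ i * gMotzkinH n i
      = ∑ p ∈ (range (n + 1) ×ˢ range (n + 1)).filter
          (fun p => (n - p.1 + 1) / 2 ≤ p.2 ∧ p.2 ≤ n - p.1),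
          (-2 : ℤ) ^ p.1 * (((2 * p.2 + p.1).choose (2 * p.2) : ℤ)
            * (p.2.choose (n - p.1 - p.2) : ℤ) * (catalan p.2 : ℤ)) := by
    calc ∑ i ∈ range (n + 1), (-2 : ℤ) ^ i * gMotzkinH n i
        = ∑ i ∈ range (n + 1), ∑ k ∈ range (n + 1),
            (if (n - i + 1) / 2 ≤ k ∧ k ≤ n - i then
              (-2 : ℤ) ^ i * (((2 * k + i).choose (2 * k) : ℤ)
                * (k.choose (n - i - k) : ℤ) * (catalan k : ℤ)) else 0) := by
          apply Finset.sum_congr rfl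
          intro i hi
          rw [gMotzkinH, hIcc i hi, Finset.sum_filter]
          push_cast
          rw [Finset.mul_sum]
          apply Finset.sum_congr rfl
          intro k _
          split_ifs with h
          · ring
          · ring
      _ = ∑ p ∈ range (n + 1) ×ˢ range (n + 1),
            (if (n - p.1 + 1) / 2 ≤ p.2 ∧ p.2 ≤ n - p.1 then
              (-2 : ℤ) ^ p.1 * (((2 * p.2 + p.1).choose (2 * p.2) : ℤ)
                * (p.2.choose (n - p.1 - p.2) : ℤ) * (catalan p.2 : ℤ)) else 0) :=
          (Finset.sum_product' _ _ _).symm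
      _ = _ := (Finset.sum_filter _ _).symm
  rw [hL]
  refine Finset.sum_nbij' (fun p => (p.2, n - p.1 - p.2)) (fun q => (n - q.1 - q.2, q.1))
    ?_ ?_ ?_ ?_ ?_
  · rintro ⟨i, k⟩ hp
    simp only [Finset.mem_filter, Finset.mem_product, Finset.mem_range] at hp ⊢
    omega
  · rintro ⟨k, j⟩ hq
    simp only [Finset.mem_filter, Finset.mem_product, Finset.mem_range] at hq ⊢
    omega
  · rintro ⟨i, k⟩ hp
    simp only [Finset.mem_filter, Finset.mem_product, Finset.mem_range] at hp
    simp only [Prod.mk.injEq, and_true, true_and]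
    omega
  · rintro ⟨k, j⟩ hq
    simp only [Finset.mem_filter, Finset.mem_product, Finset.mem_range] at hq
    simp only [Prod.mk.injEq, and_true, true_and]
    omega
  · rintro ⟨i, k⟩ hp
    simp only [Finset.mem_filter, Finset.mem_product, Finset.mem_range] at hp
    have e1 : n + k - (n - i - k) = 2 * k + i := by omega
    have e2 : n - k - (n - i - k) = i := by omega
    simp only [e1, e2]
    ring
end
end

section
/- For every natural number n, ∑_{i=0}^{n} (-2)^i * D_{n,i} = 2^n, where D_{n,i} = ∑_{k=i}^{n-i} C(k, i) * C(n-i+k, 2k) * C_k is the number of G-Motzkin paths of length n with i down steps d=(1,-1), and C_k is the k-th Catalan number. -/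
/-- `D n i` is the number of G-Motzkin paths of length `n` with `i` down steps,
given by the closed form `D_{n,i} = ∑_{k=i}^{n-i} C(k, i) * C(n-i+k, 2k) * C_k`. -/
def gMotzkinD (n i : ℕ) : ℕ :=
  ∑ k ∈ Finset.Icc i (n - i),
    k.choose i * (n - i + k).choose (2 * k) * catalan k

namespace GMotzkinAux

open PowerSeries Finset

lemma coeff_one_sub_two_X_pow (k i : ℕ) :
    coeff (R := ℤ) i ((1 - 2*X)^k) = (-2)^i * (k.choose i : ℤ) := by
  have h : (1 - 2*X : ℤ⟦X⟧) = (-2)*X + 1 := by ring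
  rw [h, add_pow]
  rw [map_sum]
  have : ∀ j ∈ range (k+1), coeff (R := ℤ) i (((-2)*X)^j * 1^(k-j) * (k.choose j : ℤ⟦X⟧))
      = (if i = j then ((-2:ℤ)^i * (k.choose i : ℤ)) else 0) := by
    intro j hj
    have hC : (PowerSeries.C (R := ℤ)) (-2) = -2 := by simp
    rw [one_pow, mul_one, mul_pow, ← hC, ← map_pow, ← map_natCast (PowerSeries.C (R := ℤ)) (k.choose j)]
    rw [mul_right_comm, ← map_mul, coeff_C_mul, coeff_X_pow]
    split_ifs with h1
    · subst h1; ring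
    · ring
  rw [Finset.sum_congr rfl this, Finset.sum_ite_eq (range (k+1)) i]
  split_ifs with h2
  · rfl
  · have : k < i := by
      by_contra hc
      exact h2 (Finset.mem_range.mpr (by omega))
    rw [Nat.choose_eq_zero_of_lt this]
    ring

lemma coeff_X_pow_mul_of_lt (g : ℤ⟦X⟧) (k m : ℕ) (h : m < k) :
    coeff (R := ℤ) m (X^k * g) = 0 := by
  rw [coeff_mul]
  apply Finset.sum_eq_zero
  intro p hp
  rw [Finset.HasAntidiagonal.mem_antidiagonal] at hp
  rw [coeff_X_pow]
  have : p.1 ≠ k := by omega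
  simp [this]

/-- The power series `z = X(1-2X)/(1-X)²`. -/
noncomputable def zS : ℤ⟦X⟧ := X * ((1 - 2*X) * (PowerSeries.mk 1)^2)

lemma coeff_zk_m1 (n k : ℕ) (hk : k ≤ n) :
    coeff (R := ℤ) n (zS^k * PowerSeries.mk 1) =
      ∑ i ∈ range (n+1), (-2:ℤ)^i * (k.choose i) * ((n - i + k).choose (2*k) : ℤ) := by
  have e1 : zS^k * PowerSeries.mk 1
      = X^k * ((1 - 2*X)^k * (PowerSeries.mk 1)^(2*k+1)) := by
    rw [zS, mul_pow, mul_pow, pow_add, pow_mul, pow_one]; ring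
  have e2 : (PowerSeries.mk 1 : ℤ⟦X⟧)^(2*k+1) = PowerSeries.mk fun j => ((2*k + j).choose (2*k) : ℤ) :=
    mk_one_pow_eq_mk_choose_add ℤ (2*k)
  have hn : n = (n - k) + k := by omega
  rw [e1, e2, hn, coeff_X_pow_mul, coeff_mul,
    Finset.Nat.sum_antidiagonal_eq_sum_range_succ_mk]
  rw [← hn]
  have e3 : ∀ i ∈ range ((n-k).succ),
      coeff (R := ℤ) (i, n - k - i).1 ((1 - 2*X)^k) *
        coeff (R := ℤ) (i, n - k - i).2 (PowerSeries.mk fun j => ((2*k + j).choose (2*k) : ℤ))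
      = (-2:ℤ)^i * (k.choose i) * ((n - i + k).choose (2*k) : ℤ) := by
    intro i hi
    rw [Finset.mem_range] at hi
    rw [coeff_one_sub_two_X_pow, coeff_mk]
    have : 2*k + (n - k - i) = n - i + k := by omega
    rw [this]
  rw [Finset.sum_congr rfl e3]
  apply Finset.sum_subset
  · intro i hi; rw [Finset.mem_range] at *; omega
  · intro i hi hni
    rw [Finset.mem_range] at hi hni
    have h1 : n - i + k < 2*k := by omega
    rw [Nat.choose_eq_zero_of_lt h1]
    push_cast; ring

/-- The sequence of alternating sums. -/
def aSeq (n : ℕ) : ℤ := ∑ i ∈ range (n+1), (-2:ℤ)^i * gMotzkinD n i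

/-- Truncated version of `C(z)/(1-X)` where `C` is the Catalan generating function. -/
noncomputable def FS (N : ℕ) : ℤ⟦X⟧ :=
  ∑ k ∈ range (N+1), C (R := ℤ) (catalan k : ℤ) * (zS^k * PowerSeries.mk 1)

lemma coeff_FS_stable (m N : ℕ) (h : m ≤ N) : coeff (R := ℤ) m (FS N) = coeff (R := ℤ) m (FS m) := by
  rw [FS, FS, map_sum, map_sum]
  symm
  apply Finset.sum_subset
  · intro k hk; rw [Finset.mem_range] at *; omega
  · intro k hk hnk
    rw [Finset.mem_range] at hk hnk
    have hmk : m < k := by omega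
    have : zS^k * PowerSeries.mk 1 = X^k * (((1 - 2*X) * (PowerSeries.mk 1)^2)^k * PowerSeries.mk 1) := by
      rw [zS, mul_pow, mul_assoc]
    rw [coeff_C_mul, this, coeff_X_pow_mul_of_lt _ _ _ hmk, mul_zero]

lemma aSeq_eq_coeff_FS (m : ℕ) : aSeq m = coeff (R := ℤ) m (FS m) := by
  have hD : ∀ i ∈ range (m+1), ((gMotzkinD m i : ℤ)) =
      ∑ k ∈ range (m+1), ((k.choose i : ℤ) * ((m - i + k).choose (2*k) : ℤ) * (catalan k : ℤ)) := by
    intro i hi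
    rw [Finset.mem_range] at hi
    rw [gMotzkinD]
    push_cast
    apply Finset.sum_subset
    · intro k hk; rw [Finset.mem_Icc] at hk; rw [Finset.mem_range]; omega
    · intro k hk hnk
      rw [Finset.mem_range] at hk
      rw [Finset.mem_Icc] at hnk
      push_neg at hnk
      rcases Nat.lt_or_ge k i with h1 | h1
      · rw [Nat.choose_eq_zero_of_lt h1]; push_cast; ring
      · have h2 : m - i < k := hnk h1
        rw [Nat.choose_eq_zero_of_lt (show m - i + k < 2*k by omega)]
        push_cast; ring
  rw [FS, map_sum, aSeq]
  have hR : ∀ k ∈ range (m+1),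
      coeff (R := ℤ) m (C (R := ℤ) (catalan k : ℤ) * (zS^k * PowerSeries.mk 1)) =
      ∑ i ∈ range (m+1), (catalan k : ℤ) * ((-2:ℤ)^i * (k.choose i) * ((m - i + k).choose (2*k) : ℤ)) := by
    intro k hk
    rw [Finset.mem_range] at hk
    rw [coeff_C_mul, coeff_zk_m1 m k (by omega), Finset.mul_sum]
  rw [Finset.sum_congr rfl hR, Finset.sum_comm]
  apply Finset.sum_congr rfl
  intro i hi
  rw [hD i hi, Finset.mul_sum]
  exact Finset.sum_congr rfl fun k _ => by ring

/-- The generating function of the alternating sums. -/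
noncomputable def AS : ℤ⟦X⟧ := PowerSeries.mk aSeq

lemma coeff_AS_FS (n : ℕ) : ∀ m ≤ n, coeff (R := ℤ) m AS = coeff (R := ℤ) m (FS n) := by
  intro m hm
  rw [AS, coeff_mk, aSeq_eq_coeff_FS, coeff_FS_stable m n hm]

lemma coeff_mul_congr (B B' P : ℤ⟦X⟧) (n : ℕ) (h : ∀ m ≤ n, coeff (R := ℤ) m B = coeff (R := ℤ) m B') :
    ∀ m ≤ n, coeff (R := ℤ) m (P * B) = coeff (R := ℤ) m (P * B') := by
  intro m hm
  rw [coeff_mul, coeff_mul]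
  apply Finset.sum_congr rfl
  intro p hp
  rw [Finset.HasAntidiagonal.mem_antidiagonal] at hp
  rw [h p.2 (by omega)]

lemma coeff_mul_sq_congr (B B' P : ℤ⟦X⟧) (n : ℕ) (h : ∀ m ≤ n, coeff (R := ℤ) m B = coeff (R := ℤ) m B') :
    ∀ m ≤ n, coeff (R := ℤ) m (P * (B * B)) = coeff (R := ℤ) m (P * (B' * B')) := by
  have h2 : ∀ m ≤ n, coeff (R := ℤ) m (B * B) = coeff (R := ℤ) m (B' * B') := by
    intro m hm
    rw [coeff_mul, coeff_mul]
    apply Finset.sum_congr rfl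
    intro p hp
    rw [Finset.HasAntidiagonal.mem_antidiagonal] at hp
    rw [h p.1 (by omega), h p.2 (by omega)]
  exact coeff_mul_congr _ _ P n h2

lemma one_sub_X_mul_mk_one : ((1 : ℤ⟦X⟧) - X) * PowerSeries.mk 1 = 1 := by
  rw [mul_comm]; exact mk_one_mul_one_sub_eq_one ℤ

lemma FS_one_sub (N : ℕ) :
    (1 - X) * FS N = ∑ k ∈ range (N+1), C (R := ℤ) (catalan k : ℤ) * zS^k := by
  rw [FS, Finset.mul_sum]
  apply Finset.sum_congr rfl
  intro k _
  rw [show (1 - X) * (C (R := ℤ) (catalan k : ℤ) * (zS^k * PowerSeries.mk 1))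
    = C (R := ℤ) (catalan k : ℤ) * zS^k * ((1 - X) * PowerSeries.mk 1) from by ring,
    one_sub_X_mul_mk_one, mul_one]

lemma FS_sq (N : ℕ) :
    X * (1 - 2*X) * (FS N * FS N)
      = ∑ k ∈ range (N+1), ∑ l ∈ range (N+1),
          C (R := ℤ) (catalan k : ℤ) * C (R := ℤ) (catalan l : ℤ) * zS^(k+l+1) := by
  rw [FS, Finset.sum_mul_sum, Finset.mul_sum]
  apply Finset.sum_congr rfl
  intro k _
  rw [Finset.mul_sum]
  apply Finset.sum_congr rfl
  intro l _
  rw [zS]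
  ring

lemma coeff_zS_pow_eq_zero (n M : ℕ) (h : n < M) : coeff (R := ℤ) n (zS^M) = 0 := by
  rw [zS, mul_pow]
  exact coeff_X_pow_mul_of_lt _ M n h

/-- The key functional equation `(1-X)·A = 1 + X(1-2X)·A²`. -/
lemma quadratic : (1 - X) * AS = 1 + X * (1 - 2*X) * (AS * AS) := by
  ext n
  have hA := coeff_AS_FS n
  rw [coeff_mul_congr AS (FS n) (1 - X) n hA n le_rfl]
  rw [map_add]
  rw [coeff_mul_sq_congr AS (FS n) (X * (1 - 2*X)) n hA n le_rfl]
  rw [FS_one_sub, FS_sq, map_sum, map_sum]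
  set t : ℕ → ℤ := fun M => coeff (R := ℤ) n (zS^M) with ht
  have hcoeff1 : ∀ k ∈ range (n+1), coeff (R := ℤ) n (C (R := ℤ) (catalan k : ℤ) * zS^k) = (catalan k : ℤ) * t k := by
    intro k _; rw [coeff_C_mul]
  have hcoeff2 : ∀ k ∈ range (n+1),
      coeff (R := ℤ) n (∑ l ∈ range (n+1), C (R := ℤ) (catalan k : ℤ) * C (R := ℤ) (catalan l : ℤ) * zS^(k+l+1))
      = ∑ l ∈ range (n+1), (catalan k : ℤ) * (catalan l : ℤ) * t (k+l+1) := by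
    intro k _
    rw [map_sum]
    apply Finset.sum_congr rfl
    intro l _
    rw [mul_assoc, coeff_C_mul, coeff_C_mul, mul_assoc]
  rw [Finset.sum_congr rfl hcoeff1, Finset.sum_congr rfl hcoeff2]
  rw [Finset.sum_range_succ' (fun k => (catalan k : ℤ) * t k) n]
  have h0 : (catalan 0 : ℤ) * t 0 = coeff (R := ℤ) n 1 := by
    simp [ht, catalan_zero]
  rw [h0, add_comm]
  congr 1
  have hL : ∀ k ∈ range n, (catalan (k+1) : ℤ) * t (k+1)
      = ∑ p ∈ Finset.HasAntidiagonal.antidiagonal k, (catalan p.1 : ℤ) * (catalan p.2 : ℤ) * t (p.1 + p.2 + 1) := by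
    intro k _
    rw [catalan_succ']
    push_cast
    rw [Finset.sum_mul]
    apply Finset.sum_congr rfl
    intro p hp
    rw [Finset.HasAntidiagonal.mem_antidiagonal] at hp
    rw [hp]
  rw [Finset.sum_congr rfl hL]
  rw [← Finset.sum_biUnion (by
    intro x hx y hy hxy
    simp only [Finset.disjoint_left]
    intro p hpx hpy
    rw [Finset.HasAntidiagonal.mem_antidiagonal] at hpx hpy
    exact hxy (hpx ▸ hpy.symm ▸ rfl))]
  rw [← Finset.sum_product']
  apply Finset.sum_subset
  · intro p hp
    rw [Finset.mem_biUnion] at hp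
    obtain ⟨M, hM, hpM⟩ := hp
    rw [Finset.HasAntidiagonal.mem_antidiagonal] at hpM
    rw [Finset.mem_range] at hM
    rw [Finset.mem_product, Finset.mem_range, Finset.mem_range]
    omega
  · intro p hp hnp
    rw [Finset.mem_product] at hp
    have : n < p.1 + p.2 + 1 := by
      by_contra hc
      exact hnp (Finset.mem_biUnion.mpr ⟨p.1 + p.2, Finset.mem_range.mpr (by omega),
        Finset.HasAntidiagonal.mem_antidiagonal.mpr rfl⟩)
    rw [ht]
    simp only []
    rw [coeff_zS_pow_eq_zero n _ this, mul_zero]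

/-- The generating function of `2^n`. -/
noncomputable def BS : ℤ⟦X⟧ := PowerSeries.mk fun n => (2:ℤ)^n

lemma BS_eq : (1 - 2*X) * BS = 1 := by
  have h : (1 - 2*X) * BS = BS - C (R := ℤ) 2 * (X * BS) := by
    have : (C (R := ℤ)) (2:ℤ) = (2 : ℤ⟦X⟧) := by simp
    rw [this]; ring
  ext n
  rw [h, map_sub, coeff_C_mul]
  cases n with
  | zero =>
    rw [coeff_zero_eq_constantCoeff]
    simp [BS]
  | succ n =>
    rw [coeff_succ_X_mul]
    simp [BS, coeff_one, pow_succ]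
    ring

lemma eq_zero_of_self_eq (f h : ℤ⟦X⟧) (hf : f = X * (f * h)) : f = 0 := by
  ext n
  induction n using Nat.strong_induction_on with
  | _ n ih =>
    rw [map_zero]
    cases n with
    | zero =>
      rw [hf, coeff_zero_eq_constantCoeff]
      simp
    | succ n =>
      rw [hf, coeff_succ_X_mul, coeff_mul]
      apply Finset.sum_eq_zero
      intro p hp
      rw [Finset.HasAntidiagonal.mem_antidiagonal] at hp
      have := ih p.1 (by omega)
      rw [map_zero] at this
      rw [this, zero_mul]

lemma AS_eq_BS : AS = BS := by
  have hq := quadratic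
  have hb : (1 - X) * BS = 1 + X * (1 - 2*X) * (BS * BS) := by
    linear_combination (1 - X*BS) * BS_eq
  have hd : AS - BS = X * ((AS - BS) * (1 + (1 - 2*X) * (AS + BS))) := by
    linear_combination hq - hb
  exact sub_eq_zero.mp (eq_zero_of_self_eq (AS - BS) _ hd)

end GMotzkinAux

/-- For every `n`, `∑_{i=0}^{n} (-2)^i * D_{n,i} = 2^n`. -/
theorem alternating_two_pow_sum_gMotzkinD (n : ℕ) :
    ∑ i ∈ Finset.range (n + 1), (-2 : ℤ) ^ i * gMotzkinD n i = 2 ^ n := by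
  have h := congrArg (PowerSeries.coeff (R := ℤ) n) GMotzkinAux.AS_eq_BS
  rw [GMotzkinAux.AS, GMotzkinAux.BS, PowerSeries.coeff_mk, PowerSeries.coeff_mk] at h
  rw [GMotzkinAux.aSeq] at h
  exact h
end

section
/- For every natural number n, ∑_{i=0}^{n} (-1)^i * D_{n,i} = ∑_{k=0}^{n} C(n, k) * C_k, where D_{n,i} = ∑_{k=i}^{n-i} C(k, i) * C(n-i+k, 2k) * C_k and C_k is the k-th Catalan number. -/
open Finset

/-- Iterated finite difference of a binomial coefficient. -/
lemma diff_choose (k : ℕ) : ∀ m r : ℕ, k ≤ m → k ≤ r →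
    ∑ i ∈ Finset.range (k + 1),
      (-1 : ℤ) ^ i * (k.choose i) * ((m - i).choose r) =
    ((m - k).choose (r - k) : ℤ) := by
  induction k with
  | zero => simp
  | succ k ih =>
    intro m r hm hr
    have step : ∑ i ∈ Finset.range (k + 1 + 1),
        (-1 : ℤ) ^ i * ((k+1).choose i) * ((m - i).choose r) =
        (∑ i ∈ Finset.range (k + 1),
          (-1 : ℤ) ^ i * (k.choose i) * ((m - i).choose r)) -
        (∑ i ∈ Finset.range (k + 1),
          (-1 : ℤ) ^ i * (k.choose i) * ((m - 1 - i).choose r)) := by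
      rw [Finset.sum_range_succ' _ (k+1)]
      have e1 : ∀ j ∈ Finset.range (k+1),
          (-1 : ℤ)^(j+1) * ((k+1).choose (j+1)) * ((m-(j+1)).choose r) =
          (-1:ℤ)^(j+1) * (k.choose (j+1)) * ((m-(j+1)).choose r) +
          (-((-1:ℤ)^j * (k.choose j) * ((m-1-j).choose r))) := by
        intro j _
        rw [Nat.choose_succ_succ k j]
        have : m - (j+1) = m - 1 - j := by omega
        rw [this]
        push_cast
        ring
      rw [Finset.sum_congr rfl e1, Finset.sum_add_distrib, Finset.sum_neg_distrib]
      have e2 : (∑ j ∈ Finset.range (k+1),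
          (-1:ℤ)^(j+1) * (k.choose (j+1)) * ((m-(j+1)).choose r)) +
          ((-1:ℤ)^0 * ((k+1).choose 0) * ((m-0).choose r)) =
          ∑ i ∈ Finset.range (k + 1), (-1 : ℤ) ^ i * (k.choose i) * ((m - i).choose r) := by
        have := Finset.sum_range_succ' (fun i => (-1 : ℤ) ^ i * (k.choose i) * ((m - i).choose r)) (k+1)
        rw [show ((k+1).choose 0 : ℤ) = (k.choose 0 : ℤ) by simp]
        rw [← this, Finset.sum_range_succ]
        simp [Nat.choose_eq_zero_of_lt (Nat.lt_succ_self k)]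
      linarith [e2]
    rw [step, ih m r (le_trans (Nat.le_succ k) hm) (le_trans (Nat.le_succ k) hr),
        ih (m-1) r (by omega) (le_trans (Nat.le_succ k) hr)]
    have h1 : m - 1 - k = m - (k+1) := by omega
    have h2 : (m - k).choose (r - k) =
        (m - (k+1)).choose (r - k) + (m - (k+1)).choose (r - (k+1)) := by
      have hmk : m - k = (m - (k+1)) + 1 := by omega
      have hrk : r - k = (r - (k+1)) + 1 := by omega
      rw [hmk, hrk, Nat.choose_succ_succ']
      omega
    rw [h1]
    push_cast [h2]
    ring

lemma key (n k : ℕ) :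
    ∑ i ∈ Finset.range (k + 1),
      (-1 : ℤ) ^ i * (k.choose i) * ((n + k - i).choose (2 * k)) =
    (n.choose k : ℤ) := by
  have := diff_choose k (n + k) (2 * k) (by omega) (by omega)
  simpa [Nat.add_sub_cancel, show 2 * k - k = k by omega] using this

/-- For every `n`, `∑_{i=0}^{n} (-1)^i * D_{n,i} = ∑_{k=0}^{n} C(n, k) * C_k`. -/
theorem alternating_sum_gMotzkinD (n : ℕ) :
    ∑ i ∈ Finset.range (n + 1), (-1 : ℤ) ^ i * gMotzkinD n i =
      ∑ k ∈ Finset.range (n + 1), (n.choose k : ℤ) * catalan k := by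
  have extend : ∀ i ∈ Finset.range (n + 1),
      (-1 : ℤ) ^ i * gMotzkinD n i =
      ∑ k ∈ Finset.range (n + 1),
        (-1 : ℤ) ^ i * (k.choose i * (n - i + k).choose (2 * k) * catalan k : ℕ) := by
    intro i hi
    rw [Finset.mem_range] at hi
    have hi' : i ≤ n := by omega
    unfold gMotzkinD
    push_cast
    rw [Finset.mul_sum]
    refine Finset.sum_subset ?_ ?_
    · intro k hk
      rw [Finset.mem_Icc] at hk
      rw [Finset.mem_range]
      omega
    · intro k hk hk'
      rw [Finset.mem_range] at hk
      rw [Finset.mem_Icc] at hk'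
      push_neg at hk'
      rcases Nat.lt_or_ge k i with h | h
      · simp [Nat.choose_eq_zero_of_lt h]
      · have hk2 : n - i < k := hk' h
        have : n - i + k < 2 * k := by omega
        simp [Nat.choose_eq_zero_of_lt this]
  rw [Finset.sum_congr rfl extend, Finset.sum_comm]
  refine Finset.sum_congr rfl ?_
  intro k hk
  rw [Finset.mem_range] at hk
  have hk' : k ≤ n := by omega
  have shrink : ∑ i ∈ Finset.range (n + 1),
      (-1 : ℤ) ^ i * (k.choose i * (n - i + k).choose (2 * k) * catalan k : ℕ) =
      ∑ i ∈ Finset.range (k + 1),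
      (-1 : ℤ) ^ i * (k.choose i * (n - i + k).choose (2 * k) * catalan k : ℕ) := by
    refine (Finset.sum_subset ?_ ?_).symm
    · intro i hi; rw [Finset.mem_range] at hi ⊢; omega
    · intro i hi hi'
      rw [Finset.mem_range] at hi hi'
      have : k < i := by omega
      simp [Nat.choose_eq_zero_of_lt this]
  rw [shrink]
  have := key n k
  calc ∑ i ∈ Finset.range (k + 1),
      (-1 : ℤ) ^ i * (k.choose i * (n - i + k).choose (2 * k) * catalan k : ℕ)
      = (∑ i ∈ Finset.range (k + 1),
        (-1 : ℤ) ^ i * (k.choose i) * ((n + k - i).choose (2 * k))) * catalan k := by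
        rw [Finset.sum_mul]
        refine Finset.sum_congr rfl ?_
        intro i hi
        rw [Finset.mem_range] at hi
        have : n - i + k = n + k - i := by omega
        rw [this]; push_cast; ring
    _ = (n.choose k : ℤ) * catalan k := by rw [this]
end

section
/- For every natural number n, ∑_{i=0}^{n} (-1)^i * D_{n+i, i} = 1, where D_{n,i} = ∑_{k=i}^{n-i} C(k, i) * C(n-i+k, 2k) * C_k and C_k is the k-th Catalan number. -/
/-- For every `n`, `∑_{i=0}^{n} (-1)^i * D_{n+i, i} = 1`. -/
theorem alternating_diag_sum_gMotzkinD (n : ℕ) :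
    ∑ i ∈ Finset.range (n + 1), (-1 : ℤ) ^ i * gMotzkinD (n + i) i = 1 := by
  have h1 : ∀ i ∈ Finset.range (n + 1), (-1:ℤ)^i * gMotzkinD (n+i) i
      = ∑ k ∈ Finset.Icc i n,
          ((-1:ℤ)^i * (k.choose i)) * (((n + k).choose (2*k)) * catalan k) := by
    intro i _
    simp only [gMotzkinD]
    rw [show n + i - i = n from by omega]
    push_cast [Finset.mul_sum]
    exact Finset.sum_congr rfl fun k hk => by ring
  rw [Finset.sum_congr rfl h1]
  rw [Finset.sum_comm' (t' := Finset.range (n+1)) (s' := fun k => Finset.range (k+1))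
    (fun i k => by simp [Finset.mem_Icc, Finset.mem_range]; omega)]
  have h2 : ∀ k ∈ Finset.range (n+1),
      ∑ i ∈ Finset.range (k+1),
        ((-1:ℤ)^i * (k.choose i)) * (((n + k).choose (2*k)) * catalan k)
      = (if k = 0 then 1 else 0) * (((n + k).choose (2*k)) * catalan k) := by
    intro k _
    rw [← Finset.sum_mul, Int.alternating_sum_range_choose]
  rw [Finset.sum_congr rfl h2]
  simp
end

section
/- For every natural number n, ∑_{i=0}^{n} (-2)^i * D_{n+i, i} equals 1 if n = 0 and 0 otherwise, where D_{n+i,i} = ∑_{k=i}^{n} C(k, i) * C(n+k, 2k) * C_k with C_k the k-th Catalan number. -/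
lemma choose_step (n m : ℕ) (h : m ≤ n) :
    (2*m+2) * ((2*m+1) * Nat.choose (n+m+1) (2*m+2))
      = (n-m) * ((n+m+1) * Nat.choose (n+m) (2*m)) := by
  have h1 : Nat.choose (n+m+1) (2*m+1+1) * (2*m+1+1)
      = Nat.choose (n+m+1) (2*m+1) * ((n+m+1) - (2*m+1)) :=
    Nat.choose_succ_right_eq _ _
  have h2 : Nat.succ (n+m) * Nat.choose (n+m) (2*m)
      = Nat.choose (n+m+1) (2*m+1) * (2*m+1) := Nat.add_one_mul_choose_eq _ _
  have hsub : (n+m+1) - (2*m+1) = n - m := by omega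
  rw [hsub] at h1
  calc (2*m+2) * ((2*m+1) * Nat.choose (n+m+1) (2*m+2))
      = (2*m+1) * (Nat.choose (n+m+1) (2*m+1+1) * (2*m+1+1)) := by ring
    _ = (2*m+1) * (Nat.choose (n+m+1) (2*m+1) * (n-m)) := by rw [h1]
    _ = (n-m) * (Nat.choose (n+m+1) (2*m+1) * (2*m+1)) := by ring
    _ = (n-m) * (Nat.succ (n+m) * Nat.choose (n+m) (2*m)) := by rw [h2]
    _ = (n-m) * ((n+m+1) * Nat.choose (n+m) (2*m)) := rfl

lemma key_s6 (n m : ℕ) (h : m ≤ n) :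
    (m+1)*(m+2)*(Nat.choose (n+m+1) (2*m+2) * catalan (m+1))
      = (n-m)*(n+m+1)*(Nat.choose (n+m) (2*m) * catalan m) := by
  have hc : (m+1+1) * catalan (m+1) = Nat.centralBinom (m+1) :=
    succ_mul_catalan_eq_centralBinom (m+1)
  have hc0 : (m+1) * catalan m = Nat.centralBinom m :=
    succ_mul_catalan_eq_centralBinom m
  have hcb : (m+1) * Nat.centralBinom (m+1) = 2 * (2*m+1) * Nat.centralBinom m :=
    Nat.succ_mul_centralBinom_succ m
  -- multiply goal by (m+1) and cancel
  apply Nat.eq_of_mul_eq_mul_left (show 0 < m+1 by omega)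
  calc (m+1) * ((m+1)*(m+2)*(Nat.choose (n+m+1) (2*m+2) * catalan (m+1)))
      = (m+1) * ((m+1) * Nat.choose (n+m+1) (2*m+2)) * ((m+1+1) * catalan (m+1)) := by ring
    _ = (m+1) * ((m+1) * Nat.choose (n+m+1) (2*m+2)) * Nat.centralBinom (m+1) := by rw [hc]
    _ = ((m+1) * Nat.choose (n+m+1) (2*m+2)) * ((m+1) * Nat.centralBinom (m+1)) := by ring
    _ = ((m+1) * Nat.choose (n+m+1) (2*m+2)) * (2 * (2*m+1) * Nat.centralBinom m) := by rw [hcb]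
    _ = ((2*m+2) * ((2*m+1) * Nat.choose (n+m+1) (2*m+2))) * Nat.centralBinom m := by ring
    _ = ((n-m) * ((n+m+1) * Nat.choose (n+m) (2*m))) * Nat.centralBinom m := by
        rw [choose_step n m h]
    _ = (n-m) * ((n+m+1) * Nat.choose (n+m) (2*m)) * ((m+1) * catalan m) := by rw [← hc0]
    _ = (m+1) * ((n-m)*(n+m+1)*(Nat.choose (n+m) (2*m) * catalan m)) := by ring

lemma telescope (n : ℕ) : ∀ m, m ≤ n + 1 →
    (n*(n+1) : ℤ) * ∑ k ∈ Finset.range m,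
        (-1:ℤ)^k * (Nat.choose (n+k) (2*k) * catalan k)
      + (-1:ℤ)^m * (m*(m+1)) * (Nat.choose (n+m) (2*m) * catalan m) = 0 := by
  intro m
  induction m with
  | zero => simp
  | succ m ih =>
    intro hm
    have hmn : m ≤ n := by omega
    have ihv := ih (by omega)
    rw [Finset.sum_range_succ]
    have hkey := key_s6 n m hmn
    have hkeyZ : ((m:ℤ)+1)*((m:ℤ)+2)*(Nat.choose (n+m+1) (2*m+2) * catalan (m+1))
        = ((n:ℤ)-m)*((n:ℤ)+m+1)*(Nat.choose (n+m) (2*m) * catalan m) := by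
      have := congrArg (fun x : ℕ => (x : ℤ)) hkey
      simp only [Nat.cast_mul, Nat.cast_add, Nat.cast_ofNat, Nat.cast_one,
        Nat.cast_sub hmn, Nat.cast_two] at this
      push_cast at this ⊢
      linarith [this]
    have hidx : n + (m+1) = n + m + 1 := by omega
    have hidx2 : 2*(m+1) = 2*m+2 := by omega
    rw [hidx, hidx2]
    have hpow : (-1:ℤ)^(m+1) = -(-1:ℤ)^m := by ring
    push_cast at ihv ⊢
    linear_combination ihv - (-1:ℤ)^m * hkeyZ

lemma catalan_alt_sum (n : ℕ) (hn : 1 ≤ n) :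
    ∑ k ∈ Finset.range (n+1), (-1:ℤ)^k * (Nat.choose (n+k) (2*k) * catalan k) = 0 := by
  have h := telescope n (n+1) le_rfl
  have hz : Nat.choose (n+(n+1)) (2*(n+1)) = 0 := by
    apply Nat.choose_eq_zero_of_lt; omega
  rw [hz] at h
  push_cast at h
  have hn' : (0:ℤ) < n*(n+1) := by positivity
  have := mul_eq_zero.mp (by linarith [h] :
    (n*(n+1) : ℤ) * ∑ k ∈ Finset.range (n+1),
      (-1:ℤ)^k * (Nat.choose (n+k) (2*k) * catalan k) = 0)
  rcases this with h1 | h2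
  · exact absurd h1 (by positivity)
  · exact h2

/-- For every `n`, `∑_{i=0}^{n} (-2)^i * D_{n+i, i}` is `1` if `n = 0` and `0`
otherwise. -/
theorem alternating_two_pow_diag_sum_gMotzkinD (n : ℕ) :
    ∑ i ∈ Finset.range (n + 1), (-2 : ℤ) ^ i * gMotzkinD (n + i) i =
      if n = 0 then 1 else 0 := by
  have hD : ∀ i, gMotzkinD (n + i) i =
      ∑ k ∈ Finset.Icc i n, k.choose i * (n + k).choose (2 * k) * catalan k := by
    intro i
    unfold gMotzkinD
    rw [Nat.add_sub_cancel]
  have step1 : ∑ i ∈ Finset.range (n + 1), (-2 : ℤ) ^ i * gMotzkinD (n + i) i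
      = ∑ i ∈ Finset.range (n+1), ∑ k ∈ Finset.Icc i n,
          (-2:ℤ)^i * (k.choose i * ((n + k).choose (2 * k) * catalan k)) := by
    apply Finset.sum_congr rfl
    intro i _
    rw [hD i]
    push_cast
    rw [Finset.mul_sum]
    apply Finset.sum_congr rfl
    intro k _
    ring
  rw [step1]
  rw [Finset.sum_comm' (s' := fun k => Finset.range (k+1)) (t' := Finset.range (n+1))
    (by intro i k
        simp only [Finset.mem_range, Finset.mem_Icc]
        omega)]
  have step2 : ∀ k ∈ Finset.range (n+1),
      ∑ i ∈ Finset.range (k+1),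
          (-2:ℤ)^i * (k.choose i * ((n + k).choose (2 * k) * catalan k))
        = (-1:ℤ)^k * ((n + k).choose (2 * k) * catalan k) := by
    intro k _
    have hbin : ∑ i ∈ Finset.range (k+1), (-2:ℤ)^i * (k.choose i)
        = (-1:ℤ)^k := by
      have := add_pow (-2 : ℤ) 1 k
      simp only [one_pow, mul_one] at this
      have h21 : (-2 : ℤ) + 1 = -1 := by norm_num
      rw [h21] at this
      rw [← this]
    calc ∑ i ∈ Finset.range (k+1),
          (-2:ℤ)^i * (k.choose i * ((n + k).choose (2 * k) * catalan k))
        = (∑ i ∈ Finset.range (k+1), (-2:ℤ)^i * (k.choose i))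
            * ((n + k).choose (2 * k) * catalan k) := by
          rw [Finset.sum_mul]
          apply Finset.sum_congr rfl
          intro i _
          ring
      _ = (-1:ℤ)^k * ((n + k).choose (2 * k) * catalan k) := by rw [hbin]
  rw [Finset.sum_congr rfl step2]
  rcases Nat.eq_zero_or_pos n with h0 | hpos
  · subst h0; simp
  · rw [if_neg (by omega)]
    exact catalan_alt_sum n hpos
end

section
/- For every natural number n, ∑_{i=0}^{n} y^i * D_{n+i, i} = (y+1)^n * N_n((y+2)/(y+1)) as polynomial identities in y, where D_{n+i,i} = ∑_{k=i}^{n} C(k, i) * C(n+k, 2k) * C_k, and N_n(t) = ∑_{k=1}^{n} (1/n) * C(n, k-1) * C(n, k) * t^k (with N_0 = 1) is the Narayana polynomial. Equivalently, ∑_{i=0}^{n} y^i D_{n+i,i} = ∑_{k=1}^{n} (1/n) C(n,k-1) C(n,k) (y+2)^k (y+1)^{n-k} for n ≥ 1. -/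
open Finset Nat

lemma keyA (n i : ℕ) (hi : i ≤ n) (hn : 1 ≤ n) :
    ∑ k ∈ Finset.Icc 1 n, n.choose (k-1) * n.choose k * k.choose i
      = n.choose i * (n + (n-i)).choose (n+1-i) := by
  have hvdm : (n + (n-i)).choose (n+1-i)
      = ∑ a ∈ range (n+1-i+1), n.choose a * (n-i).choose (n+1-i-a) := by
    rw [Nat.add_choose_eq]
    exact Finset.Nat.sum_antidiagonal_eq_sum_range_succ
      (fun a b => n.choose a * (n-i).choose b) (n+1-i)
  rw [hvdm, Finset.mul_sum]
  -- step 1 : restrict LHS to k ≥ i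
  rw [show (Finset.Icc 1 n) = Finset.Icc (max 1 i) n ∪ Finset.Icc 1 n \ Finset.Icc (max 1 i) n
      from (Finset.union_sdiff_of_subset (Finset.Icc_subset_Icc (by omega) le_rfl)).symm,
    Finset.sum_union (Finset.disjoint_sdiff)]
  have hz : ∑ k ∈ Finset.Icc 1 n \ Finset.Icc (max 1 i) n,
      n.choose (k-1) * n.choose k * k.choose i = 0 := by
    apply Finset.sum_eq_zero
    intro k hk
    simp only [Finset.mem_sdiff, Finset.mem_Icc, not_and, not_le] at hk
    have : k < i := by omega
    rw [Nat.choose_eq_zero_of_lt this, mul_zero]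
  rw [hz, add_zero]
  -- step 2 : bijection k ↦ n+1-k
  have hbij : ∑ k ∈ Finset.Icc (max 1 i) n, n.choose (k-1) * n.choose k * k.choose i
      = ∑ a ∈ Finset.Icc 1 (n + 1 - max 1 i),
          n.choose i * (n.choose a * (n-i).choose (n+1-i-a)) := by
    apply Finset.sum_nbij' (i := fun k => n + 1 - k) (j := fun a => n + 1 - a)
    · intro k hk; simp only [Finset.mem_Icc] at *; omega
    · intro a ha; simp only [Finset.mem_Icc] at *; omega
    · intro k hk; simp only [Finset.mem_Icc] at hk; omega
    · intro a ha; simp only [Finset.mem_Icc] at ha; omega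
    · intro k hk
      simp only [Finset.mem_Icc] at hk
      have h1 : i ≤ k := by omega
      have h2 : k ≤ n := hk.2
      rw [show n + 1 - k = n - (k-1) by omega, Nat.choose_symm (by omega),
        show n + 1 - i - (n - (k-1)) = k - i by omega, mul_assoc,
        Nat.choose_mul h1]
      ring
  rw [hbij]
  -- step 3 : extend to range
  apply Finset.sum_subset
  · intro a ha
    simp only [Finset.mem_Icc, Finset.mem_range] at *
    omega
  · intro a ha hna
    simp only [Finset.mem_Icc, Finset.mem_range] at ha hna
    rcases Nat.eq_zero_or_pos a with h0 | h0
    · subst h0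
      rw [Nat.sub_zero, Nat.choose_eq_zero_of_lt (by omega : n - i < n + 1 - i), mul_zero,
        mul_zero]
    · have : n < a := by omega
      rw [Nat.choose_eq_zero_of_lt this, zero_mul, mul_zero]


lemma keyB (n j : ℕ) (hj : j ≤ n) (hn : 1 ≤ n) :
    ((n.choose j : ℚ) * (n+(n-j)).choose (n+1-j)) / n
      = (n+(n-j)).choose (2*(n-j)) * catalan (n-j) := by
  obtain ⟨m, hm⟩ : ∃ m, n = j + m := ⟨n - j, by omega⟩
  obtain ⟨s, hs⟩ : ∃ s, j + m = s + 1 := ⟨j + m - 1, by omega⟩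
  subst hm
  have e0 : j + m - j = m := by omega
  have e1 : (j+m) + ((j+m) - j) = j + 2*m := by omega
  have e2 : (j+m) + 1 - j = m + 1 := by omega
  have e3 : (j+m) + ((j+m) - j) = j + 2*m := by omega
  have e4 : 2*((j+m)-j) = 2*m := by omega
  rw [e1, e2, e4, e0]
  have hcat : (catalan m : ℚ) = (2*m).choose m / (m+1) := by
    have h : (m+1) * catalan m = (2*m).choose m := by
      rw [succ_mul_catalan_eq_centralBinom, Nat.centralBinom]
    have h' : ((m:ℚ)+1) * catalan m = (2*m).choose m := by exact_mod_cast congrArg (Nat.cast (R := ℚ)) h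
    rw [eq_div_iff (by positivity)]
    linarith
  -- choose casts
  have c1 : ((j+m).choose j : ℚ) = (j+m)! / (j ! * m !) := by
    rw [Nat.cast_choose ℚ (Nat.le_add_right j m), e0]
  have c2 : ((j+2*m).choose (m+1) : ℚ) = (j+2*m)! / ((m+1)! * s !) := by
    rw [Nat.cast_choose ℚ (by omega : m + 1 ≤ j + 2*m), show j + 2*m - (m+1) = s by omega]
  have c3 : ((j+2*m).choose (2*m) : ℚ) = (j+2*m)! / ((2*m)! * j !) := by
    rw [Nat.cast_choose ℚ (by omega : 2*m ≤ j + 2*m), show j + 2*m - 2*m = j by omega]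
  have c4 : ((2*m).choose m : ℚ) = (2*m)! / (m ! * m !) := by
    rw [Nat.cast_choose ℚ (by omega : m ≤ 2*m), show 2*m - m = m by omega]
  have cfac : ((j+m)! : ℚ) = (s+1) * s ! := by
    rw [hs, Nat.factorial_succ]
    push_cast
    ring
  have cmsucc : ((m+1)! : ℚ) = (m+1) * m ! := by
    rw [Nat.factorial_succ]; push_cast; ring
  have hn' : ((j:ℚ) + m) = (s+1 : ℚ) := by
    have := congrArg (Nat.cast (R := ℚ)) hs
    push_cast at this
    linarith
  rw [hcat, c1, c2, c3, c4, cfac, cmsucc]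
  push_cast
  rw [hn']
  have h1 : (s ! : ℚ) ≠ 0 := by positivity
  have h2 : (j ! : ℚ) ≠ 0 := by positivity
  have h3 : (m ! : ℚ) ≠ 0 := by positivity
  have h4 : ((2*m)! : ℚ) ≠ 0 := by positivity
  have h5 : ((j+2*m)! : ℚ) ≠ 0 := by positivity
  have h6 : (s : ℚ) + 1 ≠ 0 := by positivity
  have h7 : (m : ℚ) + 1 ≠ 0 := by positivity
  field_simp



/-- For every `n` and every `y`,
`∑_{i=0}^{n} y^i * D_{n+i, i} = (y+1)^n * N_n((y+2)/(y+1))`, i.e. the sum equals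
`1` for `n = 0` and `∑_{k=1}^{n} (1/n) C(n,k-1) C(n,k) (y+2)^k (y+1)^{n-k}` for
`n ≥ 1`, where `N_{n,k} = (1/n) C(n,k-1) C(n,k)` is the Narayana number. -/
theorem diag_sum_gMotzkinD_eq_narayana (n : ℕ) (y : ℚ) :
    ∑ i ∈ Finset.range (n + 1), y ^ i * gMotzkinD (n + i) i =
      if n = 0 then 1 else
        ∑ k ∈ Finset.Icc 1 n,
          ((n.choose (k - 1) : ℚ) * n.choose k / n) * (y + 2) ^ k *
            (y + 1) ^ (n - k) := by
  rcases Nat.eq_zero_or_pos n with rfl | hn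
  · simp [gMotzkinD]
  rw [if_neg (by omega)]
  have hn' : 1 ≤ n := hn
  -- LHS
  have hLHS1 : ∑ i ∈ Finset.range (n + 1), y ^ i * gMotzkinD (n + i) i
      = ∑ k ∈ Finset.range (n + 1),
          (((n+k).choose (2*k) : ℚ) * catalan k) * (y+1)^k := by
    have h1 : ∀ i ∈ Finset.range (n+1), y ^ i * (gMotzkinD (n + i) i : ℚ)
        = ∑ k ∈ Finset.range (n+1),
            (((n+k).choose (2*k) : ℚ) * catalan k) * ((k.choose i : ℚ) * y ^ i) := by
      intro i hi
      simp only [Finset.mem_range] at hi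
      have hEq : (gMotzkinD (n + i) i : ℚ)
          = ∑ k ∈ Finset.range (n+1),
              (k.choose i : ℚ) * (((n+k).choose (2*k) : ℚ)) * (catalan k : ℚ) := by
        unfold gMotzkinD
        rw [show n + i - i = n by omega]
        push_cast
        apply Finset.sum_subset
        · intro k hk
          simp only [Finset.mem_Icc, Finset.mem_range] at *
          omega
        · intro k hk hnk
          simp only [Finset.mem_Icc, Finset.mem_range] at hk hnk
          rw [Nat.choose_eq_zero_of_lt (by omega : k < i)]
          push_cast
          ring
      rw [hEq, Finset.mul_sum]
      exact Finset.sum_congr rfl fun k _ => by ring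
    rw [Finset.sum_congr rfl h1, Finset.sum_comm]
    apply Finset.sum_congr rfl
    intro k hk
    simp only [Finset.mem_range] at hk
    rw [← Finset.mul_sum]
    congr 1
    have hsub : ∑ i ∈ Finset.range (n+1), (k.choose i : ℚ) * y ^ i
        = ∑ i ∈ Finset.range (k+1), (k.choose i : ℚ) * y ^ i := by
      symm
      apply Finset.sum_subset
      · intro a ha
        simp only [Finset.mem_range] at *
        omega
      · intro a ha hna
        simp only [Finset.mem_range] at ha hna
        rw [Nat.choose_eq_zero_of_lt (by omega : k < a)]
        push_cast
        ring
    rw [hsub, add_pow]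
    exact Finset.sum_congr rfl fun a _ => by simp; ring
  have hLHS2 : ∑ k ∈ Finset.range (n + 1),
        (((n+k).choose (2*k) : ℚ) * catalan k) * (y+1)^k
      = ∑ j ∈ Finset.range (n + 1),
          (((n+(n-j)).choose (2*(n-j)) : ℚ) * catalan (n-j)) * (y+1)^(n-j) := by
    exact (Finset.sum_range_reflect
      (fun k => (((n+k).choose (2*k) : ℚ) * catalan k) * (y+1)^k) (n+1)).symm
  rw [hLHS1, hLHS2]
  -- RHS
  have h2 : ∀ k ∈ Finset.Icc 1 n,
      ((n.choose (k - 1) : ℚ) * n.choose k / n) * (y + 2) ^ k * (y + 1) ^ (n - k)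
      = ∑ j ∈ Finset.range (n+1),
          (((n.choose (k - 1) : ℚ) * n.choose k / n) * (k.choose j)) * (y+1)^(n-j) := by
    intro k hk
    simp only [Finset.mem_Icc] at hk
    set N : ℚ := (n.choose (k - 1) : ℚ) * n.choose k / n with hN
    calc N * (y + 2) ^ k * (y + 1) ^ (n - k)
        = ∑ j ∈ Finset.range (k+1), (N * (k.choose j : ℚ)) * (y+1)^(j+(n-k)) := by
          rw [show (y + 2 : ℚ) = (y + 1) + 1 by ring, add_pow, Finset.mul_sum,
            Finset.sum_mul]
          exact Finset.sum_congr rfl fun j _ => by rw [pow_add]; push_cast; ring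
      _ = ∑ j ∈ Finset.range (k+1), (N * (k.choose (k-j) : ℚ)) * (y+1)^((k-j)+(n-k)) :=
          (Finset.sum_range_reflect
            (fun j => (N * (k.choose j : ℚ)) * (y+1)^(j+(n-k))) (k+1)).symm
      _ = ∑ j ∈ Finset.range (k+1), (N * (k.choose j : ℚ)) * (y+1)^(n-j) := by
          apply Finset.sum_congr rfl
          intro j hj
          simp only [Finset.mem_range] at hj
          rw [Nat.choose_symm (by omega : j ≤ k), show k - j + (n-k) = n - j by omega]
      _ = ∑ j ∈ Finset.range (n+1), (N * (k.choose j : ℚ)) * (y+1)^(n-j) := by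
          apply Finset.sum_subset
          · intro a ha
            simp only [Finset.mem_range] at *
            omega
          · intro a ha hna
            simp only [Finset.mem_range] at ha hna
            rw [Nat.choose_eq_zero_of_lt (by omega : k < a)]
            push_cast
            ring
  rw [Finset.sum_congr rfl h2, Finset.sum_comm]
  -- pointwise coefficients
  apply Finset.sum_congr rfl
  intro j hj
  simp only [Finset.mem_range] at hj
  have hj' : j ≤ n := by omega
  rw [← Finset.sum_mul]
  congr 1
  symm
  calc ∑ k ∈ Finset.Icc 1 n, ((n.choose (k - 1) : ℚ) * n.choose k / n) * (k.choose j)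
      = ((∑ k ∈ Finset.Icc 1 n, n.choose (k-1) * n.choose k * k.choose j : ℕ) : ℚ) / n := by
        rw [Nat.cast_sum, Finset.sum_div]
        exact Finset.sum_congr rfl fun k _ => by push_cast; ring
    _ = ((n.choose j * (n+(n-j)).choose (n+1-j) : ℕ) : ℚ) / n := by
        rw [keyA n j hj' hn']
    _ = (((n+(n-j)).choose (2*(n-j)) : ℚ)) * catalan (n-j) := by
        rw [Nat.cast_mul]
        exact keyB n j hj' hn'
end

section
/- For every natural number n, ∑_{i=0}^{n} (-3)^i * D_{n+i, i} = (-1)^n * r_n, where D_{n+i,i} = ∑_{k=i}^{n} C(k, i) * C(n+k, 2k) * C_k, C_k is the k-th Catalan number, and r_n is the n-th little Schröder number (r_0 = 1 and 2*r_n = ∑_{k=0}^{n} C(n+k, 2k) * C_k for n ≥ 1). -/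
open Finset

/-- The `n`-th little Schröder number: `r_0 = 1` and
`2 * r_n = ∑_{k=0}^{n} C(n+k, 2k) * C_k` for `n ≥ 1`. -/
def littleSchroeder (n : ℕ) : ℚ :=
  if n = 0 then 1
  else (∑ k ∈ Finset.range (n + 1), ((n + k).choose (2 * k) * catalan k : ℚ)) / 2

/- Auxiliary definitions -/

/-- summand -/
noncomputable def aQ (x : ℚ) (n k : ℕ) : ℚ :=
  ((n + k).choose (2 * k) : ℚ) * (catalan k : ℚ) * x ^ k

/-- certificate -/
noncomputable def gQ (x : ℚ) (n k : ℕ) : ℚ :=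
  (-2) * k * (k + 1) * (2 * n + 3) * aQ x n k / (((n : ℚ) + 1 - k) * ((n : ℚ) + 2 - k))

/-- the polynomial `P_n(x) = ∑ C(n+k,2k) C_k x^k` -/
noncomputable def PQ (x : ℚ) (n : ℕ) : ℚ := ∑ k ∈ Finset.range (n + 1), aQ x n k

lemma catalan_rec (k : ℕ) : ((k : ℚ) + 2) * catalan (k + 1) = 2 * (2 * k + 1) * catalan k := by
  have h1 : (k + 1 + 1) * catalan (k + 1) = (k + 1).centralBinom :=
    succ_mul_catalan_eq_centralBinom (k + 1)
  have h2 : (k + 1) * Nat.centralBinom (k + 1) = 2 * (2 * k + 1) * Nat.centralBinom k :=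
    Nat.succ_mul_centralBinom_succ k
  have h3 : (k + 1) * catalan k = k.centralBinom := succ_mul_catalan_eq_centralBinom k
  have key : (k + 1) * ((k + 2) * catalan (k + 1)) = (k + 1) * (2 * (2 * k + 1) * catalan k) := by
    calc (k + 1) * ((k + 2) * catalan (k + 1)) = (k + 1) * Nat.centralBinom (k + 1) := by
          rw [← h1]
      _ = 2 * (2 * k + 1) * Nat.centralBinom k := h2
      _ = 2 * (2 * k + 1) * ((k + 1) * catalan k) := by rw [h3]
      _ = (k + 1) * (2 * (2 * k + 1) * catalan k) := by ring
  have h := Nat.eq_of_mul_eq_mul_left (Nat.succ_pos k) key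
  exact_mod_cast h

/-- `(n+1-k) * C(n+1+k, 2k) = (n+k+1) * C(n+k, 2k)` in `ℚ`, for `k ≤ n + 1`. -/
lemma chooseR1 (n k : ℕ) (h : k ≤ n + 1) :
    ((n : ℚ) + 1 - k) * ((n + 1 + k).choose (2 * k) : ℚ)
      = ((n : ℚ) + k + 1) * ((n + k).choose (2 * k) : ℚ) := by
  have := Nat.choose_mul_succ_eq (n + k) (2 * k)
  have hsub : n + k + 1 - 2 * k = n + 1 - k := by omega
  rw [hsub] at this
  have hc : ((n + k).choose (2 * k) * (n + k + 1) : ℚ)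
      = ((n + k + 1).choose (2 * k) : ℚ) * ((n + 1 - k : ℕ) : ℚ) := by exact_mod_cast this
  have hcast : ((n + 1 - k : ℕ) : ℚ) = (n : ℚ) + 1 - k := by
    push_cast [Nat.cast_sub h]; ring
  rw [hcast] at hc
  have : n + 1 + k = n + k + 1 := by ring
  rw [this]
  linarith [hc]

/-- `C(m, 2k+2) * (2k+1) * (2k+2) = C(m, 2k) * (m - 2k) * (m - 2k - 1)` specialised. -/
lemma chooseR3 (n k : ℕ) (h : k ≤ n) :
    ((n + 1 + k).choose (2 * k + 2) : ℚ) * ((2 * k + 1) * (2 * k + 2))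
      = ((n + 1 + k).choose (2 * k) : ℚ) * (((n : ℚ) + 1 - k) * ((n : ℚ) - k)) := by
  have e1 := Nat.choose_succ_right_eq (n + 1 + k) (2 * k)
  have e2 := Nat.choose_succ_right_eq (n + 1 + k) (2 * k + 1)
  have h1 : n + 1 + k - 2 * k = n + 1 - k := by omega
  have h2 : n + 1 + k - (2 * k + 1) = n - k := by omega
  rw [h1] at e1; rw [h2] at e2
  have c1 : ((n + 1 + k).choose (2 * k + 1) : ℚ) * (2 * k + 1)
      = ((n + 1 + k).choose (2 * k) : ℚ) * ((n + 1 - k : ℕ) : ℚ) := by exact_mod_cast e1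
  have c2 : ((n + 1 + k).choose (2 * k + 2) : ℚ) * (2 * k + 2)
      = ((n + 1 + k).choose (2 * k + 1) : ℚ) * ((n - k : ℕ) : ℚ) := by exact_mod_cast e2
  have hc1 : ((n + 1 - k : ℕ) : ℚ) = (n : ℚ) + 1 - k := by
    push_cast [Nat.cast_sub (le_trans h (Nat.le_succ n))]; ring
  have hc2 : ((n - k : ℕ) : ℚ) = (n : ℚ) - k := by push_cast [Nat.cast_sub h]; ring
  rw [hc1] at c1; rw [hc2] at c2
  calc ((n + 1 + k).choose (2 * k + 2) : ℚ) * ((2 * k + 1) * (2 * k + 2))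
      = (((n + 1 + k).choose (2 * k + 2) : ℚ) * (2 * k + 2)) * (2 * k + 1) := by ring
    _ = (((n + 1 + k).choose (2 * k + 1) : ℚ) * (2 * k + 1)) * ((n : ℚ) - k) := by
        rw [c2]; ring
    _ = ((n + 1 + k).choose (2 * k) : ℚ) * (((n : ℚ) + 1 - k) * ((n : ℚ) - k)) := by
        rw [c1]; ring

/-- The Zeilberger certificate identity, valid for `k < n`. -/
lemma keyIdentity (x : ℚ) (n k : ℕ) (hk : k < n) :
    ((n : ℚ) + 3) * aQ x (n + 2) k - (2 * n + 3) * (2 * x + 1) * aQ x (n + 1) k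
      + n * aQ x n k = gQ x n (k + 1) - gQ x n k := by
  have hk' : (k : ℚ) < n := by exact_mod_cast hk
  have d1 : ((n : ℚ) + 1 - k) ≠ 0 := by linarith
  have d2 : ((n : ℚ) + 2 - k) ≠ 0 := by linarith
  have d3 : ((n : ℚ) - k) ≠ 0 := by linarith
  -- abbreviations
  set b : ℚ := ((n + k).choose (2 * k) : ℚ) with hb
  set b1 : ℚ := ((n + 1 + k).choose (2 * k) : ℚ) with hb1
  set b2 : ℚ := ((n + 2 + k).choose (2 * k) : ℚ) with hb2
  set b' : ℚ := ((n + 1 + k).choose (2 * k + 2) : ℚ) with hb'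
  set c : ℚ := (catalan k : ℚ) with hc
  set c' : ℚ := (catalan (k + 1) : ℚ) with hc'
  have R1 : ((n : ℚ) + 1 - k) * b1 = ((n : ℚ) + k + 1) * b :=
    chooseR1 n k (by omega)
  have R2 : ((n : ℚ) + 2 - k) * b2 = ((n : ℚ) + k + 2) * b1 := by
    have := chooseR1 (n + 1) k (by omega)
    have e : n + 1 + 1 + k = n + 2 + k := by ring
    rw [e] at this
    push_cast at this ⊢
    linarith [this]
  have R3 : b' * ((2 * k + 1) * (2 * k + 2)) = b1 * (((n : ℚ) + 1 - k) * ((n : ℚ) - k)) :=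
    chooseR3 n k (le_of_lt hk)
  have R4 : ((k : ℚ) + 2) * c' = 2 * (2 * k + 1) * c := catalan_rec k
  -- unfold
  have ha2 : aQ x (n + 2) k = b2 * c * x ^ k := rfl
  have ha1 : aQ x (n + 1) k = b1 * c * x ^ k := rfl
  have ha0 : aQ x n k = b * c * x ^ k := rfl
  have hg0 : gQ x n k = (-2) * k * (k + 1) * (2 * n + 3) * (b * c * x ^ k)
      / (((n : ℚ) + 1 - k) * ((n : ℚ) + 2 - k)) := by
    simp only [gQ, ha0]
  have hg1 : gQ x n (k + 1) = (-2) * (k + 1) * (k + 2) * (2 * n + 3) * (b' * c' * x ^ (k + 1))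
      / (((n : ℚ) - k) * ((n : ℚ) + 1 - k)) := by
    have e1 : n + (k + 1) = n + 1 + k := by ring
    have e2 : 2 * (k + 1) = 2 * k + 2 := by ring
    simp only [gQ, aQ, e1, e2]
    push_cast
    ring
  rw [ha2, ha1, ha0, hg0, hg1]
  -- express b1, b2, b', c' in terms of b, c
  have eb1 : b1 = ((n : ℚ) + k + 1) * b / ((n : ℚ) + 1 - k) := by
    field_simp; linarith [R1]
  have eb2 : b2 = ((n : ℚ) + k + 2) * b1 / ((n : ℚ) + 2 - k) := by
    field_simp; linarith [R2]
  have ec' : c' = 2 * (2 * k + 1) * c / ((k : ℚ) + 2) := by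
    have : ((k : ℚ) + 2) ≠ 0 := by positivity
    field_simp; linarith [R4]
  have eb' : b' = b1 * (((n : ℚ) + 1 - k) * ((n : ℚ) - k)) / ((2 * k + 1) * (2 * k + 2)) := by
    have h1 : ((2 * (k : ℚ) + 1) * (2 * k + 2)) ≠ 0 := by positivity
    field_simp; linarith [R3]
  rw [eb2, eb', ec', eb1]
  have hk2 : ((k : ℚ) + 2) ≠ 0 := by positivity
  have hk3 : (2 * (k : ℚ) + 1) ≠ 0 := by positivity
  have hk4 : (2 * (k : ℚ) + 2) ≠ 0 := by positivity
  field_simp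
  ring

lemma gQ_zero (x : ℚ) (n : ℕ) : gQ x n 0 = 0 := by simp [gQ]

/-- The recurrence `(n+3) P_{n+2} = (2n+3)(2x+1) P_{n+1} - n P_n`. -/
lemma recPQ (x : ℚ) (n : ℕ) :
    ((n : ℚ) + 3) * PQ x (n + 2) = (2 * n + 3) * (2 * x + 1) * PQ x (n + 1) - n * PQ x n := by
  have tel : ∑ k ∈ range n, (gQ x n (k + 1) - gQ x n k) = gQ x n n - gQ x n 0 :=
    Finset.sum_range_sub (gQ x n) n
  have hsum : ∑ k ∈ range n, (((n : ℚ) + 3) * aQ x (n + 2) k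
      - (2 * n + 3) * (2 * x + 1) * aQ x (n + 1) k + n * aQ x n k)
      = gQ x n n - gQ x n 0 := by
    rw [← tel]
    exact Finset.sum_congr rfl fun k hk => keyIdentity x n k (Finset.mem_range.mp hk)
  have split : ∑ k ∈ range n, (((n : ℚ) + 3) * aQ x (n + 2) k
      - (2 * n + 3) * (2 * x + 1) * aQ x (n + 1) k + n * aQ x n k)
      = ((n : ℚ) + 3) * (∑ k ∈ range n, aQ x (n + 2) k)
        - (2 * n + 3) * (2 * x + 1) * (∑ k ∈ range n, aQ x (n + 1) k)
        + n * (∑ k ∈ range n, aQ x n k) := by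
    rw [Finset.sum_add_distrib, Finset.sum_sub_distrib, ← Finset.mul_sum, ← Finset.mul_sum,
      ← Finset.mul_sum]
  rw [split, gQ_zero, sub_zero] at hsum
  have e2 : PQ x (n + 2) = (∑ k ∈ range n, aQ x (n + 2) k) + aQ x (n + 2) n
      + aQ x (n + 2) (n + 1) + aQ x (n + 2) (n + 2) := by
    rw [PQ, Finset.sum_range_succ, Finset.sum_range_succ, Finset.sum_range_succ]
  have e1 : PQ x (n + 1) = (∑ k ∈ range n, aQ x (n + 1) k) + aQ x (n + 1) n
      + aQ x (n + 1) (n + 1) := by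
    rw [PQ, Finset.sum_range_succ, Finset.sum_range_succ]
  have e0 : PQ x n = (∑ k ∈ range n, aQ x n k) + aQ x n n := by
    rw [PQ, Finset.sum_range_succ]
  -- boundary values
  have b0 : aQ x n n = (catalan n : ℚ) * x ^ n := by
    have h : n + n = 2 * n := by ring
    simp [aQ, h, Nat.choose_self]
  have b1n : aQ x (n + 1) n = (2 * (n : ℚ) + 1) * ((catalan n : ℚ) * x ^ n) := by
    have h : n + 1 + n = 2 * n + 1 := by ring
    rw [aQ, h, Nat.choose_succ_self_right]
    push_cast; ring
  have b11 : aQ x (n + 1) (n + 1) = (catalan (n + 1) : ℚ) * x ^ (n + 1) := by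
    have h : n + 1 + (n + 1) = 2 * (n + 1) := by ring
    simp [aQ, h, Nat.choose_self]
  have b2n : aQ x (n + 2) n = ((n : ℚ) + 1) * (2 * n + 1) * ((catalan n : ℚ) * x ^ n) := by
    have h := chooseR1 (n + 1) n (by omega)
    have h2 : n + 1 + 1 + n = 2 * n + 2 := by ring
    have h3 : n + 1 + n = 2 * n + 1 := by ring
    rw [h2, h3] at h
    push_cast [Nat.choose_succ_self_right] at h
    have hval : ((2 * n + 2).choose (2 * n) : ℚ) = ((n : ℚ) + 1) * (2 * n + 1) := by
      linarith
    have h4 : n + 2 + n = 2 * n + 2 := by ring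
    rw [aQ, h4, hval]
    ring
  have b2n1 : aQ x (n + 2) (n + 1)
      = (2 * (n : ℚ) + 3) * ((catalan (n + 1) : ℚ) * x ^ (n + 1)) := by
    have h : n + 2 + (n + 1) = 2 * (n + 1) + 1 := by ring
    rw [aQ, h, Nat.choose_succ_self_right]
    push_cast; ring
  have b22 : aQ x (n + 2) (n + 2) = (catalan (n + 2) : ℚ) * x ^ (n + 2) := by
    have h : n + 2 + (n + 2) = 2 * (n + 2) := by ring
    simp [aQ, h, Nat.choose_self]
  have gnn : gQ x n n = -((n : ℚ) * (n + 1) * (2 * n + 3)) * ((catalan n : ℚ) * x ^ n) := by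
    have d : ((n : ℚ) + 1 - n) * ((n : ℚ) + 2 - n) = 2 := by ring
    rw [gQ, b0, d]
    ring
  rw [gnn] at hsum
  have hc1 : ((n : ℚ) + 2) * (catalan (n + 1) : ℚ) = 2 * (2 * n + 1) * (catalan n : ℚ) :=
    catalan_rec n
  have hc2 : ((n : ℚ) + 3) * (catalan (n + 2) : ℚ) = 2 * (2 * n + 3) * (catalan (n + 1) : ℚ) := by
    have := catalan_rec (n + 1)
    push_cast at this ⊢
    linarith
  rw [e2, e1, e0, b0, b1n, b11, b2n, b2n1, b22]
  linear_combination hsum + ((2 * (n : ℚ) + 3) * x ^ (n + 1)) * hc1 + (x ^ (n + 2)) * hc2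

lemma PQ_one_val : PQ 1 1 = 2 ∧ PQ (-2) 1 = -1 ∧ PQ 1 2 = 6 ∧ PQ (-2) 2 = 3 := by
  have c0 : catalan 0 = 1 := catalan_zero
  have c1 : catalan 1 = 1 := catalan_one
  have c2 : catalan 2 = 2 := catalan_two
  have ch1 : Nat.choose 1 0 = 1 := rfl
  have ch2 : Nat.choose 2 2 = 1 := rfl
  have ch3 : Nat.choose 2 0 = 1 := rfl
  have ch4 : Nat.choose 3 2 = 3 := rfl
  have ch5 : Nat.choose 4 4 = 1 := rfl
  refine ⟨?_, ?_, ?_, ?_⟩ <;>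
    · simp only [PQ, aQ, Finset.sum_range_succ, Finset.sum_range_zero]
      norm_num [c0, c1, c2, ch1, ch2, ch3, ch4, ch5]

lemma mainPair (n : ℕ) :
    2 * (-1 : ℚ) ^ (n + 1) * PQ (-2) (n + 1) = PQ 1 (n + 1) ∧
      2 * (-1 : ℚ) ^ (n + 2) * PQ (-2) (n + 2) = PQ 1 (n + 2) := by
  induction n with
  | zero =>
    obtain ⟨h1, h2, h3, h4⟩ := PQ_one_val
    constructor
    · rw [h1, h2]; norm_num
    · rw [h3, h4]; norm_num
  | succ m ih =>
    obtain ⟨ih1, ih2⟩ := ih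
    refine ⟨ih2, ?_⟩
    have hr := recPQ 1 (m + 1)
    have hs := recPQ (-2) (m + 1)
    have hne : ((m : ℚ) + 1 + 3) ≠ 0 := by positivity
    have key : ((m : ℚ) + 1 + 3) * (2 * (-1 : ℚ) ^ (m + 1 + 2) * PQ (-2) (m + 1 + 2))
        = ((m : ℚ) + 1 + 3) * PQ 1 (m + 1 + 2) := by
      simp only [show m + 1 + 1 = m + 2 from rfl, show m + 1 + 2 = m + 3 from rfl] at hr hs ⊢
      push_cast at hr hs ⊢
      linear_combination (2 * (-1 : ℚ) ^ (m + 3)) * hs - hr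
        + (6 * (m : ℚ) + 15) * ih2 - ((m : ℚ) + 1) * ih1
    exact mul_left_cancel₀ hne key

lemma mainId (n : ℕ) (h : 1 ≤ n) : 2 * (-1 : ℚ) ^ n * PQ (-2) n = PQ 1 n := by
  obtain ⟨m, rfl⟩ : ∃ m, n = m + 1 := ⟨n - 1, by omega⟩
  exact (mainPair m).1

/-- For every `n`, `∑_{i=0}^{n} (-3)^i * D_{n+i, i} = (-1)^n * r_n`. -/
theorem alternating_three_pow_diag_sum_gMotzkinD (n : ℕ) :
    ∑ i ∈ Finset.range (n + 1), (-3 : ℚ) ^ i * gMotzkinD (n + i) i =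
      (-1) ^ n * littleSchroeder n := by
  rcases Nat.eq_zero_or_pos n with rfl | hn
  · norm_num [gMotzkinD, littleSchroeder]
  -- LHS = PQ (-2) n
  have lhs_eq : ∑ i ∈ Finset.range (n + 1), (-3 : ℚ) ^ i * gMotzkinD (n + i) i
      = PQ (-2) n := by
    have step1 : ∀ i, ((gMotzkinD (n + i) i : ℚ))
        = ∑ k ∈ Finset.Icc i n, ((k.choose i : ℚ) * ((n + k).choose (2 * k) : ℚ)
            * (catalan k : ℚ)) := by
      intro i
      rw [gMotzkinD]
      have h1 : n + i - i = n := by omega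
      rw [h1]
      push_cast
      rfl
    calc ∑ i ∈ Finset.range (n + 1), (-3 : ℚ) ^ i * gMotzkinD (n + i) i
        = ∑ i ∈ Finset.range (n + 1), ∑ k ∈ Finset.Icc i n,
            (-3 : ℚ) ^ i * ((k.choose i : ℚ) * ((n + k).choose (2 * k) : ℚ)
              * (catalan k : ℚ)) := by
          refine Finset.sum_congr rfl fun i _ => ?_
          rw [step1, Finset.mul_sum]
      _ = ∑ i ∈ Finset.range (n + 1), ∑ k ∈ Finset.range (n + 1),
            if i ≤ k then (-3 : ℚ) ^ i * ((k.choose i : ℚ) * ((n + k).choose (2 * k) : ℚ)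
              * (catalan k : ℚ)) else 0 := by
          refine Finset.sum_congr rfl fun i hi => ?_
          rw [← Finset.sum_filter]
          refine Finset.sum_congr ?_ fun k _ => rfl
          ext k
          simp only [Finset.mem_Icc, Finset.mem_filter, Finset.mem_range]
          omega
      _ = ∑ k ∈ Finset.range (n + 1), ∑ i ∈ Finset.range (n + 1),
            if i ≤ k then (-3 : ℚ) ^ i * ((k.choose i : ℚ) * ((n + k).choose (2 * k) : ℚ)
              * (catalan k : ℚ)) else 0 := Finset.sum_comm
      _ = ∑ k ∈ Finset.range (n + 1), ∑ i ∈ Finset.range (k + 1),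
            (-3 : ℚ) ^ i * ((k.choose i : ℚ) * ((n + k).choose (2 * k) : ℚ)
              * (catalan k : ℚ)) := by
          refine Finset.sum_congr rfl fun k hk => ?_
          rw [← Finset.sum_filter]
          refine Finset.sum_congr ?_ fun i _ => rfl
          ext i
          simp only [Finset.mem_filter, Finset.mem_range]
          have := Finset.mem_range.mp hk
          omega
      _ = PQ (-2) n := by
          rw [PQ]
          refine Finset.sum_congr rfl fun k _ => ?_
          have binom : ∑ i ∈ Finset.range (k + 1), (-3 : ℚ) ^ i * (k.choose i : ℚ)
              = (-2 : ℚ) ^ k := by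
            have := add_pow (-3 : ℚ) 1 k
            norm_num at this
            linarith [this]
          calc ∑ i ∈ Finset.range (k + 1),
                (-3 : ℚ) ^ i * ((k.choose i : ℚ) * ((n + k).choose (2 * k) : ℚ)
                  * (catalan k : ℚ))
              = (∑ i ∈ Finset.range (k + 1), (-3 : ℚ) ^ i * (k.choose i : ℚ))
                  * (((n + k).choose (2 * k) : ℚ) * (catalan k : ℚ)) := by
                rw [Finset.sum_mul]
                refine Finset.sum_congr rfl fun i _ => by ring
            _ = aQ (-2) n k := by rw [binom, aQ]; ring
  rw [lhs_eq]
  -- RHS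
  have hns : littleSchroeder n = PQ 1 n / 2 := by
    rw [littleSchroeder, if_neg (by omega), PQ]
    congr 1
    refine Finset.sum_congr rfl fun k _ => ?_
    rw [aQ]
    ring
  rw [hns]
  have h := mainId n hn
  have aux : (-1 : ℚ) ^ n * (-1 : ℚ) ^ n = 1 := by
    rw [← pow_add, ← two_mul, pow_mul]
    norm_num
  linear_combination ((-1 : ℚ) ^ n / 2) * h - (PQ (-2) n) * aux
end

section
/- For every natural number n, ∑_{i=0}^{n} (-2)^i * U_{n,i} = (-1)^n, where U_{n,i} = ∑_{k=0}^{i} C(i, k) * C(n+k, 2i) * C_i is the number of G-Motzkin paths of length n with i up steps, and C_i is the i-th Catalan number. -/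
open Finset

/-- `U n i` is the number of G-Motzkin paths of length `n` with `i` up steps,
given by the closed form `U_{n,i} = ∑_{k=0}^{i} C(i, k) * C(n+k, 2i) * C_i`. -/
def gMotzkinU (n i : ℕ) : ℕ :=
  ∑ k ∈ Finset.range (i + 1), i.choose k * (n + k).choose (2 * i) * catalan i

namespace GMAux


lemma catalan_ratio (i : ℕ) : (i + 2) * catalan (i + 1) = 2 * (2 * i + 1) * catalan i := by
  apply Nat.eq_of_mul_eq_mul_left (show 0 < i + 1 by omega)
  have h1 : (i + 1 + 1) * catalan (i + 1) = (i + 1).centralBinom :=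
    succ_mul_catalan_eq_centralBinom (i + 1)
  calc (i + 1) * ((i + 2) * catalan (i + 1))
      = (i + 1) * ((i + 1 + 1) * catalan (i + 1)) := by ring_nf
    _ = (i + 1) * (i + 1).centralBinom := by rw [h1]
    _ = 2 * (2 * i + 1) * i.centralBinom := Nat.succ_mul_centralBinom_succ i
    _ = 2 * (2 * i + 1) * ((i + 1) * catalan i) := by
        rw [succ_mul_catalan_eq_centralBinom]
    _ = (i + 1) * (2 * (2 * i + 1) * catalan i) := by ring

lemma Lnat (i s : ℕ) :
    (i + 2 - s) * (i + 1 - s) * (i + 2).choose s = (i + 2) * (s + 1) * (i + 1).choose (s + 1) := by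
  have h1 := Nat.choose_succ_right_eq (i + 2) s
  have h2 : (i + 2) * (i + 1).choose s = (i + 2).choose (s + 1) * (s + 1) :=
    Nat.add_one_mul_choose_eq (i + 1) s
  have h3 := Nat.choose_succ_right_eq (i + 1) s
  calc (i + 2 - s) * (i + 1 - s) * (i + 2).choose s
      = (i + 1 - s) * ((i + 2).choose s * (i + 2 - s)) := by ring
    _ = (i + 1 - s) * ((i + 2).choose (s+1) * (s+1)) := by rw [h1]
    _ = (i + 1 - s) * ((i + 2) * (i + 1).choose s) := by rw [h2]
    _ = (i + 2) * ((i + 1).choose s * (i + 1 - s)) := by ring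
    _ = (i + 2) * ((i + 1).choose (s + 1) * (s + 1)) := by rw [h3]
    _ = (i + 2) * (s + 1) * (i + 1).choose (s + 1) := by ring



lemma step {m i : ℕ} (him : i ≤ m) :
    ((m:ℤ)+1) * ((m:ℤ)+2) * ((i+1).choose (m+1-i) : ℤ) * catalan i
      = (2*(i:ℤ)+2-m) * (2*(i:ℤ)+1-m) * catalan (i+1) * ((i+2).choose (m-i) : ℤ)
        + (2*(i:ℤ)-m) * (2*(i:ℤ)-m-1) * catalan i * ((i+1).choose (m+1-i) : ℤ) := by
  have hcat : ((i:ℤ)+2) * (catalan (i+1) : ℤ) = 2*(2*(i:ℤ)+1) * (catalan i : ℤ) := by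
    exact_mod_cast catalan_ratio i
  apply mul_left_cancel₀ (show ((i:ℤ)+2) ≠ 0 by positivity)
  by_cases h : m ≤ 2*i
  · -- main case
    set s := m - i with hs
    have hm : m = i + s := by omega
    have hsi : s ≤ i := by omega
    have hLz : ((i:ℤ)+2-s) * ((i:ℤ)+1-s) * ((i+2).choose s : ℤ)
        = ((i:ℤ)+2) * ((s:ℤ)+1) * ((i+1).choose (s+1) : ℤ) := by
      have := Lnat i s
      have c1 : ((i + 2 - s : ℕ) : ℤ) = (i:ℤ)+2-s := by omega
      have c2 : ((i + 1 - s : ℕ) : ℤ) = (i:ℤ)+1-s := by omega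
      calc ((i:ℤ)+2-s) * ((i:ℤ)+1-s) * ((i+2).choose s : ℤ)
          = (((i+2-s) * (i+1-s) * (i+2).choose s : ℕ) : ℤ) := by push_cast [c1, c2]; ring
        _ = (((i + 2) * (s + 1) * (i + 1).choose (s + 1) : ℕ) : ℤ) := by rw [this]
        _ = ((i:ℤ)+2) * ((s:ℤ)+1) * ((i+1).choose (s+1) : ℤ) := by push_cast; ring
    have e2 : m + 1 - i = s + 1 := by omega
    rw [e2]
    have hmz : (m:ℤ) = (i:ℤ) + s := by exact_mod_cast congrArg (Nat.cast : ℕ → ℤ) hm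
    rw [hmz]
    linear_combination (-(((i:ℤ)+2-s) * ((i:ℤ)+1-s) * ((i+2).choose s : ℤ))) * hcat
      - (2*(2*(i:ℤ)+1) * (catalan i : ℤ)) * hLz
  · -- degenerate cases: b1 = 0
    have hb1 : (i+1).choose (m+1-i) = 0 := Nat.choose_eq_zero_of_lt (by omega)
    rw [hb1]
    rcases (show m = 2*i+1 ∨ m = 2*i+2 ∨ 2*i+2 < m by omega) with hm | hm | hm
    · have hmz : (m:ℤ) = 2*(i:ℤ)+1 := by exact_mod_cast congrArg (Nat.cast : ℕ → ℤ) hm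
      rw [hmz]; push_cast; ring
    · have hmz : (m:ℤ) = 2*(i:ℤ)+2 := by exact_mod_cast congrArg (Nat.cast : ℕ → ℤ) hm
      rw [hmz]; push_cast; ring
    · have hb2 : (i+2).choose (m-i) = 0 := Nat.choose_eq_zero_of_lt (by omega)
      rw [hb2]; push_cast; ring

noncomputable def H (m i : ℕ) : ℤ :=
  if i ≤ m + 1 then
    (-1)^(i+1) * (2*(i:ℤ) - m) * (2*(i:ℤ) - m - 1) * catalan i * ((i+1).choose (m+1-i) : ℤ)
  else 0

lemma Hstep (m i : ℕ) (h : i < m + 2) :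
    ((m:ℤ)+1) * ((m:ℤ)+2) * ((-1)^i * catalan i * ((i+1).choose (m+1-i) : ℤ))
      = H m (i+1) - H m i := by
  rcases (show i = m + 1 ∨ i ≤ m by omega) with rfl | him
  · rw [H, H, if_neg (by omega), if_pos (by omega)]
    rw [Nat.sub_self, Nat.choose_zero_right]
    push_cast
    ring
  · rw [H, H, if_pos (by omega), if_pos (by omega), Nat.succ_sub_succ]
    have hst := step him
    push_cast
    linear_combination ((-1:ℤ)^i) * hst

lemma Tzero (m : ℕ) :
    ∑ i ∈ range (m+2), (-1:ℤ)^i * catalan i * ((i+1).choose (m+1-i) : ℤ) = 0 := by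
  have key : ((m:ℤ)+1) * ((m:ℤ)+2)
      * (∑ i ∈ range (m+2), (-1:ℤ)^i * catalan i * ((i+1).choose (m+1-i) : ℤ))
      = H m (m+2) - H m 0 := by
    rw [Finset.mul_sum, ← Finset.sum_range_sub (H m)]
    exact Finset.sum_congr rfl fun i hi => Hstep m i (mem_range.mp hi)
  have h2 : H m (m+2) = 0 := by rw [H, if_neg (by omega)]
  have h0 : H m 0 = 0 := by
    rw [H, if_pos (by omega)]
    rcases m with _ | m'
    · norm_num
    · rw [show (m' + 1 + 1 - 0) = m' + 2 from rfl,
        Nat.choose_eq_zero_of_lt (by omega)]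
      push_cast; ring
  rw [h2, h0, sub_zero] at key
  have hne : ((m:ℤ)+1) * ((m:ℤ)+2) ≠ 0 := by positivity
  exact (mul_eq_zero.mp key).resolve_left hne

noncomputable def A (m : ℕ) : ℤ :=
  ∑ i ∈ range (m+1), (-1:ℤ)^i * catalan i * (i.choose (m-i) : ℤ)

lemma A_succ_add (m : ℕ) :
    A (m+1) + A m
      = ∑ i ∈ range (m+2), (-1:ℤ)^i * catalan i * ((i+1).choose (m+1-i) : ℤ) := by
  rw [A, A, Finset.sum_range_succ, Finset.sum_range_succ (n := m + 1)]
  rw [Nat.sub_self, Nat.choose_zero_right, Nat.choose_zero_right, add_right_comm]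
  congr 1
  rw [← Finset.sum_add_distrib]
  refine Finset.sum_congr rfl fun x hx => ?_
  have hxm : x ≤ m := by exact Nat.lt_succ_iff.mp (mem_range.mp hx)
  have hx' : m + 1 - x = (m - x) + 1 := by omega
  rw [hx', Nat.choose_succ_succ' x (m - x)]
  push_cast; ring

lemma A_eq (m : ℕ) : A m = (-1)^m := by
  induction m with
  | zero => simp [A]
  | succ m ih =>
    have h := A_succ_add m
    rw [Tzero, ih] at h
    rw [pow_succ]
    linarith

noncomputable def c (i m : ℕ) : ℤ :=
  if i ≤ m then (-1:ℤ)^i * catalan i * (i.choose (m-i) : ℤ) else 0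

lemma c_zero_lt {i m : ℕ} (h : m < i) : c i m = 0 := if_neg (by omega)

lemma c_zero_big {i m : ℕ} (h : 2*i < m) : c i m = 0 := by
  rw [c]
  split
  · rw [Nat.choose_eq_zero_of_lt (by omega)]; push_cast; ring
  · rfl

lemma crange (m K : ℕ) (h : m + 1 ≤ K) : ∑ i ∈ range K, c i m = (-1)^m := by
  rw [← A_eq m, A]
  rw [← Finset.sum_subset (Finset.range_subset_range.mpr h)
    (fun i _ hi => c_zero_lt (by simp only [mem_range] at hi ⊢; omega))]
  exact Finset.sum_congr rfl fun i hi => if_pos (by simp only [mem_range] at hi; omega)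

-- subset-of-subset identity
lemma sub2 (i j : ℕ) :
    ∑ k ∈ range (i+1), i.choose k * k.choose j = i.choose j * 2^(i-j) := by
  by_cases h : j ≤ i
  · rw [← Finset.sum_subset (s₁ := Finset.Ico j (i+1))
      (by intro x hx; simp only [mem_Ico, mem_range] at *; omega)
      (fun k _ hk => by
        have : k < j := by simp only [mem_Ico, mem_range] at *; omega
        rw [Nat.choose_eq_zero_of_lt this, mul_zero])]
    rw [Finset.sum_Ico_eq_sum_range]
    have hrw : ∀ t ∈ range (i + 1 - j), i.choose (j+t) * (j+t).choose j
        = i.choose j * (i-j).choose t := by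
      intro t ht
      have ht' : t < i + 1 - j := mem_range.mp ht
      rw [Nat.choose_mul (by omega)]
      congr 2
      omega
    rw [Finset.sum_congr rfl hrw, ← Finset.mul_sum]
    congr 1
    have : i + 1 - j = (i - j) + 1 := by omega
    rw [this, Nat.sum_range_choose]
  · have h1 : i.choose j = 0 := Nat.choose_eq_zero_of_lt (by omega)
    rw [h1, zero_mul]
    apply Finset.sum_eq_zero
    intro k hk
    rw [Nat.choose_eq_zero_of_lt (show k < j by simp only [mem_range] at hk; omega), mul_zero]

-- Vandermonde reduction per i
lemma inner (n i : ℕ) :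
    ∑ k ∈ range (i+1), i.choose k * (n + k).choose (2*i)
      = ∑ j ∈ range (i+1), i.choose j * 2^(i-j) * n.choose (2*i - j) := by
  have hV : ∀ k, (n + k).choose (2*i)
      = ∑ j ∈ range (2*i+1), k.choose j * n.choose (2*i - j) := by
    intro k
    rw [add_comm n k, Nat.add_choose_eq]
    exact Finset.Nat.sum_antidiagonal_eq_sum_range_succ
      (fun x y => k.choose x * n.choose y) (2*i)
  calc ∑ k ∈ range (i+1), i.choose k * (n + k).choose (2*i)
      = ∑ k ∈ range (i+1), ∑ j ∈ range (2*i+1),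
          i.choose k * (k.choose j * n.choose (2*i - j)) := by
        refine Finset.sum_congr rfl fun k _ => ?_
        rw [hV k, Finset.mul_sum]
    _ = ∑ j ∈ range (2*i+1), (∑ k ∈ range (i+1), i.choose k * k.choose j)
          * n.choose (2*i - j) := by
        rw [Finset.sum_comm]
        refine Finset.sum_congr rfl fun j _ => ?_
        rw [Finset.sum_mul]
        refine Finset.sum_congr rfl fun k _ => ?_
        ring
    _ = ∑ j ∈ range (2*i+1), i.choose j * 2^(i-j) * n.choose (2*i - j) := by
        refine Finset.sum_congr rfl fun j _ => ?_
        rw [sub2]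
    _ = ∑ j ∈ range (i+1), i.choose j * 2^(i-j) * n.choose (2*i - j) := by
        refine (Finset.sum_subset (Finset.range_subset_range.mpr (by omega)) ?_).symm
        intro j _ hj
        have : i < j := by simp only [mem_range] at hj; omega
        rw [Nat.choose_eq_zero_of_lt this, zero_mul, zero_mul]


noncomputable def g (n i m : ℕ) : ℤ := (n.choose m : ℤ) * 2^m * c i m

lemma gMotzkinU_eq (n i : ℕ) :
    gMotzkinU n i = ∑ j ∈ range (i+1), i.choose j * 2^(i-j) * n.choose (2*i-j) * catalan i := by
  rw [gMotzkinU, ← Finset.sum_mul, inner, Finset.sum_mul]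

lemma gval (n : ℕ) {i j : ℕ} (hj : j ≤ i) :
    (-2:ℤ)^i * ((i.choose j * 2^(i-j) * n.choose (2*i-j) * catalan i : ℕ) : ℤ)
      = g n i (2*i-j) := by
  have h1 : 2*i - j - i = i - j := by omega
  have h2 : i.choose (i-j) = i.choose j := Nat.choose_symm hj
  have h3 : (-2:ℤ)^i = (-1)^i * 2^i := by
    rw [show (-2:ℤ) = -1 * 2 by norm_num, mul_pow]
  have h4 : (2:ℤ)^i * 2^(i-j) = 2^(2*i-j) := by rw [← pow_add]; congr 1; omega
  rw [g, c, if_pos (by omega), h1, h2, h3, ← h4]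
  push_cast; ring

lemma reindex (n i : ℕ) (hin : i ≤ n) :
    ∑ j ∈ range (i+1), g n i (2*i-j) = ∑ m ∈ range (2*n+2), g n i m := by
  have hs1 : ∑ j ∈ range (i+1), g n i (2*i-j)
      = ∑ t ∈ range (i+1), g n i (i+t) := by
    rw [← Finset.sum_range_reflect (fun t => g n i (i+t)) (i+1)]
    refine Finset.sum_congr rfl fun j hj => ?_
    have : i + (i + 1 - 1 - j) = 2*i - j := by
      have := mem_range.mp hj; omega
    rw [this]
  have hs2 : ∑ m ∈ Finset.Ico i (2*i+1), g n i m
      = ∑ t ∈ range (i+1), g n i (i+t) := by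
    rw [Finset.sum_Ico_eq_sum_range, show 2*i+1-i = i+1 by omega]
  rw [hs1, ← hs2]
  refine Finset.sum_subset ?_ ?_
  · intro m hm
    simp only [mem_Ico, mem_range] at *
    omega
  · intro m _ hm
    simp only [mem_Ico, not_and, not_lt, mem_range] at hm
    rw [g]
    rcases lt_or_ge m i with h | h
    · rw [c_zero_lt h, mul_zero]
    · rw [c_zero_big (by omega), mul_zero]

theorem main (n : ℕ) :
    ∑ i ∈ Finset.range (n + 1), (-2 : ℤ) ^ i * gMotzkinU n i = (-1) ^ n := by
  calc ∑ i ∈ Finset.range (n + 1), (-2 : ℤ) ^ i * gMotzkinU n i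
      = ∑ i ∈ range (n+1), ∑ j ∈ range (i+1), g n i (2*i-j) := by
        refine Finset.sum_congr rfl fun i _ => ?_
        rw [gMotzkinU_eq]
        push_cast [Finset.mul_sum]
        refine Finset.sum_congr rfl fun j hj => ?_
        have := gval n (show j ≤ i from by have := mem_range.mp hj; omega)
        push_cast at this ⊢
        exact this
    _ = ∑ i ∈ range (n+1), ∑ m ∈ range (2*n+2), g n i m := by
        exact Finset.sum_congr rfl fun i hi =>
          reindex n i (by have := mem_range.mp hi; omega)
    _ = ∑ i ∈ range (2*n+2), ∑ m ∈ range (2*n+2), g n i m := by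
        refine Finset.sum_subset (Finset.range_subset_range.mpr (by omega)) ?_
        intro i _ hi
        have hni : n < i := by simp only [mem_range] at hi; omega
        refine Finset.sum_eq_zero fun m _ => ?_
        rw [g]
        rcases lt_or_ge m i with h | h
        · rw [c_zero_lt h, mul_zero]
        · rw [Nat.choose_eq_zero_of_lt (by omega)]
          push_cast; ring
    _ = ∑ m ∈ range (2*n+2), (n.choose m : ℤ) * 2^m * (-1)^m := by
        rw [Finset.sum_comm]
        refine Finset.sum_congr rfl fun m hm => ?_
        have hm' : m + 1 ≤ 2*n+2 := by have := mem_range.mp hm; omega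
        rw [← crange m (2*n+2) hm', Finset.mul_sum]
        rfl
    _ = ∑ m ∈ range (n+1), (-2:ℤ)^m * 1^(n-m) * (n.choose m : ℤ) := by
        rw [← Finset.sum_subset (Finset.range_subset_range.mpr (by omega : n+1 ≤ 2*n+2))
          (fun m _ hm => by
            rw [Nat.choose_eq_zero_of_lt (by simp only [mem_range] at hm ⊢; omega)]
            push_cast; ring)]
        refine Finset.sum_congr rfl fun m _ => ?_
        rw [show (-2:ℤ) = -1 * 2 by norm_num, mul_pow, one_pow]
        ring
    _ = ((-2 : ℤ) + 1)^n := (add_pow (-2:ℤ) 1 n).symm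
    _ = (-1)^n := by norm_num


end GMAux

/-- For every `n`, `∑_{i=0}^{n} (-2)^i * U_{n,i} = (-1)^n`. -/
theorem alternating_two_pow_sum_gMotzkinU (n : ℕ) :
    ∑ i ∈ Finset.range (n + 1), (-2 : ℤ) ^ i * gMotzkinU n i = (-1) ^ n :=
  GMAux.main n
end

section
/- For all natural numbers n and m, ∑_{i=0}^{n} (-1)^{n-i} * C(n, i) * r_{n+m+i, m+i} = 4^n, where r_{n,i} = ∑_{j=i}^{n} (i/(2j-i)) * C(2j-i, j) * ∑_{k=0}^{n-j} C(j, k) * C(n+j-k, n-j-k) is the number of G-Motzkin paths of length n with i return steps. -/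
/-- `gMotzkinRet n i` is the number of G-Motzkin paths of length `n` with `i`
return steps, given by the closed form
`r_{n,i} = ∑_{j=i}^{n} (i/(2j-i)) C(2j-i, j) ∑_{k=0}^{n-j} C(j, k) C(n+j-k, n-j-k)`,
where for `i = 0` the coefficient `(i/(2j-i)) C(2j-i, j)`, being the coefficient
of `x^j` in `(x C(x))^i = 1`, is interpreted as `1` if `j = 0` and `0` otherwise. -/
def gMotzkinRet (n i : ℕ) : ℚ :=
  ∑ j ∈ Finset.Icc i n,
    (if i = 0 then (if j = 0 then (1 : ℚ) else 0)
      else (i : ℚ) / (2 * j - i) * ((2 * j - i).choose j)) *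
    ∑ k ∈ Finset.range (n - j + 1),
      (j.choose k : ℚ) * ((n + j - k).choose (n - j - k))

open Finset Polynomial


/-- `∏_{t<d} (N - t) = d! * C(N,d)` in ℚ. -/
lemma prod_cast_sub_eq (N d : ℕ) :
    ∏ t ∈ range d, ((N : ℚ) - t) = (d.factorial : ℚ) * N.choose d := by
  rcases le_or_gt d N with h | h
  · have h1 : ∀ t ∈ range d, ((N : ℚ) - t) = ((N - t : ℕ) : ℚ) := by
      intro t ht
      have : t ≤ N := le_trans (le_of_lt (mem_range.mp ht)) h
      push_cast [this]; ring
    rw [Finset.prod_congr rfl h1, ← Nat.cast_prod, ← Nat.descFactorial_eq_prod_range,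
      Nat.descFactorial_eq_factorial_mul_choose]
    push_cast; ring
  · rw [Nat.choose_eq_zero_of_lt h, Finset.prod_eq_zero (mem_range.mpr h) (by simp)]
    simp

/-- Product of monic linear factors. -/
lemma coeff_of_monic {p : ℚ[X]} {n : ℕ} (h : p.Monic) (hn : p.natDegree = n) :
    p.coeff n = 1 := by
  rw [← hn]; exact h.coeff_natDegree

noncomputable def linProd (v : ℕ → ℚ) (d : ℕ) : ℚ[X] := ∏ t ∈ range d, (X + C (v t))

lemma monic_linProd (v : ℕ → ℚ) (d : ℕ) : (linProd v d).Monic :=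
  monic_prod_of_monic _ _ fun t _ => monic_X_add_C (v t)

lemma natDegree_linProd (v : ℕ → ℚ) (d : ℕ) : (linProd v d).natDegree = d := by
  rw [linProd, natDegree_prod_of_monic _ _ fun t _ => monic_X_add_C (v t)]
  simp [natDegree_X_add_C]

lemma eval_linProd (v : ℕ → ℚ) (d : ℕ) (x : ℚ) :
    (linProd v d).eval x = ∏ t ∈ range d, (x + v t) := by
  simp [linProd, eval_prod]

noncomputable def termPoly (n s k : ℕ) : ℚ[X] :=
  C ((1 / (s.factorial : ℚ)) * (1 / (k.factorial : ℚ)) *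
      (2 ^ (n - s - k) / ((n - s - k).factorial : ℚ))) *
    (linProd (fun t => if t = 0 then 0 else 2 * (s : ℚ) - t) s *
      linProd (fun t => (s : ℚ) - t) k *
      linProd (fun t => (((n + s - k : ℕ) : ℚ) - t) / 2) (n - s - k))

noncomputable def retPoly (n : ℕ) : ℚ[X] :=
  ∑ s ∈ range (n + 1), ∑ k ∈ range (n - s + 1), termPoly n s k

lemma monic_tripleProd (n s k : ℕ) :
    (linProd (fun t => if t = 0 then 0 else 2 * (s : ℚ) - t) s *
      linProd (fun t => (s : ℚ) - t) k *
      linProd (fun t => (((n + s - k : ℕ) : ℚ) - t) / 2) (n - s - k)).Monic :=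
  ((monic_linProd _ _).mul (monic_linProd _ _)).mul (monic_linProd _ _)

lemma natDegree_tripleProd (n s k : ℕ) (hs : s ≤ n) (hk : k ≤ n - s) :
    (linProd (fun t => if t = 0 then 0 else 2 * (s : ℚ) - t) s *
      linProd (fun t => (s : ℚ) - t) k *
      linProd (fun t => (((n + s - k : ℕ) : ℚ) - t) / 2) (n - s - k)).natDegree = n := by
  rw [Monic.natDegree_mul ((monic_linProd _ _).mul (monic_linProd _ _)) (monic_linProd _ _),
    Monic.natDegree_mul (monic_linProd _ _) (monic_linProd _ _),
    natDegree_linProd, natDegree_linProd, natDegree_linProd]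
  omega

lemma natDegree_termPoly_le (n s k : ℕ) (hs : s ≤ n) (hk : k ≤ n - s) :
    (termPoly n s k).natDegree ≤ n :=
  le_trans (natDegree_C_mul_le _ _) (le_of_eq (natDegree_tripleProd n s k hs hk))

lemma natDegree_retPoly_le (n : ℕ) : (retPoly n).natDegree ≤ n :=
  natDegree_sum_le_of_forall_le _ _ fun s hs =>
    natDegree_sum_le_of_forall_le _ _ fun k hk =>
      natDegree_termPoly_le n s k (by have := mem_range.mp hs; omega)
        (by have := mem_range.mp hk; omega)

lemma coeff_retPoly (n : ℕ) : (retPoly n).coeff n =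
    ∑ s ∈ range (n + 1), ∑ k ∈ range (n - s + 1),
      (1 / (s.factorial : ℚ)) * (1 / (k.factorial : ℚ)) *
        (2 ^ (n - s - k) / ((n - s - k).factorial : ℚ)) := by
  rw [retPoly, finset_sum_coeff]
  refine Finset.sum_congr rfl fun s hs => ?_
  rw [finset_sum_coeff]
  refine Finset.sum_congr rfl fun k hk => ?_
  have hs' : s ≤ n := by have := mem_range.mp hs; omega
  have hk' : k ≤ n - s := by have := mem_range.mp hk; omega
  rw [termPoly, coeff_C_mul]
  have h1 := (monic_tripleProd n s k)
  have h2 := natDegree_tripleProd n s k hs' hk'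
  rw [coeff_of_monic h1 h2, mul_one]

lemma prodB (M s : ℕ) :
    (∏ t ∈ range s, ((M : ℚ) + if t = 0 then 0 else 2 * (s : ℚ) - t)) * ((M : ℚ) + 2 * s)
      = (M : ℚ) * ∏ t ∈ range s, ((M : ℚ) + 2 * (s : ℚ) - t) := by
  cases s with
  | zero => simp
  | succ s' =>
    rw [Finset.prod_range_succ' (fun t => ((M : ℚ) + if t = 0 then 0 else 2 * ((s' + 1 : ℕ) : ℚ) - t)) s',
      Finset.prod_range_succ' (fun t => ((M : ℚ) + 2 * ((s' + 1 : ℕ) : ℚ) - t)) s']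
    simp only [if_pos rfl, Nat.cast_zero]
    rw [Finset.prod_congr rfl (fun t _ => show
      (M : ℚ) + (if t + 1 = 0 then 0 else 2 * ((s' + 1 : ℕ) : ℚ) - (t + 1 : ℕ))
        = (M : ℚ) + 2 * ((s' + 1 : ℕ) : ℚ) - ((t + 1 : ℕ) : ℚ) by
      rw [if_neg (Nat.succ_ne_zero t)]; push_cast; ring)]
    push_cast
    ring

lemma eval_B (M s : ℕ) :
    (1 / (s.factorial : ℚ)) * ∏ t ∈ range s, ((M : ℚ) + if t = 0 then 0 else 2 * (s : ℚ) - t)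
      = if M = 0 then (if s = 0 then (1 : ℚ) else 0)
        else (M : ℚ) / ((M : ℚ) + 2 * s) * ((M + 2 * s).choose (M + s)) := by
  by_cases hM : M = 0
  · subst hM
    cases s with
    | zero => simp
    | succ s' =>
      rw [if_pos rfl, if_neg (Nat.succ_ne_zero s'),
        Finset.prod_eq_zero (mem_range.mpr (Nat.succ_pos s'))]
      · simp
      · simp
  · rw [if_neg hM]
    have hsym : (M + 2 * s).choose (M + s) = (M + 2 * s).choose s := by
      rw [← Nat.choose_symm (show s ≤ M + 2 * s by omega)]
      congr 1; omega
    have hd : ∏ t ∈ range s, (((M + 2 * s : ℕ) : ℚ) - t)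
        = (s.factorial : ℚ) * ((M + 2 * s).choose s) := prod_cast_sub_eq _ _
    have hcast : ∀ t ∈ range s, (((M + 2 * s : ℕ) : ℚ) - t) = ((M : ℚ) + 2 * (s : ℚ) - t) := by
      intro t _; push_cast; ring
    rw [Finset.prod_congr rfl hcast] at hd
    have hpos : ((M : ℚ) + 2 * s) ≠ 0 := by
      have h1 : (1 : ℚ) ≤ (M : ℚ) := by exact_mod_cast Nat.one_le_iff_ne_zero.mpr hM
      have h2 : (0 : ℚ) ≤ 2 * (s : ℚ) := by positivity
      nlinarith
    have hfac : (s.factorial : ℚ) ≠ 0 := by exact_mod_cast s.factorial_ne_zero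
    have key := prodB M s
    rw [hd] at key
    rw [hsym, div_mul_eq_mul_div, div_mul_eq_mul_div, div_eq_div_iff hfac hpos]
    linear_combination key

lemma eval_Q (M s k : ℕ) :
    (1 / (k.factorial : ℚ)) * ∏ t ∈ range k, ((M : ℚ) + ((s : ℚ) - t))
      = ((M + s).choose k : ℚ) := by
  have hcast : ∀ t ∈ range k, ((M : ℚ) + ((s : ℚ) - t)) = (((M + s : ℕ) : ℚ) - t) := by
    intro t _; push_cast; ring
  rw [Finset.prod_congr rfl hcast, prod_cast_sub_eq]
  have hfac : (k.factorial : ℚ) ≠ 0 := by exact_mod_cast k.factorial_ne_zero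
  field_simp

lemma eval_R (M c d : ℕ) :
    ((2 : ℚ) ^ d / (d.factorial : ℚ)) * ∏ t ∈ range d, ((M : ℚ) + ((c : ℚ) - t) / 2)
      = ((2 * M + c).choose d : ℚ) := by
  have h2 : ∏ t ∈ range d, (((2 * M + c : ℕ) : ℚ) - t)
      = (2 : ℚ) ^ d * ∏ t ∈ range d, ((M : ℚ) + ((c : ℚ) - t) / 2) := by
    have e : ∏ t ∈ range d, (((2 * M + c : ℕ) : ℚ) - t)
        = ∏ t ∈ range d, (2 * ((M : ℚ) + ((c : ℚ) - t) / 2)) :=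
      Finset.prod_congr rfl fun t _ => by push_cast; ring
    rw [e, Finset.prod_mul_distrib, Finset.prod_const, Finset.card_range]
  have hfac : (d.factorial : ℚ) ≠ 0 := by exact_mod_cast d.factorial_ne_zero
  have h3 := prod_cast_sub_eq (2 * M + c) d
  rw [div_mul_eq_mul_div, div_eq_iff hfac]
  linear_combination h3 - h2

lemma eval_termPoly (n s k M : ℕ) :
    (termPoly n s k).eval (M : ℚ) =
      (if M = 0 then (if s = 0 then (1 : ℚ) else 0)
        else (M : ℚ) / ((M : ℚ) + 2 * s) * ((M + 2 * s).choose (M + s)))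
      * (((M + s).choose k : ℚ) * ((2 * M + (n + s - k)).choose (n - s - k) : ℚ)) := by
  rw [termPoly, eval_mul, eval_C, eval_mul, eval_mul, eval_linProd, eval_linProd, eval_linProd,
    ← eval_B M s, ← eval_Q M s k, ← eval_R M (n + s - k) (n - s - k)]
  ring

lemma gMotzkinRet_eq_eval (n M : ℕ) :
    gMotzkinRet (n + M) M = (retPoly n).eval (M : ℚ) := by
  rw [gMotzkinRet, retPoly, eval_finset_sum, ← Finset.Ico_add_one_right_eq_Icc,
    Finset.sum_Ico_eq_sum_range]
  have hrange : n + M + 1 - M = n + 1 := by omega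
  rw [hrange]
  refine Finset.sum_congr rfl fun s hs => ?_
  have hs' : s ≤ n := by have := mem_range.mp hs; omega
  rw [eval_finset_sum]
  have e1 : n + M - (M + s) = n - s := by omega
  rw [e1, Finset.mul_sum]
  refine Finset.sum_congr rfl fun k hk => ?_
  have hk' : k ≤ n - s := by have := mem_range.mp hk; omega
  rw [eval_termPoly n s k M]
  have e2 : n + M + (M + s) - k = 2 * M + (n + s - k) := by omega
  have e3 : n + M - (M + s) - k = n - s - k := by omega
  rw [e2]
  congr 1
  · by_cases hM : M = 0
    · subst hM
      simp only [if_pos rfl, Nat.zero_add, Nat.add_eq_zero]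
      by_cases hsz : s = 0 <;> simp [hsz]
    · have hM0 : M + s ≠ 0 := by omega
      rw [if_neg hM0, if_neg hM]
      have e4 : 2 * (M + s) - M = M + 2 * s := by omega
      rw [e4]
      have e5 : 2 * ((M + s : ℕ) : ℚ) - (M : ℚ) = (M : ℚ) + 2 * (s : ℚ) := by
        push_cast; ring
      rw [e5, if_neg hM]

lemma pascal_alt (n : ℕ) (f : ℕ → ℚ) :
    ∑ i ∈ range (n + 2), (-1 : ℚ) ^ i * ((n + 1).choose i) * f i
      = ∑ i ∈ range (n + 1), (-1 : ℚ) ^ i * (n.choose i) * f i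
        - ∑ i ∈ range (n + 1), (-1 : ℚ) ^ i * (n.choose i) * f (i + 1) := by
  rw [Finset.sum_range_succ' (fun i => (-1 : ℚ) ^ i * ((n + 1).choose i) * f i) (n + 1)]
  have step : ∀ i, (-1 : ℚ) ^ (i + 1) * ((n + 1).choose (i + 1)) * f (i + 1)
      = -((-1 : ℚ) ^ i * (n.choose i) * f (i + 1))
        - (-1 : ℚ) ^ i * (n.choose (i + 1)) * f (i + 1) := by
    intro i
    rw [Nat.choose_succ_succ]
    push_cast
    ring
  rw [Finset.sum_congr rfl fun i _ => step i, Finset.sum_sub_distrib, Finset.sum_neg_distrib]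
  have h0 : ∑ i ∈ range (n + 1), (-1 : ℚ) ^ i * (n.choose i) * f i
      = (-1 : ℚ) ^ 0 * (n.choose 0) * f 0
        + ∑ i ∈ range n, (-1 : ℚ) ^ (i + 1) * (n.choose (i + 1)) * f (i + 1) := by
    rw [Finset.sum_range_succ' (fun i => (-1 : ℚ) ^ i * (n.choose i) * f i) n]
    ring
  have h1 : ∑ i ∈ range (n + 1), (-1 : ℚ) ^ i * (n.choose (i + 1)) * f (i + 1)
      = ∑ i ∈ range n, (-1 : ℚ) ^ i * (n.choose (i + 1)) * f (i + 1) := by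
    rw [Finset.sum_range_succ]
    simp [Nat.choose_succ_self]
  rw [h0, h1]
  have h2 : ∑ i ∈ range n, (-1 : ℚ) ^ (i + 1) * (n.choose (i + 1)) * f (i + 1)
      = -∑ i ∈ range n, (-1 : ℚ) ^ i * (n.choose (i + 1)) * f (i + 1) := by
    rw [← Finset.sum_neg_distrib]
    refine Finset.sum_congr rfl fun i _ => ?_
    ring
  rw [h2]
  simp
  ring

lemma alt_sum_pow : ∀ n : ℕ, ∀ j ≤ n, ∀ x : ℚ,
    ∑ i ∈ range (n + 1), (-1 : ℚ) ^ i * (n.choose i) * (x + i) ^ j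
      = if j = n then (-1 : ℚ) ^ n * n.factorial else 0 := by
  intro n
  induction n with
  | zero =>
    intro j hj x
    interval_cases j
    simp
  | succ n ih =>
    intro j hj x
    rw [pascal_alt n (fun i => (x + i) ^ j)]
    have expand : ∀ i : ℕ, (x + (i : ℚ)) ^ j - (x + (i : ℚ) + 1) ^ j
        = -∑ t ∈ range j, (j.choose t : ℚ) * (x + i) ^ t := by
      intro i
      have hb := add_pow (x + (i : ℚ)) 1 j
      rw [Finset.sum_range_succ] at hb
      simp only [one_pow, mul_one, Nat.choose_self, Nat.cast_one] at hb
      rw [hb, Finset.sum_congr rfl fun t _ => show (x + (i : ℚ)) ^ t * (j.choose t : ℚ)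
        = (j.choose t : ℚ) * (x + i) ^ t from mul_comm _ _]
      ring
    rw [← Finset.sum_sub_distrib]
    have inner : ∀ i ∈ range (n + 1),
        (-1 : ℚ) ^ i * (n.choose i) * (x + i) ^ j
          - (-1 : ℚ) ^ i * (n.choose i) * (x + ((i + 1 : ℕ) : ℚ)) ^ j
        = ∑ t ∈ range j, (j.choose t : ℚ) * (-((-1 : ℚ) ^ i * (n.choose i) * (x + i) ^ t)) := by
      intro i _
      have e := expand i
      have c1 : (x + ((i + 1 : ℕ) : ℚ)) = (x + (i : ℚ) + 1) := by push_cast; ring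
      rw [c1, show (-1 : ℚ) ^ i * (n.choose i) * (x + i) ^ j
          - (-1 : ℚ) ^ i * (n.choose i) * (x + (i : ℚ) + 1) ^ j
          = (-1 : ℚ) ^ i * (n.choose i) * ((x + (i : ℚ)) ^ j - (x + (i : ℚ) + 1) ^ j) from by ring,
        e, mul_neg, Finset.mul_sum, ← Finset.sum_neg_distrib]
      exact Finset.sum_congr rfl fun t _ => by ring
    rw [Finset.sum_congr rfl inner, Finset.sum_comm]
    have hts : ∀ t ∈ range j,
        ∑ i ∈ range (n + 1), (j.choose t : ℚ) * (-((-1 : ℚ) ^ i * (n.choose i) * (x + i) ^ t))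
          = (j.choose t : ℚ) * (-(if t = n then (-1 : ℚ) ^ n * n.factorial else 0)) := by
      intro t ht
      have htn : t ≤ n := by have := mem_range.mp ht; omega
      rw [← Finset.mul_sum, Finset.sum_neg_distrib, ih t htn x]
    rw [Finset.sum_congr rfl hts]
    by_cases hjn : j = n + 1
    · subst hjn
      rw [Finset.sum_eq_single_of_mem n (mem_range.mpr (Nat.lt_succ_self n))
        (fun b _ hb => by rw [if_neg hb]; ring)]
      rw [if_pos rfl, if_pos rfl, Nat.choose_succ_self_right, Nat.factorial_succ]
      push_cast
      ring
    · have hjn' : j ≤ n := by omega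
      rw [if_neg hjn]
      rw [Finset.sum_congr rfl (fun t ht => show
          (j.choose t : ℚ) * (-(if t = n then (-1 : ℚ) ^ n * n.factorial else 0)) = 0 from by
        have : t < j := mem_range.mp ht
        rw [if_neg (by omega)]; ring)]
      simp

lemma sum4 (n : ℕ) :
    (n.factorial : ℚ) * ∑ s ∈ range (n + 1), ∑ k ∈ range (n - s + 1),
      (1 / (s.factorial : ℚ)) * (1 / (k.factorial : ℚ)) *
        (2 ^ (n - s - k) / ((n - s - k).factorial : ℚ)) = 4 ^ n := by
  rw [Finset.mul_sum]
  have hout : ∀ s ∈ range (n + 1),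
      (n.factorial : ℚ) * ∑ k ∈ range (n - s + 1),
        (1 / (s.factorial : ℚ)) * (1 / (k.factorial : ℚ)) *
          (2 ^ (n - s - k) / ((n - s - k).factorial : ℚ))
      = (n.choose s : ℚ) * 3 ^ (n - s) := by
    intro s hs
    have hsn : s ≤ n := by have := mem_range.mp hs; omega
    have h3 : (3 : ℚ) ^ (n - s) = ((1 : ℚ) + 2) ^ (n - s) := by norm_num
    rw [h3, add_pow, Finset.mul_sum, Finset.mul_sum]
    refine Finset.sum_congr rfl fun k hk => ?_
    have hkn : k ≤ n - s := by have := mem_range.mp hk; omega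
    rw [Nat.cast_choose ℚ hsn, Nat.cast_choose ℚ hkn]
    have f1 : (n.factorial : ℚ) ≠ 0 := by exact_mod_cast n.factorial_ne_zero
    have f2 : (s.factorial : ℚ) ≠ 0 := by exact_mod_cast s.factorial_ne_zero
    have f3 : (k.factorial : ℚ) ≠ 0 := by exact_mod_cast k.factorial_ne_zero
    have f4 : ((n - s).factorial : ℚ) ≠ 0 := by exact_mod_cast (n - s).factorial_ne_zero
    have f5 : ((n - s - k).factorial : ℚ) ≠ 0 := by exact_mod_cast (n - s - k).factorial_ne_zero
    rw [one_pow]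
    field_simp
  rw [Finset.sum_congr rfl hout]
  have h4 : (4 : ℚ) ^ n = ((1 : ℚ) + 3) ^ n := by norm_num
  rw [h4, add_pow]
  refine Finset.sum_congr rfl fun s hs => ?_
  rw [one_pow]
  ring

/-- For all `n m`, `∑_{i=0}^{n} (-1)^{n-i} C(n, i) r_{n+m+i, m+i} = 4^n`. -/
theorem alternating_sum_gMotzkinRet (n m : ℕ) :
    ∑ i ∈ Finset.range (n + 1),
      (-1 : ℚ) ^ (n - i) * n.choose i * gMotzkinRet (n + m + i) (m + i) =
      4 ^ n := by
  have h1 : ∀ i ∈ range (n + 1),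
      (-1 : ℚ) ^ (n - i) * n.choose i * gMotzkinRet (n + m + i) (m + i)
        = (-1 : ℚ) ^ n * ((-1 : ℚ) ^ i * (n.choose i) *
            ∑ j ∈ range (n + 1), (retPoly n).coeff j * ((m : ℚ) + i) ^ j) := by
    intro i hi
    have hin : i ≤ n := by have := mem_range.mp hi; omega
    have hg : gMotzkinRet (n + m + i) (m + i) = (retPoly n).eval (((m + i : ℕ)) : ℚ) := by
      rw [show n + m + i = n + (m + i) from by omega]
      exact gMotzkinRet_eq_eval n (m + i)
    have hdeg : (retPoly n).natDegree < n + 1 := Nat.lt_succ_of_le (natDegree_retPoly_le n)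
    have he : (retPoly n).eval (((m + i : ℕ)) : ℚ)
        = ∑ j ∈ range (n + 1), (retPoly n).coeff j * ((m : ℚ) + i) ^ j := by
      rw [eval_eq_sum_range' hdeg]
      push_cast
      rfl
    have h2 : (-1 : ℚ) ^ i * (-1 : ℚ) ^ i = 1 := by
      rw [← mul_pow]; norm_num
    have hsign : (-1 : ℚ) ^ (n - i) = (-1 : ℚ) ^ n * (-1 : ℚ) ^ i :=
      calc (-1 : ℚ) ^ (n - i) = (-1 : ℚ) ^ (n - i) * ((-1 : ℚ) ^ i * (-1 : ℚ) ^ i) := by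
            rw [h2, mul_one]
        _ = ((-1 : ℚ) ^ (n - i) * (-1 : ℚ) ^ i) * (-1 : ℚ) ^ i := by ring
        _ = (-1 : ℚ) ^ n * (-1 : ℚ) ^ i := by
            rw [← pow_add, show n - i + i = n from by omega]
    rw [hg, he, hsign]
    ring
  rw [Finset.sum_congr rfl h1, ← Finset.mul_sum]
  have h3 : ∀ i ∈ range (n + 1),
      (-1 : ℚ) ^ i * (n.choose i) * ∑ j ∈ range (n + 1), (retPoly n).coeff j * ((m : ℚ) + i) ^ j
        = ∑ j ∈ range (n + 1), (retPoly n).coeff j *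
            ((-1 : ℚ) ^ i * (n.choose i) * ((m : ℚ) + i) ^ j) := by
    intro i _
    rw [Finset.mul_sum]
    exact Finset.sum_congr rfl fun j _ => by ring
  rw [Finset.sum_congr rfl h3, Finset.sum_comm]
  have h5 : ∀ j ∈ range (n + 1),
      ∑ i ∈ range (n + 1), (retPoly n).coeff j *
          ((-1 : ℚ) ^ i * (n.choose i) * ((m : ℚ) + i) ^ j)
        = (retPoly n).coeff j * (if j = n then (-1 : ℚ) ^ n * n.factorial else 0) := by
    intro j hj
    have hjn : j ≤ n := by have := mem_range.mp hj; omega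
    rw [← Finset.mul_sum, alt_sum_pow n j hjn (m : ℚ)]
  rw [Finset.sum_congr rfl h5,
    Finset.sum_eq_single_of_mem n (mem_range.mpr (Nat.lt_succ_self n))
      (fun b _ hb => by rw [if_neg hb]; ring), if_pos rfl]
  have h6 : (-1 : ℚ) ^ n * ((retPoly n).coeff n * ((-1 : ℚ) ^ n * n.factorial))
      = (n.factorial : ℚ) * (retPoly n).coeff n := by
    have : (-1 : ℚ) ^ n * (-1 : ℚ) ^ n = 1 := by rw [← mul_pow]; norm_num
    calc (-1 : ℚ) ^ n * ((retPoly n).coeff n * ((-1 : ℚ) ^ n * n.factorial))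
        = ((-1 : ℚ) ^ n * (-1 : ℚ) ^ n) * ((retPoly n).coeff n * n.factorial) := by ring
      _ = (n.factorial : ℚ) * (retPoly n).coeff n := by rw [this]; ring
  rw [h6, coeff_retPoly, sum4]
end

section
/- For all natural numbers n and m, ∑_{i=0}^{2n} (-1)^i * C(2n, i) * L^{ud}_{n+2m+2i, m+i} = C_n, where L^{ud}_{n,i} = ∑_{k=0}^{n-2i} ∑_{j=0}^{⌊(n-k-2i)/3⌋} (-1)^j * C(2k+i, i) * C(2k+i+j, j) * C(3k+i+1, n-k-2i-3j) * C_k is the number of G-Motzkin paths of length n with i ud-peaks, and C_k is the k-th Catalan number. -/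
open Finset Polynomial

/-- The alternating binomial sum operator. -/
def altS (N : ℕ) (f : ℕ → ℚ) : ℚ :=
  ∑ i ∈ Finset.range (N + 1), (-1 : ℚ) ^ i * (N.choose i) * f i

lemma altS_succ (N : ℕ) (f : ℕ → ℚ) :
    altS (N + 1) f = altS N f - altS N (fun i => f (i + 1)) := by
  unfold altS
  rw [Finset.sum_range_succ' _ (N + 1)]
  have h1 : ∀ i ∈ Finset.range (N + 1),
      (-1 : ℚ) ^ (i+1) * ((N+1).choose (i+1)) * f (i+1)
      = -((-1:ℚ)^i * (N.choose i) * f (i+1)) + (-((-1:ℚ)^i * (N.choose (i+1)) * f (i+1))) := by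
    intro i _
    rw [Nat.choose_succ_succ]
    push_cast
    ring
  rw [Finset.sum_congr rfl h1, Finset.sum_add_distrib]
  have h2 : ∑ i ∈ Finset.range (N + 1), -((-1:ℚ)^i * (N.choose (i+1)) * f (i+1))
      = ∑ i ∈ Finset.range N, -((-1:ℚ)^i * (N.choose (i+1)) * f (i+1)) := by
    rw [Finset.sum_range_succ, Nat.choose_succ_self]
    simp
  have h3 : ∑ i ∈ Finset.range (N+1), (-1:ℚ)^i * (N.choose i) * f i
      = ∑ i ∈ Finset.range N, (-1:ℚ)^(i+1) * (N.choose (i+1)) * f (i+1)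
        + (-1:ℚ)^0 * (N.choose 0) * f 0 := Finset.sum_range_succ' _ N
  rw [h2, h3]
  have h4 : ∑ i ∈ Finset.range N, -((-1:ℚ)^i * (N.choose (i+1)) * f (i+1))
      = ∑ i ∈ Finset.range N, (-1:ℚ)^(i+1) * (N.choose (i+1)) * f (i+1) := by
    refine Finset.sum_congr rfl fun i _ => by ring
  rw [h4]
  have : ∑ i ∈ Finset.range (N+1), -((-1:ℚ)^i * (N.choose i) * f (i+1))
      = -∑ i ∈ Finset.range (N+1), (-1:ℚ)^i * (N.choose i) * f (i+1) := by
    rw [← Finset.sum_neg_distrib]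
  rw [this]
  simp
  ring

lemma altS_sum {α : Type*} (s : Finset α) (N : ℕ) (c : α → ℚ) (g : α → ℕ → ℚ) :
    altS N (fun i => ∑ t ∈ s, c t * g t i) = ∑ t ∈ s, c t * altS N (g t) := by
  unfold altS
  simp_rw [Finset.mul_sum]
  rw [Finset.sum_comm]
  refine Finset.sum_congr rfl fun t _ => ?_
  refine Finset.sum_congr rfl fun i _ => by ring

lemma altS_pow (N : ℕ) : ∀ r ≤ N, altS N (fun i => (i:ℚ)^r)
    = if r = N then (-1:ℚ)^N * (Nat.factorial N : ℚ) else 0 := by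
  induction N with
  | zero =>
      intro r hr
      interval_cases r
      simp [altS]
  | succ N IH =>
      intro r hr
      rw [altS_succ]
      have hexp : altS N (fun i => ((i+1 : ℕ):ℚ)^r)
          = ∑ t ∈ Finset.range (r+1), (r.choose t : ℚ) * altS N (fun i => (i:ℚ)^t) := by
        rw [← altS_sum]
        congr 1
        funext i
        push_cast
        rw [add_pow]
        refine Finset.sum_congr rfl fun t _ => by push_cast; ring
      rw [hexp]
      by_cases hr' : r = N + 1
      · subst hr'
        rw [Finset.sum_range_succ, Nat.choose_self]
        have hsum : ∑ t ∈ Finset.range (N+1), ((N+1).choose t : ℚ) * altS N (fun i => (i:ℚ)^t)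
            = ((N+1).choose N : ℚ) * ((-1:ℚ)^N * (Nat.factorial N : ℚ)) := by
          rw [Finset.sum_eq_single N]
          · rw [IH N le_rfl, if_pos rfl]
          · intro t ht htN
            rw [IH t (by simp at ht; omega), if_neg htN, mul_zero]
          · intro h; exact absurd (Finset.self_mem_range_succ N) h
        rw [hsum]
        rw [if_pos rfl]
        simp [Nat.choose_succ_self_right, Nat.factorial_succ]
        push_cast
        ring
      · have hrN : r ≤ N := by omega
        rw [IH r hrN]
        have hsum : ∑ t ∈ Finset.range (r+1), (r.choose t : ℚ) * altS N (fun i => (i:ℚ)^t)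
            = if r = N then (-1:ℚ)^N * (Nat.factorial N : ℚ) else 0 := by
          by_cases hrn : r = N
          · subst hrn
            rw [Finset.sum_eq_single r]
            · rw [IH r le_rfl, if_pos rfl, Nat.choose_self]; ring
            · intro t ht htr
              rw [IH t (by simp at ht; omega), if_neg (by simp at ht; omega), mul_zero]
            · intro h; exact absurd (Finset.self_mem_range_succ r) h
          · rw [if_neg hrn]
            refine Finset.sum_eq_zero fun t ht => ?_
            rw [IH t (by simp at ht; omega), if_neg (by simp at ht; omega), mul_zero]
        rw [hsum, if_neg hr']
        exact sub_self _

lemma altS_poly (N : ℕ) (p : Polynomial ℚ) (hp : p.natDegree ≤ N) :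
    altS N (fun i => p.eval (i:ℚ)) = (-1:ℚ)^N * (Nat.factorial N : ℚ) * p.coeff N := by
  have h1 : (fun i : ℕ => p.eval (i:ℚ))
      = fun i : ℕ => ∑ r ∈ Finset.range (N+1), p.coeff r * (i:ℚ)^r := by
    funext i
    exact eval_eq_sum_range' (Nat.lt_succ_of_le hp) _
  rw [h1, altS_sum]
  rw [Finset.sum_eq_single N]
  · rw [altS_pow N N le_rfl, if_pos rfl]; ring
  · intro t ht htN
    rw [altS_pow N t (by simp at ht; omega), if_neg htN, mul_zero]
  · intro h; exact absurd (Finset.self_mem_range_succ N) h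

lemma innerAltSum (n m k j : ℕ) (hk : k ≤ n) (hj : 3 * j ≤ n - k) :
    ∑ i ∈ Finset.range (2*n+1), (-1:ℚ)^i * ((2*n).choose i : ℚ) *
      (((2*k+(m+i)).choose (m+i) : ℚ) * ((2*k+(m+i)+j).choose j : ℚ) *
        ((3*k+(m+i)+1).choose (n-k-3*j) : ℚ))
    = if k = n ∧ j = 0 then 1 else 0 := by
  set d := n - k - 3*j with hd
  set c : ℚ := ((Nat.factorial (2*k) : ℚ))⁻¹ * ((Nat.factorial j : ℚ))⁻¹ *
      ((Nat.factorial d : ℚ))⁻¹ with hc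
  set M : Polynomial ℚ := (descPochhammer ℚ (2*k)).comp (X + C ((2*k+m : ℕ) : ℚ)) *
      ((descPochhammer ℚ j).comp (X + C ((2*k+m+j : ℕ) : ℚ)) *
       (descPochhammer ℚ d).comp (X + C ((3*k+m+1 : ℕ) : ℚ))) with hMdef
  have hM1 : ((descPochhammer ℚ (2*k)).comp (X + C ((2*k+m : ℕ) : ℚ))).Monic :=
    (monic_descPochhammer ℚ _).comp_X_add_C _
  have hM2 : ((descPochhammer ℚ j).comp (X + C ((2*k+m+j : ℕ) : ℚ))).Monic :=
    (monic_descPochhammer ℚ _).comp_X_add_C _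
  have hM3 : ((descPochhammer ℚ d).comp (X + C ((3*k+m+1 : ℕ) : ℚ))).Monic :=
    (monic_descPochhammer ℚ _).comp_X_add_C _
  have hMmonic : M.Monic := hM1.mul (hM2.mul hM3)
  have hdc : ∀ (r : ℕ) (a : ℚ), ((descPochhammer ℚ r).comp (X + C a)).natDegree = r := by
    intro r a
    rw [natDegree_comp, descPochhammer_natDegree, natDegree_X_add_C, mul_one]
  have hMdeg : M.natDegree = 2*k + (j + d) := by
    rw [hMdef, hM1.natDegree_mul (hM2.mul hM3), hM2.natDegree_mul hM3, hdc, hdc, hdc]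
  set P : Polynomial ℚ := C c * M with hPdef
  have hPdeg : P.natDegree ≤ 2*n :=
    le_trans (natDegree_C_mul_le _ _) (by rw [hMdeg]; omega)
  have hPcoeff : P.coeff (2*n) = if k = n ∧ j = 0 then ((Nat.factorial (2*n) : ℚ))⁻¹ else 0 := by
    rw [hPdef, coeff_C_mul]
    by_cases hkj : k = n ∧ j = 0
    · obtain ⟨rfl, rfl⟩ := hkj
      have hd0 : d = 0 := by omega
      have h2n : 2*k = M.natDegree := by rw [hMdeg]; omega
      have hco : M.coeff (2*k) = 1 := by rw [h2n]; exact hMmonic.coeff_natDegree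
      rw [if_pos ⟨rfl, rfl⟩, hco, mul_one, hc, hd0]
      simp [Nat.factorial_zero]
    · rw [if_neg hkj, coeff_eq_zero_of_natDegree_lt, mul_zero]
      rw [hMdeg]; omega
  have f1 : (Nat.factorial (2*k) : ℚ) ≠ 0 := by exact_mod_cast Nat.factorial_ne_zero _
  have f2 : (Nat.factorial j : ℚ) ≠ 0 := by exact_mod_cast Nat.factorial_ne_zero _
  have f3 : (Nat.factorial d : ℚ) ≠ 0 := by exact_mod_cast Nat.factorial_ne_zero _
  have heval : ∀ i : ℕ, P.eval (i:ℚ)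
      = ((2*k+(m+i)).choose (m+i) : ℚ) * ((2*k+(m+i)+j).choose j : ℚ) *
        ((3*k+(m+i)+1).choose (n-k-3*j) : ℚ) := by
    intro i
    have e1 : (i:ℚ) + ((2*k+m : ℕ):ℚ) = (((i+(2*k+m)) : ℕ) : ℚ) := by push_cast; ring
    have e2 : (i:ℚ) + ((2*k+m+j : ℕ):ℚ) = (((i+(2*k+m+j)) : ℕ) : ℚ) := by push_cast; ring
    have e3 : (i:ℚ) + ((3*k+m+1 : ℕ):ℚ) = (((i+(3*k+m+1)) : ℕ) : ℚ) := by push_cast; ring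
    have hch1 : (i+(2*k+m)).choose (2*k) = (2*k+(m+i)).choose (m+i) := by
      rw [show i+(2*k+m) = 2*k+(m+i) by omega,
        ← Nat.choose_symm (show 2*k ≤ 2*k+(m+i) by omega),
        show 2*k+(m+i) - 2*k = m+i by omega]
    have hch2 : (i+(2*k+m+j)).choose j = (2*k+(m+i)+j).choose j := by
      rw [show i+(2*k+m+j) = 2*k+(m+i)+j by omega]
    have hch3 : (i+(3*k+m+1)).choose d = (3*k+(m+i)+1).choose (n-k-3*j) := by
      rw [show i+(3*k+m+1) = 3*k+(m+i)+1 by omega, hd]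
    rw [hPdef, hMdef]
    simp only [eval_mul, eval_C, eval_comp, eval_add, eval_X, e1, e2, e3,
      descPochhammer_eval_eq_descFactorial]
    rw [Nat.descFactorial_eq_factorial_mul_choose, Nat.descFactorial_eq_factorial_mul_choose,
      Nat.descFactorial_eq_factorial_mul_choose, hch1, hch2, hch3, hc]
    push_cast
    field_simp
  have hsum : ∑ i ∈ Finset.range (2*n+1), (-1:ℚ)^i * ((2*n).choose i : ℚ) *
      (((2*k+(m+i)).choose (m+i) : ℚ) * ((2*k+(m+i)+j).choose j : ℚ) *
        ((3*k+(m+i)+1).choose (n-k-3*j) : ℚ))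
      = altS (2*n) (fun i => P.eval (i:ℚ)) := by
    unfold altS
    exact Finset.sum_congr rfl fun i _ => by simp only [heval i]
  rw [hsum, altS_poly _ _ hPdeg, hPcoeff]
  have hneg : (-1:ℚ)^(2*n) = 1 := by
    rw [pow_mul]; norm_num
  rw [hneg, one_mul]
  by_cases hkj : k = n ∧ j = 0
  · rw [if_pos hkj, if_pos hkj, mul_inv_cancel₀ (by exact_mod_cast Nat.factorial_ne_zero _)]
  · rw [if_neg hkj, if_neg hkj, mul_zero]

/-- `Lud n i` is the number of G-Motzkin paths of length `n` with `i` ud-peaks,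
given by the closed form
`L^{ud}_{n,i} = ∑_{k=0}^{n-2i} ∑_{j=0}^{⌊(n-k-2i)/3⌋} (-1)^j C(2k+i, i) C(2k+i+j, j) C(3k+i+1, n-k-2i-3j) C_k`
(the outer sum being empty when `n < 2i`). -/
def gMotzkinLud (n i : ℕ) : ℤ :=
  if n < 2 * i then 0
  else
    ∑ k ∈ Finset.range (n - 2 * i + 1),
      ∑ j ∈ Finset.range ((n - k - 2 * i) / 3 + 1),
        (-1 : ℤ) ^ j * (2 * k + i).choose i * (2 * k + i + j).choose j *
          (3 * k + i + 1).choose (n - k - 2 * i - 3 * j) * catalan k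

/-- For all `n m`, `∑_{i=0}^{2n} (-1)^i C(2n, i) L^{ud}_{n+2m+2i, m+i} = C_n`. -/
theorem alternating_sum_gMotzkinLud (n m : ℕ) :
    ∑ i ∈ Finset.range (2 * n + 1),
      (-1 : ℤ) ^ i * (2 * n).choose i * gMotzkinLud (n + 2 * m + 2 * i) (m + i) =
      catalan n := by
  have h2n : ∀ i : ℕ, gMotzkinLud (n + 2*m + 2*i) (m + i)
      = ∑ k ∈ Finset.range (n+1), ∑ j ∈ Finset.range ((n-k)/3 + 1),
          (-1:ℤ)^j * ((2*k+(m+i)).choose (m+i)) * ((2*k+(m+i)+j).choose j) *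
            ((3*k+(m+i)+1).choose (n-k-3*j)) * catalan k := by
    intro i
    rw [gMotzkinLud, if_neg (by omega)]
    rw [show n + 2*m + 2*i - 2*(m+i) = n by omega]
    refine Finset.sum_congr rfl fun k hk => ?_
    have hkn : k ≤ n := by simp only [Finset.mem_range] at hk; omega
    rw [show n + 2*m + 2*i - k - 2*(m+i) = n - k by omega]
  have cast_eq : ((∑ i ∈ Finset.range (2*n+1),
        (-1:ℤ)^i * ((2*n).choose i) * gMotzkinLud (n+2*m+2*i) (m+i) : ℤ) : ℚ)
      = ∑ i ∈ Finset.range (2*n+1), (-1:ℚ)^i * ((2*n).choose i : ℚ) *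
          ∑ k ∈ Finset.range (n+1), ∑ j ∈ Finset.range ((n-k)/3 + 1),
            (-1:ℚ)^j * ((2*k+(m+i)).choose (m+i) : ℚ) * ((2*k+(m+i)+j).choose j : ℚ) *
              ((3*k+(m+i)+1).choose (n-k-3*j) : ℚ) * (catalan k : ℚ) := by
    push_cast [h2n]
    exact Finset.sum_congr rfl fun i _ => by ring
  have key : (∑ i ∈ Finset.range (2*n+1), (-1:ℚ)^i * ((2*n).choose i : ℚ) *
          ∑ k ∈ Finset.range (n+1), ∑ j ∈ Finset.range ((n-k)/3 + 1),
            (-1:ℚ)^j * ((2*k+(m+i)).choose (m+i) : ℚ) * ((2*k+(m+i)+j).choose j : ℚ) *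
              ((3*k+(m+i)+1).choose (n-k-3*j) : ℚ) * (catalan k : ℚ))
      = (catalan n : ℚ) := by
    calc ∑ i ∈ Finset.range (2*n+1), (-1:ℚ)^i * ((2*n).choose i : ℚ) *
          ∑ k ∈ Finset.range (n+1), ∑ j ∈ Finset.range ((n-k)/3 + 1),
            (-1:ℚ)^j * ((2*k+(m+i)).choose (m+i) : ℚ) * ((2*k+(m+i)+j).choose j : ℚ) *
              ((3*k+(m+i)+1).choose (n-k-3*j) : ℚ) * (catalan k : ℚ)
        = ∑ i ∈ Finset.range (2*n+1), ∑ k ∈ Finset.range (n+1),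
            ∑ j ∈ Finset.range ((n-k)/3 + 1),
              (-1:ℚ)^i * ((2*n).choose i : ℚ) *
                ((-1:ℚ)^j * ((2*k+(m+i)).choose (m+i) : ℚ) * ((2*k+(m+i)+j).choose j : ℚ) *
                  ((3*k+(m+i)+1).choose (n-k-3*j) : ℚ) * (catalan k : ℚ)) := by
          refine Finset.sum_congr rfl fun i _ => ?_
          rw [Finset.mul_sum]
          exact Finset.sum_congr rfl fun k _ => Finset.mul_sum _ _ _
      _ = ∑ k ∈ Finset.range (n+1), ∑ i ∈ Finset.range (2*n+1),
            ∑ j ∈ Finset.range ((n-k)/3 + 1),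
              (-1:ℚ)^i * ((2*n).choose i : ℚ) *
                ((-1:ℚ)^j * ((2*k+(m+i)).choose (m+i) : ℚ) * ((2*k+(m+i)+j).choose j : ℚ) *
                  ((3*k+(m+i)+1).choose (n-k-3*j) : ℚ) * (catalan k : ℚ)) := Finset.sum_comm
      _ = ∑ k ∈ Finset.range (n+1), ∑ j ∈ Finset.range ((n-k)/3 + 1),
            ∑ i ∈ Finset.range (2*n+1),
              (-1:ℚ)^i * ((2*n).choose i : ℚ) *
                ((-1:ℚ)^j * ((2*k+(m+i)).choose (m+i) : ℚ) * ((2*k+(m+i)+j).choose j : ℚ) *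
                  ((3*k+(m+i)+1).choose (n-k-3*j) : ℚ) * (catalan k : ℚ)) := by
          exact Finset.sum_congr rfl fun k _ => Finset.sum_comm
      _ = ∑ k ∈ Finset.range (n+1), ∑ j ∈ Finset.range ((n-k)/3 + 1),
            ((-1:ℚ)^j * (catalan k : ℚ)) *
              ∑ i ∈ Finset.range (2*n+1), (-1:ℚ)^i * ((2*n).choose i : ℚ) *
                (((2*k+(m+i)).choose (m+i) : ℚ) * ((2*k+(m+i)+j).choose j : ℚ) *
                  ((3*k+(m+i)+1).choose (n-k-3*j) : ℚ)) := by
          refine Finset.sum_congr rfl fun k _ => Finset.sum_congr rfl fun j _ => ?_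
          rw [Finset.mul_sum]
          exact Finset.sum_congr rfl fun i _ => by ring
      _ = ∑ k ∈ Finset.range (n+1), ∑ j ∈ Finset.range ((n-k)/3 + 1),
            ((-1:ℚ)^j * (catalan k : ℚ)) * (if k = n ∧ j = 0 then (1:ℚ) else 0) := by
          refine Finset.sum_congr rfl fun k hk => Finset.sum_congr rfl fun j hj => ?_
          simp only [Finset.mem_range] at hk hj
          rw [innerAltSum n m k j (by omega) (by omega)]
      _ = ∑ k ∈ Finset.range (n+1), (if k = n then (catalan n : ℚ) else 0) := by
          refine Finset.sum_congr rfl fun k hk => ?_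
          by_cases hkn : k = n
          · subst hkn
            rw [if_pos rfl]
            simp
          · rw [if_neg hkn]
            exact Finset.sum_eq_zero fun j _ => by
              rw [if_neg (by tauto), mul_zero]
      _ = (catalan n : ℚ) := by
          rw [Finset.sum_ite_eq' (Finset.range (n+1)) n (fun _ => (catalan n : ℚ)),
            if_pos (Finset.self_mem_range_succ n)]
  have : ((∑ i ∈ Finset.range (2*n+1),
        (-1:ℤ)^i * ((2*n).choose i) * gMotzkinLud (n+2*m+2*i) (m+i) : ℤ) : ℚ)
      = ((catalan n : ℤ) : ℚ) := by
    rw [cast_eq, key]; push_cast; ring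
  exact_mod_cast this
end

section
/- For every natural number n, ∑_{i=0}^{n} 2^i * L^{vu}_{n,i} = 2^n * C_n, where L^{vu}_{n,i} = (1/(n+1)) * ∑_{k=0}^{n-i} ∑_{j=0}^{k} C(n+1, k) * C(k+i-1, i) * C(k, j) * C(n+1-k, n-k-i-j) * 2^j is the number of G-Motzkin paths of length n with i vu-valleys, and C_n is the n-th Catalan number. -/
/-- `Lvu n i` is the number of G-Motzkin paths of length `n` with `i`
vu-valleys, given by the closed form
`L^{vu}_{n,i} = (1/(n+1)) ∑_{k=0}^{n-i} ∑_{j=0}^{k} C(n+1,k) C(k+i-1,i) C(k,j) C(n+1-k, n-k-i-j) 2^j`,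
where `C(k+i-1, i)` is `0` for `k = 0` and `i ≥ 1`, and the binomial
`C(n+1-k, n-k-i-j)` vanishes when `n-k-i-j < 0`. -/
def gMotzkinLvu (n i : ℕ) : ℚ :=
  (1 / (n + 1 : ℚ)) *
    ∑ k ∈ Finset.range (n - i + 1), ∑ j ∈ Finset.range (k + 1),
      ((n + 1).choose k : ℚ) * (k + i - 1).choose i * k.choose j *
        (if k + i + j ≤ n then ((n + 1 - k).choose (n - k - i - j) : ℚ) else 0) *
        2 ^ j

section GMAux

open PowerSeries Finset

/-- The power series `(1 - 2X)⁻¹ = ∑ 2^m X^m`. -/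
noncomputable def gmH : PowerSeries ℚ := PowerSeries.mk fun m => (2:ℚ)^m

lemma gmH_coeff (m : ℕ) : (coeff m) gmH = 2^m := coeff_mk m _

lemma gm_one_sub_mul : ((1 - 2*X) * gmH : PowerSeries ℚ) = 1 := by
  ext d
  rw [sub_mul, one_mul, map_sub, mul_assoc, (map_ofNat ((C (R := ℚ))) 2).symm,
    coeff_C_mul, show (X * gmH : PowerSeries ℚ) = X^1 * gmH by ring, coeff_X_pow_mul']
  cases d with
  | zero => simp [gmH_coeff]
  | succ d => simp [gmH_coeff, pow_succ]; ring

lemma gm_sum_choose (k m : ℕ) :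
    ∑ a ∈ range (m+1), ((a + k - 1).choose a : ℚ) = ((m + k).choose m : ℚ) := by
  induction m with
  | zero => simp
  | succ m ih =>
      rw [Finset.sum_range_succ, ih, show m + 1 + k - 1 = m + k by omega,
        show m + 1 + k = (m + k) + 1 by omega]
      rw [Nat.choose_succ_succ' (m+k) m]
      push_cast
      ring

lemma gmH_pow_coeff (k m : ℕ) : (coeff m) (gmH^k) = 2^m * ((m + k - 1).choose m : ℚ) := by
  induction k generalizing m with
  | zero =>
      cases m with
      | zero => simp
      | succ m => simp [Nat.choose_eq_zero_of_lt (by omega : m + 1 - 1 < m + 1)]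
  | succ k ih =>
      rw [pow_succ, coeff_mul, Finset.Nat.sum_antidiagonal_eq_sum_range_succ_mk]
      have : ∀ a ∈ range (m+1),
          (coeff a) (gmH^k) * (coeff (m-a)) gmH
            = 2^m * ((a + k - 1).choose a : ℚ) := by
        intro a ha
        rw [mem_range] at ha
        rw [ih, gmH_coeff, show (2:ℚ)^a * _ * 2^(m-a) = 2^a * 2^(m-a) * ((a+k-1).choose a) by ring,
          ← pow_add, Nat.add_sub_cancel' (by omega : a ≤ m)]
      rw [Finset.sum_congr rfl this, ← Finset.mul_sum, gm_sum_choose,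
        show m + (k+1) - 1 = m + k by omega]

lemma gm_coeff_one_add_CX_pow (c : ℚ) (k m : ℕ) :
    (coeff m) ((1 + (C (R := ℚ)) c * X)^k) = c^m * (k.choose m : ℚ) := by
  rw [add_comm, add_pow, map_sum]
  have h1 : ∀ j ∈ range (k+1),
      (coeff m) (((C (R := ℚ)) c * X)^j * (1:PowerSeries ℚ)^(k-j) * (k.choose j : PowerSeries ℚ))
        = if m = j then c^m * (k.choose j : ℚ) else 0 := by
    intro j hj
    rw [one_pow, mul_one, mul_pow, ← map_pow, ← map_natCast ((C (R := ℚ))) (k.choose j),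
      mul_right_comm, ← map_mul, coeff_C_mul, coeff_X_pow]
    split_ifs with h
    · subst h; ring
    · ring
  rw [Finset.sum_congr rfl h1, Finset.sum_ite_eq (range (k+1)) m
    (fun j => c^m * (k.choose j : ℚ))]
  split_ifs with h
  · rfl
  · rw [mem_range, not_lt] at h
    rw [Nat.choose_eq_zero_of_lt (by omega)]
    ring

lemma gm_coeff_two (k m : ℕ) :
    (coeff m) ((1 + 2*X : PowerSeries ℚ)^k) = 2^m * (k.choose m : ℚ) := by
  have := gm_coeff_one_add_CX_pow 2 k m
  rwa [map_ofNat ((C (R := ℚ))) 2] at this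

lemma gm_coeff_one (k m : ℕ) :
    (coeff m) ((1 + X : PowerSeries ℚ)^k) = (k.choose m : ℚ) := by
  have := gm_coeff_one_add_CX_pow 1 k m
  rwa [map_one, one_mul, one_pow, one_mul] at this

lemma gm_master (n : ℕ) :
    ∑ k ∈ range (n+2), (C (R := ℚ)) ((n+1).choose k : ℚ) *
        ((X*(1+2*X))^k * ((1+X)^(n+1-k) * gmH^k)) = gmH^(n+1) := by
  have hAB : (X*(1+2*X) : PowerSeries ℚ) + (1+X)*(1-2*X) = 1 := by ring
  have h1 : ∑ k ∈ range (n+2),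
      (X*(1+2*X) : PowerSeries ℚ)^k * ((1+X)*(1-2*X))^(n+1-k) * ((n+1).choose k : PowerSeries ℚ)
        = 1 := by
    rw [← add_pow, hAB, one_pow]
  have h2 := congrArg (· * gmH^(n+1)) h1
  simp only [Finset.sum_mul, one_mul] at h2
  rw [← h2]
  apply Finset.sum_congr rfl
  intro k hk
  rw [mem_range] at hk
  have hsplit : (gmH^(n+1) : PowerSeries ℚ) = gmH^(n+1-k) * gmH^k := by
    rw [← pow_add, Nat.sub_add_cancel (by omega)]
  rw [hsplit, map_natCast ((C (R := ℚ))) ((n+1).choose k)]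
  symm
  have : ((1+X)*(1-2*X) : PowerSeries ℚ)^(n+1-k) * (gmH^(n+1-k) * gmH^k)
      = ((1-2*X)*gmH : PowerSeries ℚ)^(n+1-k) * ((1+X)^(n+1-k) * gmH^k) := by
    rw [mul_pow, mul_pow]; ring
  calc (X*(1+2*X) : PowerSeries ℚ)^k * ((1+X)*(1-2*X))^(n+1-k) * ((n+1).choose k : PowerSeries ℚ)
        * (gmH^(n+1-k) * gmH^k)
      = ((n+1).choose k : PowerSeries ℚ) *
          ((X*(1+2*X))^k * (((1+X)*(1-2*X))^(n+1-k) * (gmH^(n+1-k) * gmH^k))) := by ring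
    _ = ((n+1).choose k : PowerSeries ℚ) *
          ((X*(1+2*X))^k * (((1-2*X)*gmH)^(n+1-k) * ((1+X)^(n+1-k) * gmH^k))) := by rw [this]
    _ = _ := by rw [gm_one_sub_mul, one_pow, one_mul]

lemma gm_key (n : ℕ) :
    ∑ k ∈ range (n+1), ((n+1).choose k : ℚ) *
      ∑ j ∈ range (n-k+1), (2^j * (k.choose j : ℚ)) *
        ∑ i ∈ range (n-k-j+1),
          ((n+1-k).choose (n-k-j-i) : ℚ) * (2^i * ((i+k-1).choose i : ℚ))
    = 2^n * ((2*n).choose n : ℚ) := by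
  have H := congrArg (coeff n) (gm_master n)
  rw [map_sum, Finset.sum_range_succ] at H
  have hlast : (coeff n) ((C (R := ℚ)) (((n+1).choose (n+1) : ℕ) : ℚ) *
      ((X*(1+2*X))^(n+1) * ((1+X)^(n+1-(n+1)) * gmH^(n+1)))) = 0 := by
    rw [coeff_C_mul, mul_pow, mul_assoc, coeff_X_pow_mul', if_neg (by omega)]
    ring
  rw [hlast, add_zero, gmH_pow_coeff] at H
  have hterm : ∀ k ∈ range (n+1),
      (coeff n) ((C (R := ℚ)) (((n+1).choose k : ℕ) : ℚ) *
        ((X*(1+2*X))^k * ((1+X)^(n+1-k) * gmH^k)))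
      = ((n+1).choose k : ℚ) *
          ∑ j ∈ range (n-k+1), (2^j * (k.choose j : ℚ)) *
            ∑ i ∈ range (n-k-j+1),
              ((n+1-k).choose (n-k-j-i) : ℚ) * (2^i * ((i+k-1).choose i : ℚ)) := by
    intro k hk
    rw [mem_range] at hk
    rw [coeff_C_mul, mul_pow, mul_assoc, coeff_X_pow_mul', if_pos (by omega : k ≤ n)]
    congr 1
    rw [coeff_mul, Finset.Nat.sum_antidiagonal_eq_sum_range_succ_mk]
    apply Finset.sum_congr rfl
    intro j hj
    rw [mem_range] at hj
    rw [gm_coeff_two]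
    congr 1
    rw [coeff_mul, Finset.Nat.sum_antidiagonal_eq_sum_range_succ_mk,
      ← Finset.sum_range_reflect]
    apply Finset.sum_congr rfl
    intro t ht
    rw [mem_range] at ht
    rw [gm_coeff_one, gmH_pow_coeff,
      show n - k - j + 1 - 1 - t = n - k - j - t by omega,
      show n - k - j - (n - k - j - t) = t by omega]
  rw [Finset.sum_congr rfl hterm] at H
  rw [H, show n + (n+1) - 1 = 2*n by omega]

lemma gm_bridge (n : ℕ) :
    ∑ i ∈ range (n+1), (2:ℚ)^i *
      ∑ k ∈ range (n-i+1), ∑ j ∈ range (k+1),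
        ((n+1).choose k : ℚ) * ((k+i-1).choose i : ℚ) * (k.choose j : ℚ) *
          (if k+i+j ≤ n then ((n+1-k).choose (n-k-i-j) : ℚ) else 0) * 2^j
    = 2^n * ((2*n).choose n : ℚ) := by
  set g : ℕ → ℕ → ℕ → ℚ := fun k j i =>
    ((n+1).choose k : ℚ) * ((k+i-1).choose i : ℚ) * (k.choose j : ℚ) *
      (if k+i+j ≤ n then ((n+1-k).choose (n-k-i-j) : ℚ) else 0) * 2^j * 2^i with hg
  have stepA : ∑ i ∈ range (n+1), (2:ℚ)^i *
      ∑ k ∈ range (n-i+1), ∑ j ∈ range (k+1),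
        ((n+1).choose k : ℚ) * ((k+i-1).choose i : ℚ) * (k.choose j : ℚ) *
          (if k+i+j ≤ n then ((n+1-k).choose (n-k-i-j) : ℚ) else 0) * 2^j
      = ∑ i ∈ range (n+1), ∑ k ∈ range (n+1), ∑ j ∈ range (n+1), g k j i := by
    apply Finset.sum_congr rfl
    intro i hi
    rw [mem_range] at hi
    have hk : ∑ k ∈ range (n-i+1), ∑ j ∈ range (k+1),
        ((n+1).choose k : ℚ) * ((k+i-1).choose i : ℚ) * (k.choose j : ℚ) *
          (if k+i+j ≤ n then ((n+1-k).choose (n-k-i-j) : ℚ) else 0) * 2^j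
        = ∑ k ∈ range (n+1), ∑ j ∈ range (n+1),
        ((n+1).choose k : ℚ) * ((k+i-1).choose i : ℚ) * (k.choose j : ℚ) *
          (if k+i+j ≤ n then ((n+1-k).choose (n-k-i-j) : ℚ) else 0) * 2^j := by
      rw [Finset.sum_subset (Finset.range_subset_range.2 (by omega) :
        range (n-i+1) ⊆ range (n+1))]
      · apply Finset.sum_congr rfl
        intro k hk'
        rw [mem_range] at hk'
        rw [Finset.sum_subset (Finset.range_subset_range.2 (by omega) :
          range (k+1) ⊆ range (n+1))]
        intro j hj hj'
        rw [mem_range] at hj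
        rw [mem_range, not_lt] at hj'
        rw [Nat.choose_eq_zero_of_lt (by omega : k < j)]
        push_cast
        ring
      · intro k hk1 hk2
        rw [mem_range] at hk1
        rw [mem_range, not_lt] at hk2
        apply Finset.sum_eq_zero
        intro j hj
        rw [if_neg (by omega)]
        ring
    rw [hk, Finset.mul_sum]
    apply Finset.sum_congr rfl
    intro k _
    rw [Finset.mul_sum]
    apply Finset.sum_congr rfl
    intro j _
    rw [hg]
    ring
  have stepB : ∑ i ∈ range (n+1), ∑ k ∈ range (n+1), ∑ j ∈ range (n+1), g k j i
      = ∑ k ∈ range (n+1), ∑ j ∈ range (n+1), ∑ i ∈ range (n+1), g k j i := by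
    rw [Finset.sum_comm]
    apply Finset.sum_congr rfl
    intro k _
    rw [Finset.sum_comm]
  have stepC : ∑ k ∈ range (n+1), ∑ j ∈ range (n+1), ∑ i ∈ range (n+1), g k j i
      = ∑ k ∈ range (n+1), ((n+1).choose k : ℚ) *
          ∑ j ∈ range (n-k+1), (2^j * (k.choose j : ℚ)) *
            ∑ i ∈ range (n-k-j+1),
              ((n+1-k).choose (n-k-j-i) : ℚ) * (2^i * ((i+k-1).choose i : ℚ)) := by
    apply Finset.sum_congr rfl
    intro k hk
    rw [mem_range] at hk
    rw [Finset.mul_sum]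
    rw [← Finset.sum_subset (Finset.range_subset_range.2 (by omega) :
        range (n-k+1) ⊆ range (n+1))]
    · apply Finset.sum_congr rfl
      intro j hj
      rw [mem_range] at hj
      rw [mul_comm (2^j * (k.choose j : ℚ)), Finset.sum_mul, Finset.mul_sum]
      rw [← Finset.sum_subset (Finset.range_subset_range.2 (by omega) :
          range (n-k-j+1) ⊆ range (n+1))]
      · apply Finset.sum_congr rfl
        intro i hi
        rw [mem_range] at hi
        rw [hg]
        simp only []
        rw [if_pos (by omega : k+i+j ≤ n), show n-k-i-j = n-k-j-i by omega]
        ring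
      · intro i hi1 hi2
        rw [mem_range] at hi1
        rw [mem_range, not_lt] at hi2
        rw [hg]
        simp only []
        rw [if_neg (by omega)]
        ring
    · intro j hj1 hj2
      rw [mem_range] at hj1
      rw [mem_range, not_lt] at hj2
      apply Finset.sum_eq_zero
      intro i hi
      rw [hg]
      simp only []
      rw [if_neg (by omega)]
      ring
  rw [stepA, stepB, stepC, gm_key]

end GMAux

/-- For every `n`, `∑_{i=0}^{n} 2^i * L^{vu}_{n,i} = 2^n * C_n`. -/
theorem two_pow_sum_gMotzkinLvu (n : ℕ) :
    ∑ i ∈ Finset.range (n + 1), (2 : ℚ) ^ i * gMotzkinLvu n i =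
      2 ^ n * catalan n := by
  have hb := gm_bridge n
  have hn1 : ((n : ℚ) + 1) ≠ 0 := by positivity
  have hcb : ((2*n).choose n : ℚ) = ((n : ℚ) + 1) * (catalan n : ℚ) := by
    have := succ_mul_catalan_eq_centralBinom n
    have h2 : (n + 1) * catalan n = (2*n).choose n := this
    exact_mod_cast h2.symm
  calc ∑ i ∈ Finset.range (n + 1), (2 : ℚ) ^ i * gMotzkinLvu n i
      = (1 / (n + 1 : ℚ)) * ∑ i ∈ Finset.range (n+1), (2:ℚ)^i *
          ∑ k ∈ Finset.range (n-i+1), ∑ j ∈ Finset.range (k+1),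
            ((n+1).choose k : ℚ) * ((k+i-1).choose i : ℚ) * (k.choose j : ℚ) *
              (if k+i+j ≤ n then ((n+1-k).choose (n-k-i-j) : ℚ) else 0) * 2^j := by
        rw [Finset.mul_sum]
        apply Finset.sum_congr rfl
        intro i _
        rw [gMotzkinLvu]
        ring
    _ = (1 / (n + 1 : ℚ)) * (2^n * ((2*n).choose n : ℚ)) := by rw [hb]
    _ = 2 ^ n * catalan n := by
        rw [hcb]
        field_simp
end

section
/- For every natural number n ≥ 1, ∑_{k=0}^{n} (-1)^{n-k} * C(n+k, n-k) * C_k = 0, and for n = 0 the sum equals 1, where C_k is the k-th Catalan number. -/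
open Finset Nat
open scoped Nat

lemma keyQ (n k : ℕ) (h : k < n) :
    ((k:ℚ)+1) * ((k:ℚ)+2) * (catalan (k+1) : ℚ) * (((n+k+1).choose (2*k+2) : ℕ) : ℚ) =
    (catalan k : ℚ) * (((n+k).choose (2*k) : ℕ) : ℚ) * ((n:ℚ)-k) * ((n:ℚ)+k+1) := by
  have c1 : ((k:ℚ)+2) * (catalan (k+1) : ℚ) = ((2*k+2).choose (k+1) : ℕ) := by
    have := succ_mul_catalan_eq_centralBinom (k+1)
    rw [Nat.centralBinom_eq_two_mul_choose] at this
    have h2 : (2*(k+1)) = 2*k+2 := by ring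
    rw [h2] at this
    exact_mod_cast this
  have c2 : ((k:ℚ)+1) * (catalan k : ℚ) = ((2*k).choose k : ℕ) := by
    have := succ_mul_catalan_eq_centralBinom k
    rw [Nat.centralBinom_eq_two_mul_choose] at this
    exact_mod_cast this
  have hcat1 : (catalan (k+1) : ℚ) = ((2*k+2).choose (k+1) : ℕ) / ((k:ℚ)+2) := by
    field_simp at c1 ⊢; linarith [c1]
  have hcat2 : (catalan k : ℚ) = ((2*k).choose k : ℕ) / ((k:ℚ)+1) := by
    field_simp at c2 ⊢; linarith [c2]
  rw [hcat1, hcat2]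
  rw [Nat.cast_choose ℚ (show k+1 ≤ 2*k+2 by omega),
      Nat.cast_choose ℚ (show 2*k+2 ≤ n+k+1 by omega),
      Nat.cast_choose ℚ (show k ≤ 2*k by omega),
      Nat.cast_choose ℚ (show 2*k ≤ n+k by omega)]
  have e1 : 2*k+2 - (k+1) = k+1 := by omega
  have e2 : n+k+1 - (2*k+2) = n-k-1 := by omega
  have e3 : 2*k - k = k := by omega
  have e4 : n+k - 2*k = n-k := by omega
  rw [e1, e2, e3, e4]
  have f1 : (n+k+1)! = (n+k+1) * (n+k)! := by
    rw [show n+k+1 = (n+k)+1 from rfl, Nat.factorial_succ]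
  have f2 : (n-k)! = (n-k) * (n-k-1)! := by
    conv_lhs => rw [show n-k = (n-k-1)+1 by omega, Nat.factorial_succ]
    congr 1
    omega
  have f3 : (k+1)! = (k+1) * k ! := Nat.factorial_succ k
  have f4 : (2*k+2)! = (2*k+2) * (2*k+1) * (2*k)! := by
    rw [show 2*k+2 = (2*k+1)+1 from rfl, Nat.factorial_succ, show 2*k+1 = (2*k)+1 from rfl, Nat.factorial_succ]
    ring
  rw [f1, f2, f3, f4]
  have hnk : ((n - k : ℕ) : ℚ) = (n:ℚ) - k := by
    rw [Nat.cast_sub h.le]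
  push_cast [hnk]
  have h1 : ((n+k)! : ℚ) ≠ 0 := by positivity
  have h2 : ((n-k-1)! : ℚ) ≠ 0 := by positivity
  have h3 : (k ! : ℚ) ≠ 0 := by positivity
  have h4 : ((2*k)! : ℚ) ≠ 0 := by positivity
  have h5 : (n:ℚ) - k ≠ 0 := by
    have : (k:ℚ) < n := by exact_mod_cast h
    linarith
  field_simp

/-- `∑_{k=0}^{n} (-1)^{n-k} C(n+k, n-k) C_k` equals `1` for `n = 0` and `0` for
`n ≥ 1`, where `C_k` is the `k`-th Catalan number. -/
theorem alternating_sum_choose_catalan (n : ℕ) :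
    ∑ k ∈ Finset.range (n + 1),
      (-1 : ℤ) ^ (n - k) * (n + k).choose (n - k) * catalan k =
      if n = 0 then 1 else 0 := by
  rcases Nat.eq_zero_or_pos n with h0 | hn
  · subst h0; simp
  · rw [if_neg hn.ne']
    set G : ℕ → ℤ := fun j => match j with
      | 0 => 0
      | j+1 => (-1)^(n-j) * catalan j * ((n+j).choose (2*j)) * ((n:ℤ)-j) * ((n:ℤ)+j+1)
      with hG
    have tele : ∀ k ∈ Finset.range (n+1),
        (n:ℤ) * ((n:ℤ)+1) * ((-1 : ℤ) ^ (n - k) * (n + k).choose (n - k) * catalan k)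
        = G (k+1) - G k := by
      intro k hk
      rw [Finset.mem_range] at hk
      match k with
      | 0 =>
        simp [hG, Nat.choose_self]
        ring
      | k+1 =>
        have hkn : k < n := by omega
        have hch : (n+k+1).choose (n-(k+1)) = (n+k+1).choose (2*k+2) := by
          rw [show n-(k+1) = (n+k+1) - (2*k+2) by omega,
              Nat.choose_symm (by omega)]
        have hs : n - k = (n - (k+1)) + 1 := by omega
        have key : ((k:ℤ)+1) * ((k:ℤ)+2) * (catalan (k+1) : ℤ) * (((n+k+1).choose (2*k+2) : ℕ) : ℤ) =
            (catalan k : ℤ) * (((n+k).choose (2*k) : ℕ) : ℤ) * ((n:ℤ)-k) * ((n:ℤ)+k+1) := by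
          exact_mod_cast keyQ n k hkn
        simp only [hG, hch, hs, show 2*(k+1)=2*k+2 by omega, show n+(k+1)=n+k+1 by omega]
        push_cast
        linear_combination ((-1:ℤ)^(n-(k+1))) * key
    have htot : (n:ℤ) * ((n:ℤ)+1) *
        (∑ k ∈ Finset.range (n + 1),
          (-1 : ℤ) ^ (n - k) * (n + k).choose (n - k) * catalan k) = 0 := by
      rw [Finset.mul_sum, Finset.sum_congr rfl tele, Finset.sum_range_sub G (n+1)]
      simp [hG]
    have hne : (n:ℤ) * ((n:ℤ)+1) ≠ 0 := by
      have : (0:ℤ) < n := by exact_mod_cast hn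
      positivity
    exact (mul_eq_zero.mp htot).resolve_left hne
end
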